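/- arXiv:math/0310496 — 7 statements merged into one kernel-verified Lean document; each statement's English description precedes it below -/
import Mathlib

section
/- For every positive natural number d divisible by 4 and every natural number n, there exist a real polynomial P of degree d and a nonzero entire function w : ℂ → ℂ satisfying w''(z) + P(z)·w(z) = 0 for all z ∈ ℂ, such that w has exactly n zeros, all of them real. -/
open Complex Polynomial

open Finset

theorem exists_bethe (m n : ℕ) :
    ∃ (a : Fin n → ℝ) (c : ℝ), Function.Injective a ∧
      ∀ j, (∑ k ∈ Finset.univ.erase j, (a j - a k)⁻¹) + ((a j) ^ m + c * a j) = 0 := by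
  rcases Nat.eq_zero_or_pos n with hn | hn
  · subst hn
    exact ⟨fun j => j.elim0, 0, Function.injective_of_subsingleton _, fun j => j.elim0⟩
  classical
  set g : (Fin n → ℝ) → ℝ := fun x => ∑ j, (x j) ^ 2 with hg
  set Sph : Set (Fin n → ℝ) := {x | g x = 1} with hSph
  set G : (Fin n → ℝ) → ℝ := fun x =>
    (∏ j, ∏ k ∈ Finset.univ.erase j, (x j - x k) ^ 2) *
      Real.exp ((4 / (m + 1 : ℝ)) * ∑ j, (x j) ^ (m + 1)) with hGdef
  set W : (Fin n → ℝ) → ℝ := fun x =>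
    (∑ j, ∑ k ∈ Finset.univ.erase j, Real.log ((x j - x k) ^ 2)) +
      (4 / (m + 1 : ℝ)) * ∑ j, (x j) ^ (m + 1) with hWdef
  -- compactness of the sphere
  have hgcont : Continuous g := by
    apply continuous_finset_sum
    exact fun j _ => (continuous_apply j).pow 2
  have hclosed : IsClosed Sph := isClosed_singleton.preimage hgcont
  have hsub : Sph ⊆ Metric.closedBall 0 1 := by
    intro x hx
    rw [Metric.mem_closedBall, dist_zero_right]
    rw [pi_norm_le_iff_of_nonneg (by norm_num : (0:ℝ) ≤ 1)]
    intro i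
    rw [Real.norm_eq_abs]
    have h1 : (x i) ^ 2 ≤ 1 := by
      have := Finset.single_le_sum (f := fun j => (x j) ^ 2)
        (fun j _ => sq_nonneg _) (Finset.mem_univ i)
      calc (x i)^2 ≤ g x := this
        _ = 1 := hx
    nlinarith [abs_nonneg (x i), _root_.sq_abs (x i)]
  have hcomp : IsCompact Sph :=
    (isCompact_closedBall (0 : Fin n → ℝ) 1).of_isClosed_subset hclosed hsub
  -- an injective point on the sphere
  have hr : (0:ℝ) < ∑ j : Fin n, ((j : ℝ) + 1) ^ 2 := by
    apply Finset.sum_pos (fun j _ => by positivity)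
    exact ⟨⟨0, hn⟩, Finset.mem_univ _⟩
  set r : ℝ := ∑ j : Fin n, ((j : ℝ) + 1) ^ 2 with hrdef
  set b : Fin n → ℝ := fun j => ((j : ℝ) + 1) / Real.sqrt r with hbdef
  have hbS : b ∈ Sph := by
    show g b = 1
    rw [hg]
    have : ∀ j : Fin n, (b j) ^ 2 = ((j : ℝ) + 1) ^ 2 / r := by
      intro j
      rw [hbdef]
      rw [div_pow, Real.sq_sqrt hr.le]
    simp only [this]
    rw [← Finset.sum_div, ← hrdef, div_self hr.ne']
  have hbinj : Function.Injective b := by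
    intro i j hij
    have hs : Real.sqrt r ≠ 0 := (Real.sqrt_pos.2 hr).ne'
    rw [hbdef] at hij
    field_simp at hij
    have h3 : ((i : ℕ) : ℝ) = ((j : ℕ) : ℝ) := by exact_mod_cast (add_right_cancel hij)
    exact Fin.ext (Nat.cast_injective h3)
  -- continuity of G
  have hGcont : Continuous G := by
    apply Continuous.mul
    · apply continuous_finset_prod
      intro j _
      apply continuous_finset_prod
      intro k _
      exact ((continuous_apply j).sub (continuous_apply k)).pow 2
    · apply Real.continuous_exp.comp
      exact continuous_const.mul (continuous_finset_sum _ fun j _ => (continuous_apply j).pow _)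
  -- maximize G on the sphere
  obtain ⟨p, hpS, hmax⟩ := hcomp.exists_isMaxOn ⟨b, hbS⟩ hGcont.continuousOn
  have hGb : 0 < G b := by
    apply mul_pos
    · apply Finset.prod_pos
      intro j _
      apply Finset.prod_pos
      intro k hk
      have : b j ≠ b k := fun h => (Finset.mem_erase.1 hk).1 ((hbinj h).symm)
      exact pow_two_pos_of_ne_zero (sub_ne_zero.2 this)
    · exact Real.exp_pos _
  have hGp : 0 < G p := lt_of_lt_of_le hGb (hmax hbS)
  have hpinj : Function.Injective p := by
    intro i j hij
    by_contra hne
    have hmem : j ∈ Finset.univ.erase i := Finset.mem_erase.2 ⟨fun h => hne h.symm, Finset.mem_univ _⟩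
    have hz : (∏ j', ∏ k ∈ Finset.univ.erase j', (p j' - p k) ^ 2) = 0 := by
      apply Finset.prod_eq_zero (Finset.mem_univ i)
      apply Finset.prod_eq_zero hmem
      rw [hij]
      ring
    rw [hGdef] at hGp
    simp only [hz, zero_mul] at hGp
    exact lt_irrefl _ hGp
  -- the open set of injective configurations
  set U : Set (Fin n → ℝ) := ⋂ (q : Fin n × Fin n) (_ : q.1 ≠ q.2), {x | x q.1 ≠ x q.2} with hUdef
  have hUopen : IsOpen U := by
    apply isOpen_iInter_of_finite
    intro q
    apply isOpen_iInter_of_finite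
    intro hq
    have : {x : Fin n → ℝ | x q.1 ≠ x q.2} = (fun x : Fin n → ℝ => x q.1 - x q.2) ⁻¹' {(0:ℝ)}ᶜ := by
      ext x; simp [sub_ne_zero]
    rw [this]
    exact (isOpen_compl_singleton).preimage ((continuous_apply q.1).sub (continuous_apply q.2))
  have hmemU : ∀ x : Fin n → ℝ, Function.Injective x → x ∈ U := by
    intro x hx
    simp only [hUdef, Set.mem_iInter, Set.mem_setOf_eq]
    intro q hq h
    exact hq (hx h)
  have hUinj : ∀ x : Fin n → ℝ, x ∈ U → ∀ j k : Fin n, j ≠ k → x j ≠ x k := by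
    intro x hx j k hjk
    simp only [hUdef, Set.mem_iInter, Set.mem_setOf_eq] at hx
    exact hx (j, k) hjk
  -- on U, G = exp W
  have hGW : ∀ x : Fin n → ℝ, x ∈ U → Real.exp (W x) = G x := by
    intro x hx
    rw [hWdef, hGdef, Real.exp_add, Real.exp_sum]
    congr 1
    apply Finset.prod_congr rfl
    intro j _
    rw [Real.exp_sum]
    apply Finset.prod_congr rfl
    intro k hk
    apply Real.exp_log
    have : x j ≠ x k := hUinj x hx j k (fun h => (Finset.mem_erase.1 hk).1 h.symm)
    exact pow_two_pos_of_ne_zero (sub_ne_zero.2 this)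
  -- local max of W on the sphere
  have hWlocal : IsLocalMaxOn W Sph p := by
    have hUnhds : U ∈ nhds p := hUopen.mem_nhds (hmemU p hpinj)
    have h1 : U ∈ nhdsWithin p Sph := mem_nhdsWithin_of_mem_nhds hUnhds
    filter_upwards [h1, self_mem_nhdsWithin] with x hxU hxS
    have h2 : Real.exp (W x) ≤ Real.exp (W p) := by
      rw [hGW x hxU, hGW p (hmemU p hpinj)]
      exact hmax hxS
    exact Real.exp_le_exp.1 h2
  -- derivatives
  have hm1 : ((m : ℝ) + 1) ≠ 0 := by positivity
  set pr : Fin n → ((Fin n → ℝ) →L[ℝ] ℝ) := fun j => ContinuousLinearMap.proj j with hprdef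
  have hprS : ∀ j, HasStrictFDerivAt (fun x : Fin n → ℝ => x j) (pr j) p := by
    intro j
    have h := (ContinuousLinearMap.proj j (R := ℝ) (φ := fun _ : Fin n => ℝ)).hasStrictFDerivAt (x := p)
    exact h
  have hg' : HasStrictFDerivAt g (∑ j, (2 * p j) • pr j) p := by
    have h : ∀ j ∈ Finset.univ, HasStrictFDerivAt (fun x : Fin n → ℝ => (x j) ^ 2)
        ((2 * p j) • pr j) p := by
      intro j _
      have h2 : HasStrictDerivAt (fun t : ℝ => t ^ 2) (2 * p j) (p j) := by
        simpa using hasStrictDerivAt_pow 2 (p j)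
      exact h2.comp_hasStrictFDerivAt p (hprS j)
    exact HasStrictFDerivAt.fun_sum h
  set D1 : (Fin n → ℝ) →L[ℝ] ℝ :=
    ∑ j, ∑ k ∈ Finset.univ.erase j, (2 / (p j - p k)) • (pr j - pr k) with hD1def
  set D2 : (Fin n → ℝ) →L[ℝ] ℝ := ∑ j, (4 * (p j) ^ m) • pr j with hD2def
  have hpart1 : HasStrictFDerivAt
      (fun x : Fin n → ℝ => ∑ j, ∑ k ∈ Finset.univ.erase j, Real.log ((x j - x k) ^ 2)) D1 p := by
    apply HasStrictFDerivAt.fun_sum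
    intro j _
    apply HasStrictFDerivAt.fun_sum
    intro k hk
    have hkj : k ≠ j := (Finset.mem_erase.1 hk).1
    have hne : p j - p k ≠ 0 := sub_ne_zero.2 (fun h => hkj (hpinj h.symm))
    have hinner : HasStrictFDerivAt (fun x : Fin n → ℝ => x j - x k) (pr j - pr k) p :=
      (hprS j).sub (hprS k)
    have houter : HasStrictDerivAt (fun t : ℝ => Real.log (t ^ 2)) (2 / (p j - p k)) (p j - p k) := by
      have h1 := hasStrictDerivAt_pow 2 (p j - p k)
      have h2 := Real.hasStrictDerivAt_log (pow_ne_zero 2 hne)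
      have h3 := HasStrictDerivAt.comp (h₂ := Real.log) (h := fun t : ℝ => t ^ 2)
        (p j - p k) h2 h1
      refine h3.congr_deriv ?_
      field_simp
      ring
    exact houter.comp_hasStrictFDerivAt p hinner
  have hpart2 : HasStrictFDerivAt
      (fun x : Fin n → ℝ => (4 / (m + 1 : ℝ)) * ∑ j, (x j) ^ (m + 1)) D2 p := by
    have hsum : HasStrictFDerivAt (fun x : Fin n → ℝ => ∑ j, (x j) ^ (m + 1))
        (∑ j, (((m : ℝ) + 1) * (p j) ^ m) • pr j) p := by
      apply HasStrictFDerivAt.fun_sum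
      intro j _
      have h2 : HasStrictDerivAt (fun t : ℝ => t ^ (m + 1)) (((m : ℝ) + 1) * (p j) ^ m) (p j) := by
        simpa using hasStrictDerivAt_pow (m + 1) (p j)
      exact h2.comp_hasStrictFDerivAt p (hprS j)
    have h := hsum.const_mul (4 / (m + 1 : ℝ))
    refine h.congr_fderiv ?_
    rw [Finset.smul_sum]
    apply Finset.sum_congr rfl
    intro j _
    rw [smul_smul]
    congr 1
    field_simp
  have hW' : HasStrictFDerivAt W (D1 + D2) p := hpart1.add hpart2
  -- Lagrange multipliers
  have hextr : IsLocalExtrOn W {x | g x = g p} p := by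
    have hset : {x : Fin n → ℝ | g x = g p} = Sph := by
      have hgp1 : g p = 1 := hpS
      rw [hSph, hgp1]
    rw [hset]
    exact Or.inr hWlocal
  obtain ⟨La, Lb, hne0, heq⟩ := hextr.exists_multipliers_of_hasStrictFDerivAt_1d hg' hW'
  -- evaluate the multiplier identity at basis vectors
  have hev : ∀ i, La * (2 * p i) +
      Lb * ((4 * ∑ k ∈ Finset.univ.erase i, (p i - p k)⁻¹) + 4 * (p i) ^ m) = 0 := by
    intro i
    have h := DFunLike.congr_fun heq (Pi.single i (1 : ℝ))
    simp only [ContinuousLinearMap.add_apply, ContinuousLinearMap.coe_smul',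
      Pi.smul_apply, ContinuousLinearMap.zero_apply, hD1def, hD2def,
      ContinuousLinearMap.sum_apply, ContinuousLinearMap.smul_apply,
      ContinuousLinearMap.sub_apply, hprdef, ContinuousLinearMap.proj_apply,
      Pi.single_apply, smul_eq_mul] at h
    -- compute the three sums
    have hS1 : (∑ j, 2 * p j * (if j = i then (1:ℝ) else 0)) = 2 * p i := by
      rw [Finset.sum_eq_single i]
      · simp
      · intro j _ hji; simp [hji]
      · simp
    have hS3 : (∑ j, 4 * p j ^ m * (if j = i then (1:ℝ) else 0)) = 4 * p i ^ m := by
      rw [Finset.sum_eq_single i]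
      · simp
      · intro j _ hji; simp [hji]
      · simp
    have hS2 : (∑ j, ∑ k ∈ Finset.univ.erase j,
        2 / (p j - p k) * ((if j = i then (1:ℝ) else 0) - if k = i then 1 else 0))
        = 4 * ∑ k ∈ Finset.univ.erase i, (p i - p k)⁻¹ := by
      have step1 : ∀ j, (∑ k ∈ Finset.univ.erase j,
          2 / (p j - p k) * ((if j = i then (1:ℝ) else 0) - if k = i then 1 else 0))
          = (if j = i then ∑ k ∈ Finset.univ.erase i, 2 / (p i - p k) else 2 / (p i - p j)) := by
        intro j
        rcases eq_or_ne j i with rfl | hji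
        · simp only [if_pos rfl]
          apply Finset.sum_congr rfl
          intro k hk
          have hki : k ≠ j := (Finset.mem_erase.1 hk).1
          simp [hki]
        · simp only [if_neg hji]
          rw [Finset.sum_eq_single i]
          · have hfl : p i - p j = -(p j - p i) := by ring
            rw [if_pos rfl, hfl, div_neg]
            ring
          · intro k _ hki; simp [hki]
          · intro hi
            exact absurd (Finset.mem_erase.2 ⟨fun h => hji h.symm, Finset.mem_univ i⟩) hi
      rw [Finset.sum_congr rfl (fun j _ => step1 j)]
      rw [← Finset.add_sum_erase Finset.univ _ (Finset.mem_univ i)]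
      rw [if_pos rfl]
      have h2 : (∑ j ∈ Finset.univ.erase i,
          (if j = i then ∑ k ∈ Finset.univ.erase i, 2 / (p i - p k) else 2 / (p i - p j)))
          = ∑ j ∈ Finset.univ.erase i, 2 / (p i - p j) := by
        apply Finset.sum_congr rfl
        intro j hj
        rw [if_neg (Finset.mem_erase.1 hj).1]
      rw [h2]
      rw [Finset.mul_sum]
      have h3 : ∀ k, (4:ℝ) * (p i - p k)⁻¹ = 2 / (p i - p k) + 2 / (p i - p k) := by
        intro k; rw [← add_div, div_eq_mul_inv]; ring
      rw [Finset.sum_congr rfl (fun k _ => h3 k), Finset.sum_add_distrib]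
    rw [hS1, hS2, hS3] at h
    linarith [h]
  -- extract the multiplier relation
  have hb0 : Lb ≠ 0 := by
    intro hLb
    have hLa : La ≠ 0 := by
      intro hLa
      apply hne0
      simp [hLa, hLb, Prod.ext_iff]
    have hzero : ∀ i, p i = 0 := by
      intro i
      have := hev i
      rw [hLb] at this
      simp at this
      rcases this with h | h
      · exact absurd h hLa
      · exact h
    have : g p = 0 := by
      rw [hg]
      apply Finset.sum_eq_zero
      intro j _
      rw [hzero j]
      ring
    have h1 : g p = 1 := hpS
    rw [this] at h1
    norm_num at h1
  refine ⟨p, La / (2 * Lb), hpinj, ?_⟩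
  intro i
  have hc : 2 * Lb * (La / (2 * Lb)) = La := by field_simp
  have h4 : (4:ℝ) * Lb ≠ 0 := by simp [hb0]
  have key : (4 * Lb) * ((∑ k ∈ Finset.univ.erase i, (p i - p k)⁻¹)
      + ((p i) ^ m + (La / (2 * Lb)) * p i)) = 0 := by
    linear_combination hev i + 2 * p i * hc
  rcases mul_eq_zero.1 key with h | h
  · exact absurd h h4
  · exact h


lemma derivative_finset_prod {ι : Type*} [DecidableEq ι] (t : Finset ι) (f : ι → Polynomial ℝ) :
    derivative (∏ k ∈ t, f k) = ∑ k ∈ t, (∏ l ∈ t.erase k, f l) * derivative (f k) := by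
  induction t using Finset.induction_on with
  | empty => simp
  | @insert a t h ih =>
    rw [Finset.prod_insert h, derivative_mul, ih, Finset.sum_insert h, Finset.erase_insert h,
      Finset.mul_sum]
    congr 1
    · ring
    · apply Finset.sum_congr rfl
      intro k hk
      have hka : k ≠ a := fun hkk => h (hkk ▸ hk)
      rw [Finset.erase_insert_of_ne hka.symm]
      rw [Finset.prod_insert (fun hmem => h (Finset.mem_of_mem_erase hmem))]
      ring

lemma bethe_dvd {n : ℕ} (a : Fin n → ℝ) (hinj : Function.Injective a) (s : Polynomial ℝ)
    (hs : ∀ j, s.eval (a j) = -(∑ k ∈ Finset.univ.erase j, (a j - a k)⁻¹)) :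
    (∏ j, (X - C (a j))) ∣
      (derivative (derivative (∏ j, (X - C (a j)))) + 2 * s * derivative (∏ j, (X - C (a j)))) := by
  classical
  set Q : Polynomial ℝ := ∏ j, (X - C (a j)) with hQdef
  apply Finset.prod_dvd_of_coprime
  · exact (Polynomial.pairwise_coprime_X_sub_C hinj).set_pairwise _
  · intro i _
    rw [Polynomial.dvd_iff_isRoot]
    unfold Polynomial.IsRoot
    -- split off the i-th factor
    set Qi : Polynomial ℝ := ∏ k ∈ Finset.univ.erase i, (X - C (a k)) with hQidef
    have hsplit : Q = (X - C (a i)) * Qi := by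
      rw [hQdef, hQidef]
      exact (Finset.mul_prod_erase _ _ (Finset.mem_univ i)).symm
    have hd1 : derivative Q = Qi + (X - C (a i)) * derivative Qi := by
      rw [hsplit, derivative_mul, derivative_X_sub_C, one_mul]
    have hd2 : derivative (derivative Q) =
        2 * derivative Qi + (X - C (a i)) * derivative (derivative Qi) := by
      rw [hd1, derivative_add, derivative_mul, derivative_X_sub_C, one_mul]
      ring
    have hev1 : (derivative Q).eval (a i) = Qi.eval (a i) := by
      rw [hd1]; simp
    have hev2 : (derivative (derivative Q)).eval (a i) = 2 * (derivative Qi).eval (a i) := by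
      rw [hd2]; simp
    have hQi : Qi.eval (a i) = ∏ k ∈ Finset.univ.erase i, (a i - a k) := by
      rw [hQidef, eval_prod]; simp
    have hQi' : (derivative Qi).eval (a i)
        = ∑ k ∈ Finset.univ.erase i, ∏ l ∈ (Finset.univ.erase i).erase k, (a i - a l) := by
      rw [hQidef, derivative_finset_prod]
      rw [eval_finset_sum]
      apply Finset.sum_congr rfl
      intro k _
      rw [derivative_X_sub_C, mul_one, eval_prod]
      simp
    have hsum : (∑ k ∈ Finset.univ.erase i, (a i - a k)⁻¹) * ∏ l ∈ Finset.univ.erase i, (a i - a l)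
        = ∑ k ∈ Finset.univ.erase i, ∏ l ∈ (Finset.univ.erase i).erase k, (a i - a l) := by
      rw [Finset.sum_mul]
      apply Finset.sum_congr rfl
      intro k hk
      have hki : k ≠ i := (Finset.mem_erase.1 hk).1
      have hne : a i - a k ≠ 0 := sub_ne_zero.2 fun h => hki (hinj h.symm)
      rw [← Finset.mul_prod_erase _ _ hk, inv_mul_cancel_left₀ hne]
    simp only [eval_add, eval_mul, eval_ofNat]
    rw [hev1, hev2, hQi, hQi', hs i]
    linear_combination -2 * hsum

lemma hasDerivAt_poly_exp (p A : Polynomial ℂ) (z : ℂ) :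
    HasDerivAt (fun z => p.eval z * Complex.exp (A.eval z))
      ((p.derivative.eval z + p.eval z * A.derivative.eval z) * Complex.exp (A.eval z)) z := by
  have h1 := p.hasDerivAt z
  have h2 : HasDerivAt (fun z => Complex.exp (A.eval z))
      (Complex.exp (A.eval z) * A.derivative.eval z) z := (A.hasDerivAt z).cexp
  have h3 := h1.mul h2
  refine h3.congr_deriv ?_
  ring

lemma deriv_poly_exp (p A : Polynomial ℂ) :
    (deriv fun z => p.eval z * Complex.exp (A.eval z))
      = fun z => (p.derivative + p * A.derivative).eval z * Complex.exp (A.eval z) := by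
  funext z
  rw [(hasDerivAt_poly_exp p A z).deriv]
  simp [eval_add, eval_mul]

/-- For every positive natural number `d` divisible by `4` and every natural number `n`,
there exist a real polynomial `P` of degree `d` and a nonzero entire function `w` satisfying
`w'' + P·w = 0` with exactly `n` zeros, all of them real. -/
theorem stmt_2 (d : ℕ) (hd : 0 < d) (hd4 : 4 ∣ d) (n : ℕ) :
    ∃ (P : Polynomial ℂ) (w : ℂ → ℂ),
      P.degree = (d : ℕ) ∧
      (∀ k, (P.coeff k).im = 0) ∧
      Differentiable ℂ w ∧
      w ≠ 0 ∧
      (∀ z : ℂ, iteratedDeriv 2 w z + P.eval z * w z = 0) ∧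
      {z : ℂ | w z = 0}.Finite ∧
      {z : ℂ | w z = 0}.ncard = n ∧
      (∀ z : ℂ, w z = 0 → z.im = 0) := by
  classical
  obtain ⟨e, rfl⟩ := hd4
  have he : 0 < e := by omega
  set m : ℕ := 2 * e with hmdef
  have hm2 : 2 ≤ m := by omega
  have hdm : 4 * e = 2 * m := by omega
  obtain ⟨a, c, hinj, hbethe⟩ := exists_bethe m n
  set s : Polynomial ℝ := X ^ m + C c * X with hsdef
  have hs : ∀ j, s.eval (a j) = -(∑ k ∈ Finset.univ.erase j, (a j - a k)⁻¹) := by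
    intro j
    have h := hbethe j
    simp only [hsdef, eval_add, eval_pow, eval_X, eval_mul, eval_C]
    linarith
  set Q : Polynomial ℝ := ∏ j, (X - C (a j)) with hQdef
  obtain ⟨L, hL⟩ := bethe_dvd a hinj s hs
  set Pr : Polynomial ℝ := -(s ^ 2 + (derivative s + L)) with hPrdef
  -- degree facts
  have hdegCX : (C c * X).degree < (X ^ m : Polynomial ℝ).degree := by
    rw [degree_X_pow]
    calc (C c * X).degree ≤ (C c).degree + X.degree := degree_mul_le _ _
      _ ≤ 0 + 1 := by
          apply add_le_add degree_C_le
          rw [degree_X]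
      _ = 1 := by rw [zero_add]
      _ < (m : WithBot ℕ) := by exact_mod_cast (by omega : 1 < m)
  have hsdeg : s.degree = (m : WithBot ℕ) := by
    rw [hsdef, degree_add_eq_left_of_degree_lt hdegCX, degree_X_pow]
  have hsmonic : s.Monic := (monic_X_pow m).add_of_left hdegCX
  have hsnat : s.natDegree = m := natDegree_eq_of_degree_eq_some hsdeg
  have hQmonic : Q.Monic := monic_prod_of_monic _ _ fun j _ => monic_X_sub_C (a j)
  have hQ'nat : (derivative Q).natDegree ≤ Q.natDegree :=
    (natDegree_derivative_le _).trans (Nat.sub_le _ _)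
  have hQ''nat : (derivative (derivative Q)).natDegree ≤ Q.natDegree :=
    ((natDegree_derivative_le _).trans (Nat.sub_le _ _)).trans hQ'nat
  have hLnat : L.natDegree ≤ m := by
    rcases eq_or_ne L 0 with rfl | hLne
    · simp
    · have h1 : (Q * L).natDegree = Q.natDegree + L.natDegree :=
        natDegree_mul hQmonic.ne_zero hLne
      have h2a : (derivative (derivative Q)).natDegree ≤ Q.natDegree + m :=
        hQ''nat.trans (Nat.le_add_right _ _)
      have h2b : (2 * s * derivative Q).natDegree ≤ Q.natDegree + m := by
        calc (2 * s * derivative Q).natDegree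
            ≤ (2 * s).natDegree + (derivative Q).natDegree := natDegree_mul_le
          _ ≤ ((2 : Polynomial ℝ).natDegree + s.natDegree) + Q.natDegree :=
              Nat.add_le_add natDegree_mul_le hQ'nat
          _ = Q.natDegree + m := by simp [hsnat]; omega
      have h3 : (derivative (derivative Q) + 2 * s * derivative Q).natDegree
          ≤ Q.natDegree + m := (natDegree_add_le _ _).trans (max_le h2a h2b)
      rw [hL, h1] at h3
      omega
  have hs2ne : s ^ 2 ≠ 0 := (hsmonic.pow 2).ne_zero
  have hs2deg : (s ^ 2).degree = ((2 * m : ℕ) : WithBot ℕ) := by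
    rw [degree_eq_natDegree hs2ne, natDegree_pow, hsnat]
  have hrest : (derivative s + L).degree < ((2 * m : ℕ) : WithBot ℕ) := by
    have ha : (derivative s).degree ≤ ((m : ℕ) : WithBot ℕ) := by
      apply degree_le_natDegree.trans
      exact_mod_cast Nat.cast_le.2 (((natDegree_derivative_le s).trans (Nat.sub_le _ _)).trans hsnat.le)
    have hb : L.degree ≤ ((m : ℕ) : WithBot ℕ) := degree_le_natDegree.trans (by exact_mod_cast hLnat)
    calc (derivative s + L).degree ≤ max (derivative s).degree L.degree := degree_add_le _ _
      _ ≤ ((m : ℕ) : WithBot ℕ) := max_le ha hb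
      _ < ((2 * m : ℕ) : WithBot ℕ) := by exact_mod_cast (by omega : m < 2 * m)
  have hPrdeg : Pr.degree = ((2 * m : ℕ) : WithBot ℕ) := by
    rw [hPrdef, degree_neg, degree_add_eq_left_of_degree_lt (by rw [hs2deg]; exact hrest), hs2deg]
  -- complex side
  set σ : Polynomial ℂ := s.map (algebraMap ℝ ℂ) with hσdef
  set Qc : Polynomial ℂ := Q.map (algebraMap ℝ ℂ) with hQcdef
  set Lc : Polynomial ℂ := L.map (algebraMap ℝ ℂ) with hLcdef
  set Pc : Polynomial ℂ := Pr.map (algebraMap ℝ ℂ) with hPcdef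
  have hPcdeg : Pc.degree = ((4 * e : ℕ) : WithBot ℕ) := by
    rw [hPcdef, degree_map_eq_of_injective (algebraMap ℝ ℂ).injective, hPrdeg]
    exact_mod_cast (by omega : 2 * m = 4 * e)
  have hPcoeff : ∀ k, (Pc.coeff k).im = 0 := by
    intro k
    rw [hPcdef, Polynomial.coeff_map]
    simp [Complex.ofReal_im]
  have hLc : derivative (derivative Qc) + 2 * σ * derivative Qc = Qc * Lc := by
    have h := congrArg (Polynomial.map (algebraMap ℝ ℂ)) hL
    simp only [Polynomial.map_add, Polynomial.map_mul, Polynomial.map_ofNat] at h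
    rw [hQcdef, hσdef, hLcdef]
    simp only [derivative_map]
    exact h
  have hPc : Pc = -(σ ^ 2 + (derivative σ + Lc)) := by
    rw [hPcdef, hPrdef]
    simp [Polynomial.map_neg, Polynomial.map_add, Polynomial.map_pow, derivative_map, hσdef]
    rfl
  set A : Polynomial ℂ := C (((m : ℂ) + 1))⁻¹ * X ^ (m + 1) + C ((c : ℂ) / 2) * X ^ 2 with hAdef
  have hm1c : ((m : ℂ) + 1) ≠ 0 := Nat.cast_add_one_ne_zero m
  have hA : derivative A = σ := by
    have hσ2 : σ = X ^ m + C ((c : ℝ) : ℂ) * X := by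
      rw [hσdef, hsdef]
      simp [Polynomial.map_add, Polynomial.map_pow, Polynomial.map_mul]
    rw [hσ2, hAdef, derivative_add, derivative_C_mul, derivative_C_mul,
      derivative_X_pow, derivative_X_pow]
    congr 1
    · rw [← mul_assoc, ← C_mul]
      have : (((m : ℂ) + 1))⁻¹ * ((m + 1 : ℕ) : ℂ) = 1 := by
        push_cast
        rw [inv_mul_cancel₀ hm1c]
      rw [this, C_1, one_mul, Nat.add_sub_cancel]
    · rw [← mul_assoc, ← C_mul]
      norm_num
  set w : ℂ → ℂ := fun z => Qc.eval z * Complex.exp (A.eval z) with hwdef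
  have hdiff : Differentiable ℂ w := fun z => (hasDerivAt_poly_exp Qc A z).differentiableAt
  have hderiv2 : ∀ z, iteratedDeriv 2 w z =
      (derivative (derivative Qc + Qc * σ) + (derivative Qc + Qc * σ) * σ).eval z
        * Complex.exp (A.eval z) := by
    intro z
    have e1 : iteratedDeriv 2 w = deriv (deriv w) := by
      rw [iteratedDeriv_succ, iteratedDeriv_one]
    have e2 : deriv w = fun z => (derivative Qc + Qc * σ).eval z * Complex.exp (A.eval z) := by
      rw [hwdef, deriv_poly_exp Qc A, hA]
    rw [e1, e2, deriv_poly_exp (derivative Qc + Qc * σ) A, hA]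
  have hode : ∀ z : ℂ, iteratedDeriv 2 w z + Pc.eval z * w z = 0 := by
    intro z
    have hkey : (derivative (derivative Qc + Qc * σ) + (derivative Qc + Qc * σ) * σ)
        + Pc * Qc = 0 := by
      rw [derivative_add, derivative_mul, hPc]
      linear_combination hLc
    rw [hderiv2 z, hwdef]
    calc (derivative (derivative Qc + Qc * σ) + (derivative Qc + Qc * σ) * σ).eval z
          * Complex.exp (A.eval z) + Pc.eval z * (Qc.eval z * Complex.exp (A.eval z))
        = ((derivative (derivative Qc + Qc * σ) + (derivative Qc + Qc * σ) * σ)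
            + Pc * Qc).eval z * Complex.exp (A.eval z) := by
          simp only [eval_add, eval_mul]; ring
      _ = 0 := by rw [hkey, eval_zero, zero_mul]
  -- zero set
  have hwzero : ∀ z : ℂ, w z = 0 ↔ ∃ j, z = ((a j : ℝ) : ℂ) := by
    intro z
    rw [hwdef]
    simp only [mul_eq_zero, Complex.exp_ne_zero, or_false]
    rw [hQcdef, hQdef, Polynomial.map_prod]
    simp only [Polynomial.map_sub, Polynomial.map_X, Polynomial.map_C, eval_prod,
      Finset.prod_eq_zero_iff, Finset.mem_univ, true_and, eval_sub, eval_X, eval_C, sub_eq_zero]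
    constructor
    · rintro ⟨j, hj⟩; exact ⟨j, by exact_mod_cast hj⟩
    · rintro ⟨j, hj⟩; exact ⟨j, by exact_mod_cast hj⟩
  have hZ : {z : ℂ | w z = 0} = Set.range (fun j : Fin n => ((a j : ℝ) : ℂ)) := by
    ext z
    simp only [Set.mem_setOf_eq, Set.mem_range, hwzero z]
    constructor
    · rintro ⟨j, hj⟩; exact ⟨j, hj.symm⟩
    · rintro ⟨j, hj⟩; exact ⟨j, hj.symm⟩
  have hfin : {z : ℂ | w z = 0}.Finite := by rw [hZ]; exact Set.finite_range _
  have hinjc : Function.Injective (fun j : Fin n => ((a j : ℝ) : ℂ)) := by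
    intro i j h
    exact hinj (Complex.ofReal_injective (by simpa using h))
  have hcard : {z : ℂ | w z = 0}.ncard = n := by
    rw [hZ]
    have himg : Set.range (fun j : Fin n => ((a j : ℝ) : ℂ))
        = ↑(Finset.univ.image (fun j : Fin n => ((a j : ℝ) : ℂ))) := by
      simp [Finset.coe_image]
    rw [himg, Set.ncard_coe_finset, Finset.card_image_of_injective _ hinjc,
      Finset.card_univ, Fintype.card_fin]
  have hreal : ∀ z : ℂ, w z = 0 → z.im = 0 := by
    intro z hz
    obtain ⟨j, rfl⟩ := (hwzero z).1 hz
    exact Complex.ofReal_im _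
  have hwne : w ≠ 0 := by
    obtain ⟨z, hz⟩ := (Set.Finite.infinite_compl hfin).nonempty
    intro h0
    exact hz (by show w z = 0; rw [h0]; rfl)
  exact ⟨Pc, w, hPcdeg, hPcoeff, hdiff, hwne, hode, hfin, hcard, hreal⟩
end

section
/- Let P be a real polynomial over ℂ whose degree d satisfies d ≡ 0 (mod 4), and let w be a nonzero entire function satisfying w''(z) + P(z)·w(z) = 0 for all z ∈ ℂ such that every zero of w is real. Then the set {x : ℝ | w(x) = 0} is either finite, or it is unbounded above and unbounded below as a subset of ℝ. -/
open Complex Polynomial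

open Set Filter Topology


lemma ode_uniq_right (q : ℝ → ℝ) (hq : Continuous q) (y y' : ℝ → ℝ)
    (hy : ∀ x, HasDerivAt y (y' x) x) (hy' : ∀ x, HasDerivAt y' (-(q x) * y x) x)
    (x0 : ℝ) (h0 : y x0 = 0) (h1 : y' x0 = 0) : ∀ b, x0 ≤ b → y b = 0 := by
  intro b hb
  set E : ℝ → ℝ := fun x => y x ^ 2 + y' x ^ 2 with hEdef
  have hE : ∀ x, HasDerivAt E (2 * (1 - q x) * (y x * y' x)) x := by
    intro x
    have h2 : HasDerivAt (fun x => y x ^ 2) (2 * y x * y' x) x := by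
      simpa using ((hy x).fun_pow 2)
    have h3 : HasDerivAt (fun x => y' x ^ 2) (2 * y' x * (-(q x) * y x)) x := by
      simpa using ((hy' x).fun_pow 2)
    have := h2.fun_add h3
    refine this.congr_deriv ?_
    ring
  obtain ⟨C, hC⟩ : ∃ C, ∀ x ∈ Icc x0 b, ‖2 * (1 - q x)‖ ≤ C :=
    (isCompact_Icc).exists_bound_of_continuousOn
      (Continuous.continuousOn (by continuity))
  have hEnn : ∀ x, 0 ≤ E x := fun x => by positivity
  have hC0 : 0 ≤ C := le_trans (norm_nonneg _) (hC x0 (left_mem_Icc.mpr hb))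
  have key : ∀ x ∈ Icc x0 b, |2 * (1 - q x) * (y x * y' x)| ≤ C * E x := by
    intro x hx
    have h3' := hC x hx
    rw [Real.norm_eq_abs] at h3'
    have h2' : |y x * y' x| ≤ E x := by
      have h4' : |y x * y' x| ≤ y x ^ 2 + y' x ^ 2 := by
        rw [_root_.abs_mul]
        nlinarith [_root_.sq_abs (y x), _root_.sq_abs (y' x), sq_nonneg (|y x| - |y' x|)]
      simpa [hEdef] using h4'
    rw [_root_.abs_mul]
    exact mul_le_mul h3' h2' (_root_.abs_nonneg _) hC0
  have hycont : Continuous y := continuous_iff_continuousAt.mpr fun x => (hy x).continuousAt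
  have hy'cont : Continuous y' := continuous_iff_continuousAt.mpr fun x => (hy' x).continuousAt
  set G : ℝ → ℝ := fun x => E x * Real.exp (-C * x) with hGdef
  have hG : ∀ x, HasDerivAt G
      ((2 * (1 - q x) * (y x * y' x) - C * E x) * Real.exp (-C * x)) x := by
    intro x
    have hexp : HasDerivAt (fun x : ℝ => Real.exp (-C * x)) (Real.exp (-C * x) * (-C)) x := by
      have : HasDerivAt (fun x : ℝ => -C * x) (-C) x := by
        simpa using (hasDerivAt_id x).const_mul (-C)
      exact this.exp
    have := (hE x).fun_mul hexp
    refine this.congr_deriv ?_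
    ring
  have hanti : AntitoneOn G (Icc x0 b) := by
    apply antitoneOn_of_deriv_nonpos (convex_Icc x0 b)
    · exact (Continuous.continuousOn (by continuity))
    · exact fun x _ => (hG x).differentiableAt.differentiableWithinAt
    · intro x hx
      rw [interior_Icc] at hx
      rw [(hG x).deriv]
      have hk := key x (Ioo_subset_Icc_self hx)
      have he := Real.exp_pos (-C * x)
      nlinarith [_root_.abs_nonneg (2 * (1 - q x) * (y x * y' x)),
        _root_.le_abs_self (2 * (1 - q x) * (y x * y' x))]
  have hGb : G b ≤ G x0 := hanti (left_mem_Icc.mpr hb) (right_mem_Icc.mpr hb) hb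
  have hGx0 : G x0 = 0 := by simp [hGdef, hEdef, h0, h1]
  rw [hGx0] at hGb
  have hGb' : (y b ^ 2 + y' b ^ 2) * Real.exp (-C * b) ≤ 0 := hGb
  have hEb : y b ^ 2 = 0 := by
    have := Real.exp_pos (-C * b)
    nlinarith [sq_nonneg (y b), sq_nonneg (y' b)]
  exact pow_eq_zero_iff (by norm_num) |>.mp hEb

lemma ode_uniq (q : ℝ → ℝ) (hq : Continuous q) (y y' : ℝ → ℝ)
    (hy : ∀ x, HasDerivAt y (y' x) x) (hy' : ∀ x, HasDerivAt y' (-(q x) * y x) x)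
    (x0 : ℝ) (h0 : y x0 = 0) (h1 : y' x0 = 0) : ∀ x, y x = 0 := by
  intro x
  rcases le_total x0 x with h | h
  · exact ode_uniq_right q hq y y' hy hy' x0 h0 h1 x h
  · have hin : ∀ t : ℝ, HasDerivAt (fun t : ℝ => 2 * x0 - t) (-1) t := by
      intro t
      simpa using (hasDerivAt_id t).const_sub (2 * x0)
    have hY : ∀ t, HasDerivAt (fun t => y (2 * x0 - t)) (-(y' (2 * x0 - t))) t := by
      intro t
      have := (hy (2 * x0 - t)).comp t (hin t)
      refine this.congr_deriv ?_; ring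
    have hY1 : ∀ t, HasDerivAt (fun t => -(y' (2 * x0 - t)))
        (-(q (2 * x0 - t)) * y (2 * x0 - t)) t := by
      intro t
      have := ((hy' (2 * x0 - t)).comp t (hin t)).neg
      refine this.congr_deriv ?_; ring
    have := ode_uniq_right (fun t => q (2 * x0 - t))
      (hq.comp (by continuity)) _ _ hY hY1 x0
      (by show y (2*x0-x0) = 0; rw [show 2*x0-x0 = x0 by ring]; exact h0)
      (by show -(y' (2*x0-x0)) = 0; rw [show 2*x0-x0 = x0 by ring, h1]; ring) (2 * x0 - x) (by linarith)
    show y x = 0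
    rw [show x = 2*x0 - (2*x0 - x) by ring]
    exact this

lemma sturm_pos (q : ℝ → ℝ) (y y' : ℝ → ℝ)
    (hy : ∀ x, HasDerivAt y (y' x) x) (hy' : ∀ x, HasDerivAt y' (-(q x) * y x) x)
    (ε : ℝ) (hε : 0 < ε) (a c : ℝ) (hc : c = a + Real.pi / Real.sqrt ε)
    (hq : ∀ t ∈ Icc a c, ε ≤ q t)
    (hpos : ∀ t ∈ Icc a c, 0 < y t) : False := by
  set r := Real.sqrt ε with hr
  have hr0 : 0 < r := Real.sqrt_pos.mpr hε
  have hr2 : r ^ 2 = ε := Real.sq_sqrt hε.le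
  have hac : a ≤ c := by
    rw [hc]
    have : 0 < Real.pi / r := div_pos Real.pi_pos hr0
    linarith
  have hca : r * (c - a) = Real.pi := by
    rw [hc]
    field_simp
    ring
  have hinner : ∀ t : ℝ, HasDerivAt (fun t : ℝ => r * (t - a)) r t := by
    intro t
    simpa using ((hasDerivAt_id t).sub_const a).const_mul r
  have hs : ∀ t, HasDerivAt (fun t => Real.sin (r * (t - a))) (Real.cos (r * (t - a)) * r) t :=
    fun t => (hinner t).sin
  have hf : ∀ t, HasDerivAt (fun t => Real.cos (r * (t - a)) * r)
      (-Real.sin (r * (t - a)) * r * r) t := by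
    intro t
    exact ((hinner t).cos).mul_const r
  set V : ℝ → ℝ := fun t => y t * (Real.cos (r * (t - a)) * r) -
    y' t * Real.sin (r * (t - a)) with hV
  have hVd : ∀ t, HasDerivAt V ((q t - ε) * (y t * Real.sin (r * (t - a)))) t := by
    intro t
    have h1 := (hy t).fun_mul (hf t)
    have h2 := (hy' t).fun_mul (hs t)
    have := h1.fun_sub h2
    refine this.congr_deriv ?_
    rw [← hr2]; ring
  have hmono : MonotoneOn V (Icc a c) := by
    apply monotoneOn_of_deriv_nonneg (convex_Icc a c)
    · exact continuous_iff_continuousAt.mpr (fun t => (hVd t).continuousAt) |>.continuousOn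
    · exact fun t _ => (hVd t).differentiableAt.differentiableWithinAt
    · intro t ht
      rw [interior_Icc] at ht
      rw [(hVd t).deriv]
      have ht' : t ∈ Icc a c := Ioo_subset_Icc_self ht
      have h1 : 0 ≤ q t - ε := by linarith [hq t ht']
      have h2 : 0 ≤ Real.sin (r * (t - a)) := by
        apply Real.sin_nonneg_of_nonneg_of_le_pi
        · have := ht'.1; nlinarith
        · have h3 : r * (t - a) ≤ r * (c - a) := by nlinarith [ht'.2]
          rw [hca] at h3; exact h3
      have := (hpos t ht').le
      positivity
  have hVa : V a = y a * r := by simp [hV]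
  have hVc : V c = -(y c * r) := by
    simp only [hV, hca, Real.cos_pi, Real.sin_pi]
    ring
  have := hmono (left_mem_Icc.mpr hac) (right_mem_Icc.mpr hac) hac
  rw [hVa, hVc] at this
  have h1 := hpos a (left_mem_Icc.mpr hac)
  have h2 := hpos c (right_mem_Icc.mpr hac)
  nlinarith

lemma sturm (q : ℝ → ℝ) (y y' : ℝ → ℝ)
    (hy : ∀ x, HasDerivAt y (y' x) x) (hy' : ∀ x, HasDerivAt y' (-(q x) * y x) x)
    (ε : ℝ) (hε : 0 < ε) (a b : ℝ) (hab : a + Real.pi / Real.sqrt ε ≤ b)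
    (hq : ∀ t ∈ Icc a b, ε ≤ q t) : ∃ t ∈ Icc a b, y t = 0 := by
  by_contra h
  push_neg at h
  set c := a + Real.pi / Real.sqrt ε with hc
  have hr0 : 0 < Real.sqrt ε := Real.sqrt_pos.mpr hε
  have hac : a ≤ c := by
    rw [hc]
    have : 0 < Real.pi / Real.sqrt ε := div_pos Real.pi_pos hr0
    linarith
  have hsub : Icc a c ⊆ Icc a b := Icc_subset_Icc le_rfl hab
  have hycont : Continuous y := continuous_iff_continuousAt.mpr fun x => (hy x).continuousAt
  have hsign : (∀ t ∈ Icc a c, 0 < y t) ∨ (∀ t ∈ Icc a c, y t < 0) := by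
    rcases (h a (hsub (left_mem_Icc.mpr hac))).lt_or_gt with ha | ha
    · right
      intro t ht
      by_contra hyt
      push_neg at hyt
      have hyt' : 0 < y t := (h t (hsub ht)).symm.lt_or_gt.resolve_right (by linarith) 
      have : (0:ℝ) ∈ Icc (y a) (y t) := ⟨ha.le, hyt'.le⟩
      obtain ⟨u, hu, hyu⟩ := intermediate_value_Icc ht.1 (hycont.continuousOn) this
      exact h u (hsub ⟨hu.1, le_trans hu.2 ht.2⟩) hyu
    · left
      intro t ht
      by_contra hyt
      push_neg at hyt
      have hyt' : y t < 0 := (h t (hsub ht)).lt_or_gt.resolve_right (by linarith)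
      have : (0:ℝ) ∈ Icc (y t) (y a) := ⟨hyt'.le, ha.le⟩
      obtain ⟨u, hu, hyu⟩ := intermediate_value_Icc' ht.1 (hycont.continuousOn) this
      exact h u (hsub ⟨hu.1, le_trans hu.2 ht.2⟩) hyu
  have hq' : ∀ t ∈ Icc a c, ε ≤ q t := fun t ht => hq t (hsub ht)
  rcases hsign with hpos | hneg
  · exact (sturm_pos q y y' hy hy' ε hε a c hc hq' hpos).elim
  · refine (sturm_pos q (fun t => -(y t)) (fun t => -(y' t))
      (fun t => (hy t).neg) (fun t => ?_) ε hε a c hc hq' (fun t ht => by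
        simpa using (hneg t ht))).elim
    have := (hy' t).fun_neg
    refine this.congr_deriv ?_; ring

lemma entire_eq_zero_of_frequently (w : ℂ → ℂ) (hw : Differentiable ℂ w) (z0 : ℂ)
    (h : ∃ᶠ z in 𝓝[≠] z0, w z = 0) : w = 0 := by
  have h1 : AnalyticOnNhd ℂ w Set.univ := Complex.analyticOnNhd_univ_iff_differentiable.mpr hw
  funext z
  exact h1.eqOn_zero_of_preconnected_of_frequently_eq_zero isPreconnected_univ
    (Set.mem_univ z0) h (Set.mem_univ z)

lemma entire_zero_of_real_freq (w : ℂ → ℂ) (hw : Differentiable ℂ w) (x0 : ℝ)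
    (h : ∃ᶠ x : ℝ in 𝓝[≠] x0, w ↑x = 0) : w = 0 := by
  have ht : Filter.Tendsto (fun x : ℝ => (x : ℂ)) (𝓝[≠] x0) (𝓝[≠] (x0 : ℂ)) := by
    apply tendsto_nhdsWithin_of_tendsto_nhds_of_eventually_within
    · exact Complex.continuous_ofReal.continuousAt.mono_left nhdsWithin_le_nhds
    · filter_upwards [self_mem_nhdsWithin] with x hx
      simpa [Complex.ofReal_inj] using hx
  exact entire_eq_zero_of_frequently w hw x0 (Filter.Tendsto.frequently (p := fun z : ℂ => w z = 0) ht h)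

lemma exists_lift (P : Polynomial ℂ) (hreal : ∀ n, (P.coeff n).im = 0) :
    ∃ Q : Polynomial ℝ, Q.map Complex.ofRealHom = P := by
  rw [← Polynomial.mem_lifts, Polynomial.lifts_iff_coeff_lifts]
  intro n
  exact ⟨(P.coeff n).re, Complex.ext (by simp) (by simp [hreal n])⟩

lemma tail_pos (Q : Polynomial ℝ) (heven : Q.natDegree % 2 = 0) (hl : 0 < Q.leadingCoeff) :
    ∃ ε : ℝ, 0 < ε ∧ ∃ M : ℝ, ∀ x : ℝ, M ≤ |x| → ε ≤ Q.eval x := by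
  by_cases hdeg : Q.natDegree = 0
  · obtain ⟨a, rfl⟩ := Polynomial.natDegree_eq_zero.mp hdeg
    rw [Polynomial.leadingCoeff_C] at hl
    exact ⟨a, hl, 0, fun x _ => by simp⟩
  · have hdeg' : 0 < Q.degree := Polynomial.natDegree_pos_iff_degree_pos.mp (Nat.pos_of_ne_zero hdeg)
    have h1 : Filter.Tendsto (fun x => Q.eval x) atTop atTop :=
      Q.tendsto_atTop_of_leadingCoeff_nonneg hdeg' hl.le
    set R := Q.comp (-Polynomial.X) with hR
    have hRdeg : R.natDegree = Q.natDegree := by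
      rw [hR, Polynomial.natDegree_comp]
      simp
    have hRlead : R.leadingCoeff = Q.leadingCoeff := by
      rw [hR, Polynomial.leadingCoeff_comp (by simp)]
      simp [Even.neg_one_pow (Nat.even_iff.mpr heven)]
    have hRdeg' : 0 < R.degree := by
      rw [← Polynomial.natDegree_pos_iff_degree_pos, hRdeg]
      exact Nat.pos_of_ne_zero hdeg
    have h2 : Filter.Tendsto (fun x => R.eval x) atTop atTop :=
      R.tendsto_atTop_of_leadingCoeff_nonneg hRdeg' (hRlead ▸ hl.le)
    obtain ⟨M1, hM1⟩ := Filter.eventually_atTop.mp (h1.eventually_ge_atTop 1)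
    obtain ⟨M2, hM2⟩ := Filter.eventually_atTop.mp (h2.eventually_ge_atTop 1)
    refine ⟨1, one_pos, max M1 M2, fun x hx => ?_⟩
    rcases le_total 0 x with hx0 | hx0
    · rw [_root_.abs_of_nonneg hx0] at hx
      exact hM1 x (le_trans (le_max_left _ _) hx)
    · rw [_root_.abs_of_nonpos hx0] at hx
      have := hM2 (-x) (le_trans (le_max_right _ _) hx)
      rw [hR, Polynomial.eval_comp] at this
      simpa using this

lemma tail_neg (Q : Polynomial ℝ) (heven : Q.natDegree % 2 = 0) (hl : Q.leadingCoeff ≤ 0) :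
    ∃ M : ℝ, ∀ x : ℝ, M ≤ |x| → Q.eval x ≤ 0 := by
  by_cases hdeg : Q.natDegree = 0
  · obtain ⟨a, rfl⟩ := Polynomial.natDegree_eq_zero.mp hdeg
    rw [Polynomial.leadingCoeff_C] at hl
    exact ⟨0, fun x _ => by simpa using hl⟩
  · have hdeg' : 0 < Q.degree := Polynomial.natDegree_pos_iff_degree_pos.mp (Nat.pos_of_ne_zero hdeg)
    have h1 : Filter.Tendsto (fun x => Q.eval x) atTop atBot :=
      Q.tendsto_atBot_of_leadingCoeff_nonpos hdeg' hl
    set R := Q.comp (-Polynomial.X) with hR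
    have hRlead : R.leadingCoeff = Q.leadingCoeff := by
      rw [hR, Polynomial.leadingCoeff_comp (by simp)]
      simp [Even.neg_one_pow (Nat.even_iff.mpr heven)]
    have hRdeg' : 0 < R.degree := by
      rw [← Polynomial.natDegree_pos_iff_degree_pos, hR, Polynomial.natDegree_comp]
      simpa using Nat.pos_of_ne_zero hdeg
    have h2 : Filter.Tendsto (fun x => R.eval x) atTop atBot :=
      R.tendsto_atBot_of_leadingCoeff_nonpos hRdeg' (hRlead ▸ hl)
    obtain ⟨M1, hM1⟩ := Filter.eventually_atTop.mp (h1.eventually_le_atBot 0)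
    obtain ⟨M2, hM2⟩ := Filter.eventually_atTop.mp (h2.eventually_le_atBot 0)
    refine ⟨max M1 M2, fun x hx => ?_⟩
    rcases le_total 0 x with hx0 | hx0
    · rw [_root_.abs_of_nonneg hx0] at hx
      exact hM1 x (le_trans (le_max_left _ _) hx)
    · rw [_root_.abs_of_nonpos hx0] at hx
      have := hM2 (-x) (le_trans (le_max_right _ _) hx)
      rw [hR, Polynomial.eval_comp] at this
      simpa using this

lemma convex_zero_interval (q g h g' h' : ℝ → ℝ)
    (hg : ∀ x, HasDerivAt g (g' x) x) (hh : ∀ x, HasDerivAt h (h' x) x)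
    (hg' : ∀ x, HasDerivAt g' (-(q x) * g x) x) (hh' : ∀ x, HasDerivAt h' (-(q x) * h x) x)
    (x1 x2 : ℝ) (h12 : x1 ≤ x2) (hq : ∀ t ∈ Icc x1 x2, q t ≤ 0)
    (hz1 : g x1 = 0 ∧ h x1 = 0) (hz2 : g x2 = 0 ∧ h x2 = 0) :
    ∀ t ∈ Icc x1 x2, g t = 0 ∧ h t = 0 := by
  set φ : ℝ → ℝ := fun t => g t ^ 2 + h t ^ 2 with hφ
  set φ' : ℝ → ℝ := fun t => 2 * g t * g' t + 2 * h t * h' t with hφ'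
  have hφd : ∀ t, HasDerivAt φ (φ' t) t := by
    intro t
    have := ((hg t).fun_pow 2).fun_add ((hh t).fun_pow 2)
    refine this.congr_deriv ?_
    simp only [hφ']
    ring
  have hφ'd : ∀ t, HasDerivAt φ'
      (2 * g' t ^ 2 + 2 * h' t ^ 2 - 2 * q t * (g t ^ 2 + h t ^ 2)) t := by
    intro t
    have h1 := ((hasDerivAt_const t (2:ℝ)).mul (hg t)).mul (hg' t)
    have h2 := ((hasDerivAt_const t (2:ℝ)).mul (hh t)).mul (hh' t)
    have := ((((hg t).const_mul 2).fun_mul (hg' t)).fun_add (((hh t).const_mul 2).fun_mul (hh' t)))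
    refine this.congr_deriv ?_
    ring
  have hconv : ConvexOn ℝ (Icc x1 x2) φ := by
    apply convexOn_of_hasDerivWithinAt2_nonneg (convex_Icc x1 x2)
      (f' := φ') (f'' := fun t => 2 * g' t ^ 2 + 2 * h' t ^ 2 - 2 * q t * (g t ^ 2 + h t ^ 2))
    · exact (continuous_iff_continuousAt.mpr fun t => (hφd t).continuousAt).continuousOn
    · exact fun t _ => (hφd t).hasDerivWithinAt
    · exact fun t _ => (hφ'd t).hasDerivWithinAt
    · intro t ht
      rw [interior_Icc] at ht
      have := hq t (Ioo_subset_Icc_self ht)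
      nlinarith [sq_nonneg (g t), sq_nonneg (h t), sq_nonneg (g' t), sq_nonneg (h' t)]
  intro t ht
  have hseg : t ∈ segment ℝ x1 x2 := by rwa [segment_eq_Icc h12]
  have := hconv.le_on_segment (left_mem_Icc.mpr h12) (right_mem_Icc.mpr h12) hseg
  have hφ1 : φ x1 = 0 := by simp [hφ, hz1.1, hz1.2]
  have hφ2 : φ x2 = 0 := by simp [hφ, hz2.1, hz2.2]
  rw [hφ1, hφ2] at this
  simp only [max_self] at this
  have hφt : g t ^ 2 + h t ^ 2 ≤ 0 := this
  constructor
  · have h1 : g t ^ 2 = 0 := by nlinarith [sq_nonneg (g t), sq_nonneg (h t)]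
    exact pow_eq_zero_iff (by norm_num) |>.mp h1
  · have h1 : h t ^ 2 = 0 := by nlinarith [sq_nonneg (g t), sq_nonneg (h t)]
    exact pow_eq_zero_iff (by norm_num) |>.mp h1

/-- If `P` is a real polynomial of degree `d ≡ 0 (mod 4)` and `w` is a nonzero entire
solution of `w'' + P·w = 0` all of whose zeros are real, then the set of (real) zeros of `w`
is either finite or unbounded both from above and from below. -/
theorem stmt_3 (P : Polynomial ℂ) (hP : P.natDegree % 4 = 0)
    (hreal : ∀ n, (P.coeff n).im = 0)
    (w : ℂ → ℂ) (hw : Differentiable ℂ w) (hw0 : w ≠ 0)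
    (hde : ∀ z : ℂ, iteratedDeriv 2 w z + P.eval z * w z = 0)
    (hzeros : ∀ z : ℂ, w z = 0 → z.im = 0) :
    {x : ℝ | w x = 0}.Finite ∨
      (¬ BddAbove {x : ℝ | w x = 0} ∧ ¬ BddBelow {x : ℝ | w x = 0}) := by
  by_cases hfin : {x : ℝ | w x = 0}.Finite
  · exact Or.inl hfin
  right
  have hinf : {x : ℝ | w ↑x = 0}.Infinite := hfin
  -- real polynomial lift
  obtain ⟨Q, hQ⟩ := exists_lift P hreal
  have heval : ∀ x : ℝ, P.eval ↑x = ((Q.eval x : ℝ) : ℂ) := by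
    intro x
    rw [← hQ]
    rw [show ((x : ℝ) : ℂ) = Complex.ofRealHom x from rfl, Polynomial.eval_map,
      Polynomial.eval₂_at_apply]
    rfl
  set q : ℝ → ℝ := fun x => Q.eval x with hqdef
  have hqcont : Continuous q := Q.continuous
  -- derivative setup
  have hwa : AnalyticOnNhd ℂ w Set.univ := Complex.analyticOnNhd_univ_iff_differentiable.mpr hw
  have hw' : Differentiable ℂ (deriv w) := fun z => (hwa.deriv z (Set.mem_univ z)).differentiableAt
  have hde' : ∀ z, deriv (deriv w) z = -(P.eval z) * w z := by
    intro z
    have h := hde z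
    rw [iteratedDeriv_succ, iteratedDeriv_one] at h
    linear_combination h
  have hf : ∀ x : ℝ, HasDerivAt (fun x : ℝ => w ↑x) (deriv w ↑x) x :=
    fun x => ((hw ↑x).hasDerivAt).comp_ofReal
  have hf1 : ∀ x : ℝ, HasDerivAt (fun x : ℝ => deriv w ↑x) (-(P.eval ↑x) * w ↑x) x := by
    intro x
    have h := (hw' ↑x).hasDerivAt
    rw [hde' ↑x] at h
    exact h.comp_ofReal
  -- real and imaginary parts
  set g : ℝ → ℝ := fun x => (w ↑x).re with hgdef
  set h : ℝ → ℝ := fun x => (w ↑x).im with hhdef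
  set g' : ℝ → ℝ := fun x => (deriv w ↑x).re with hg'def
  set h' : ℝ → ℝ := fun x => (deriv w ↑x).im with hh'def
  have hg : ∀ x, HasDerivAt g (g' x) x :=
    fun x => Complex.reCLM.hasFDerivAt.comp_hasDerivAt x (hf x)
  have hh : ∀ x, HasDerivAt h (h' x) x :=
    fun x => Complex.imCLM.hasFDerivAt.comp_hasDerivAt x (hf x)
  have hre : ∀ x : ℝ, (-(P.eval ↑x) * w ↑x).re = -(q x) * g x := by
    intro x
    rw [heval x]
    simp [Complex.mul_re, hgdef, hqdef]
  have him : ∀ x : ℝ, (-(P.eval ↑x) * w ↑x).im = -(q x) * h x := by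
    intro x
    rw [heval x]
    simp [Complex.mul_im, hhdef, hqdef]
  have hg' : ∀ x, HasDerivAt g' (-(q x) * g x) x := by
    intro x
    have := Complex.reCLM.hasFDerivAt.comp_hasDerivAt x (hf1 x)
    rwa [show Complex.reCLM (-(P.eval ↑x) * w ↑x) = -(q x) * g x from hre x] at this
  have hh' : ∀ x, HasDerivAt h' (-(q x) * h x) x := by
    intro x
    have := Complex.imCLM.hasFDerivAt.comp_hasDerivAt x (hf1 x)
    rwa [show Complex.imCLM (-(P.eval ↑x) * w ↑x) = -(q x) * h x from him x] at this
  -- frequent real zeros kill w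
  have hfreq : ∀ x0 : ℝ, (∃ᶠ x : ℝ in 𝓝[≠] x0, w ↑x = 0) → False :=
    fun x0 hfr => hw0 (entire_zero_of_real_freq w hw x0 hfr)
  -- zeros of w on an interval kill w
  have hint : ∀ x1 x2 : ℝ, x1 < x2 → (∀ t ∈ Icc x1 x2, w ↑t = 0) → False := by
    intro x1 x2 h12 hz
    apply hfreq x1
    have h1 : ∀ᶠ x in 𝓝[>] x1, x ∈ Ioc x1 x2 :=
      Ioc_mem_nhdsGT_of_mem ⟨le_refl x1, h12⟩
    have h2 : ∃ᶠ x : ℝ in 𝓝[>] x1, w ↑x = 0 :=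
      h1.frequently.mono (fun x hx => hz x ⟨hx.1.le, hx.2⟩)
    exact h2.filter_mono (nhdsWithin_mono x1 (fun y hy => ne_of_gt hy))
  -- S unbounded above or below
  have hub : ¬ BddAbove {x : ℝ | w ↑x = 0} ∨ ¬ BddBelow {x : ℝ | w ↑x = 0} := by
    by_contra hb
    push_neg at hb
    obtain ⟨hba, hbb⟩ := hb
    obtain ⟨a, ha⟩ := hbb
    obtain ⟨b, hbu⟩ := hba
    obtain ⟨x, -, hacc⟩ := hinf.exists_accPt_of_subset_isCompact (isCompact_Icc (a := a) (b := b))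
      (fun t ht => ⟨ha ht, hbu ht⟩)
    rw [accPt_iff_frequently] at hacc
    apply hfreq x
    rw [frequently_nhdsWithin_iff]
    exact hacc.mono (fun y hy => ⟨hy.2, hy.1⟩)
  -- a zero of w with nonvanishing derivative
  obtain ⟨x0, hx0⟩ := hinf.nonempty
  have hwx0 : w ↑x0 = 0 := hx0
  have hgx0 : g x0 = 0 := by simp [hgdef, hwx0]
  have hhx0 : h x0 = 0 := by simp [hhdef, hwx0]
  have hc : deriv w ↑x0 ≠ 0 := by
    intro h0
    have hg0 : ∀ x, g x = 0 := ode_uniq q hqcont g g' hg hg' x0 hgx0 (by simp [hg'def, h0])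
    have hh0 : ∀ x, h x = 0 := ode_uniq q hqcont h h' hh hh' x0 hhx0 (by simp [hh'def, h0])
    apply hfreq x0
    apply Filter.Frequently.of_forall
    intro x
    exact Complex.ext (hg0 x) (hh0 x)
  set c : ℂ := deriv w ↑x0 with hcdef
  have hcn : 0 < c.re ^ 2 + c.im ^ 2 := by
    have := Complex.normSq_pos.mpr hc
    rw [Complex.normSq_apply] at this
    nlinarith
  -- the imaginary part of conj c * w is identically zero
  set u : ℝ → ℝ := fun x => c.re * h x - c.im * g x with hudef
  set u' : ℝ → ℝ := fun x => c.re * h' x - c.im * g' x with hu'def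
  have hud : ∀ x, HasDerivAt u (u' x) x :=
    fun x => ((hh x).const_mul c.re).sub ((hg x).const_mul c.im)
  have hud' : ∀ x, HasDerivAt u' (-(q x) * u x) x := by
    intro x
    have := ((hh' x).const_mul c.re).fun_sub ((hg' x).const_mul c.im)
    refine this.congr_deriv ?_
    simp only [hudef]
    ring
  have hu0 : ∀ x, u x = 0 := by
    apply ode_uniq q hqcont u u' hud hud' x0
    · simp [hudef, hgx0, hhx0]
    · simp [hu'def, hg'def, hh'def, ← hcdef]
      ring
  -- the real solution y whose zeros are exactly those of w on ℝ
  set y : ℝ → ℝ := fun x => c.re * g x + c.im * h x with hydef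
  set y' : ℝ → ℝ := fun x => c.re * g' x + c.im * h' x with hy'def
  have hyd : ∀ x, HasDerivAt y (y' x) x :=
    fun x => ((hg x).const_mul c.re).add ((hh x).const_mul c.im)
  have hyd' : ∀ x, HasDerivAt y' (-(q x) * y x) x := by
    intro x
    have := ((hg' x).const_mul c.re).fun_add ((hh' x).const_mul c.im)
    refine this.congr_deriv ?_
    simp only [hydef]
    ring
  have hSy : ∀ x : ℝ, w ↑x = 0 ↔ y x = 0 := by
    intro x
    constructor
    · intro hx
      have h1 : g x = 0 := by simp [hgdef, hx]
      have h2 : h x = 0 := by simp [hhdef, hx]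
      simp [hydef, h1, h2]
    · intro hx
      have h1 := hu0 x
      have hgx : g x = 0 := by
        have : (c.re ^ 2 + c.im ^ 2) * g x = 0 := by
          simp only [hydef] at hx
          simp only [hudef] at h1
          linear_combination c.re * hx - c.im * h1
        have := mul_eq_zero.mp this
        rcases this with h | h
        · linarith
        · exact h
      have hhx : h x = 0 := by
        have : (c.re ^ 2 + c.im ^ 2) * h x = 0 := by
          simp only [hydef] at hx
          simp only [hudef] at h1
          linear_combination c.im * hx + c.re * h1
        rcases mul_eq_zero.mp this with h | h
        · linarith
        · exact h
      have h3 : (w ↑x).re = 0 := hgx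
      have h4 : (w ↑x).im = 0 := hhx
      exact Complex.ext h3 h4
  -- degree parity and leading coefficient
  have hQdeg : Q.natDegree = P.natDegree := by
    rw [← hQ, Polynomial.natDegree_map_eq_of_injective]
    exact Complex.ofReal_injective
  have heven : Q.natDegree % 2 = 0 := by omega
  rcases le_or_gt Q.leadingCoeff 0 with hl | hl
  · -- leading coefficient nonpositive: contradiction with infinitude
    exfalso
    obtain ⟨M, hM⟩ := tail_neg Q heven hl
    rcases hub with hub | hub
    · rw [not_bddAbove_iff] at hub
      obtain ⟨x1, hx1S, hx1⟩ := hub |M|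
      obtain ⟨x2, hx2S, hx2⟩ := hub x1
      have hq12 : ∀ t ∈ Icc x1 x2, q t ≤ 0 := by
        intro t ht
        apply hM
        have h1 : M ≤ |M| := _root_.le_abs_self M
        have h2 : x1 ≤ t := ht.1
        have h3 : (0:ℝ) ≤ t := by linarith [_root_.abs_nonneg M]
        rw [_root_.abs_of_nonneg h3]
        linarith
      have hz := convex_zero_interval q g h g' h' hg hh hg' hh' x1 x2 hx2.le hq12
        ⟨by simp [hgdef, show w ↑x1 = 0 from hx1S], by simp [hhdef, show w ↑x1 = 0 from hx1S]⟩
        ⟨by simp [hgdef, show w ↑x2 = 0 from hx2S], by simp [hhdef, show w ↑x2 = 0 from hx2S]⟩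
      exact hint x1 x2 hx2 (fun t ht => Complex.ext (hz t ht).1 (hz t ht).2)
    · rw [not_bddBelow_iff] at hub
      obtain ⟨x1, hx1S, hx1⟩ := hub (-|M|)
      obtain ⟨x2, hx2S, hx2⟩ := hub x1
      have hq12 : ∀ t ∈ Icc x2 x1, q t ≤ 0 := by
        intro t ht
        apply hM
        have h1 : M ≤ |M| := _root_.le_abs_self M
        have h2 : t ≤ x1 := ht.2
        have h3 : t ≤ 0 := by linarith [_root_.abs_nonneg M]
        rw [_root_.abs_of_nonpos h3]
        linarith
      have hz := convex_zero_interval q g h g' h' hg hh hg' hh' x2 x1 hx2.le hq12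
        ⟨by simp [hgdef, show w ↑x2 = 0 from hx2S], by simp [hhdef, show w ↑x2 = 0 from hx2S]⟩
        ⟨by simp [hgdef, show w ↑x1 = 0 from hx1S], by simp [hhdef, show w ↑x1 = 0 from hx1S]⟩
      exact hint x2 x1 hx2 (fun t ht => Complex.ext (hz t ht).1 (hz t ht).2)
  · -- leading coefficient positive: Sturm oscillation
    obtain ⟨ε, hε, M, hM⟩ := tail_pos Q heven hl
    have hr0 : 0 < Real.sqrt ε := Real.sqrt_pos.mpr hε
    set L : ℝ := Real.pi / Real.sqrt ε with hLdef
    have hL0 : 0 < L := div_pos Real.pi_pos hr0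
    constructor
    · rw [not_bddAbove_iff]
      intro B
      have hq' : ∀ t ∈ Icc (max B |M| + 1) (max B |M| + 1 + L), ε ≤ q t := by
        intro t ht
        apply hM
        have h1 : max B |M| + 1 ≤ t := ht.1
        have h2 : |M| ≤ max B |M| := le_max_right _ _
        have h3 : (0:ℝ) ≤ t := by linarith [_root_.abs_nonneg M]
        rw [_root_.abs_of_nonneg h3]
        linarith [_root_.le_abs_self M]
      obtain ⟨t, ht, hyt⟩ := sturm q y y' hyd hyd' ε hε (max B |M| + 1)
        (max B |M| + 1 + L) (le_refl _) hq'
      refine ⟨t, (hSy t).mpr hyt, ?_⟩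
      have := ht.1
      have h4 : B ≤ max B |M| := le_max_left _ _
      linarith
    · rw [not_bddBelow_iff]
      intro B
      have hq' : ∀ t ∈ Icc (min B (-|M|) - 1 - L) (min B (-|M|) - 1 - L + L), ε ≤ q t := by
        intro t ht
        apply hM
        have h1 : t ≤ min B (-|M|) - 1 := by linarith [ht.2]
        have h2 : min B (-|M|) ≤ -|M| := min_le_right _ _
        have h3 : t ≤ 0 := by linarith [_root_.abs_nonneg M]
        rw [_root_.abs_of_nonpos h3]
        linarith [_root_.le_abs_self M]
      obtain ⟨t, ht, hyt⟩ := sturm q y y' hyd hyd' ε hε (min B (-|M|) - 1 - L)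
        (min B (-|M|) - 1 - L + L) (le_refl _) hq'
      refine ⟨t, (hSy t).mpr hyt, ?_⟩
      have := ht.2
      have h4 : min B (-|M|) ≤ B := min_le_left _ _
      linarith
end

section
/- Let P be a real polynomial over ℂ whose degree d satisfies d ≡ 0 (mod 4), and let w be a nonzero entire function satisfying w''(z) + P(z)·w(z) = 0 for all z ∈ ℂ such that all but finitely many zeros of w are real (i.e. the set {z : ℂ | w(z) = 0 and Im(z) ≠ 0} is finite). Then the set of zeros of w is either finite, or the set {x : ℝ | w(x) = 0} is unbounded above and unbounded below as a subset of ℝ. -/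
open Complex Polynomial

section Aux
open Set Real Filter ComplexConjugate

lemma nonosc {y y' e : ℝ → ℝ} (hy : ∀ x, HasDerivAt y (y' x) x)
    (hy' : ∀ x, HasDerivAt y' (-(e x) * y x) x) {x1 x2 : ℝ}
    (he : ∀ x ∈ Icc x1 x2, e x ≤ 0) (h1 : y x1 = 0) (h2 : y x2 = 0) :
    ∀ x ∈ Icc x1 x2, y x = 0 := by
  rcases le_or_gt x2 x1 with h12 | h12
  · intro x hx
    have : x1 = x2 ∨ x = x1 := by
      rcases hx with ⟨ha, hb⟩
      right; linarith
    rcases this with h | h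
    · subst h; have := hx.1; have := hx.2; have : x = x1 := le_antisymm hx.2 hx.1; rwa [this]
    · rwa [h]
  have hh : ∀ x, HasDerivAt (fun x => y x * y' x) (y' x * y' x + (-(e x) * y x) * y x) x :=
    fun x => by simpa [mul_comm] using (hy x).fun_mul (hy' x)
  have hmono : MonotoneOn (fun x => y x * y' x) (Icc x1 x2) := by
    apply monotoneOn_of_hasDerivWithinAt_nonneg (convex_Icc x1 x2)
      (fun x _ => ((hy x).mul (hy' x)).continuousAt.continuousWithinAt)
      (f' := fun x => y' x * y' x + (-(e x) * y x) * y x)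
      (fun x hx => (hh x).hasDerivWithinAt)
    intro x hx
    rw [interior_Icc] at hx
    have hex := he x (Ioo_subset_Icc_self hx)
    nlinarith [mul_self_nonneg (y' x), mul_self_nonneg (y x)]
  have hzero : ∀ x ∈ Icc x1 x2, y x * y' x = 0 := by
    intro x hx
    have l1 := hmono (left_mem_Icc.2 h12.le) hx hx.1
    have l2 := hmono hx (right_mem_Icc.2 h12.le) hx.2
    simp only [h1, h2, zero_mul] at l1 l2
    linarith
  -- y^2 is constant on the interval
  have hk : ∀ x, HasDerivAt (fun x => y x * y x) (2 * (y x * y' x)) x :=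
    fun x => by
      have h := (hy x).mul (hy x)
      refine h.congr_deriv ?_
      ring
  intro x hx
  have hmono2 : MonotoneOn (fun x => y x * y x) (Icc x1 x2) := by
    apply monotoneOn_of_hasDerivWithinAt_nonneg (convex_Icc x1 x2)
      (fun x _ => (hk x).continuousAt.continuousWithinAt)
      (f' := fun x => 2 * (y x * y' x)) (fun x hx => (hk x).hasDerivWithinAt)
    intro u hu
    rw [interior_Icc] at hu
    rw [hzero u (Ioo_subset_Icc_self hu)]; norm_num
  have hanti2 : AntitoneOn (fun x => y x * y x) (Icc x1 x2) := by
    have : MonotoneOn (fun x => -(y x * y x)) (Icc x1 x2) := by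
      apply monotoneOn_of_hasDerivWithinAt_nonneg (convex_Icc x1 x2)
        (fun x _ => ((hk x).neg).continuousAt.continuousWithinAt)
        (f' := fun x => -(2 * (y x * y' x))) (fun x hx => ((hk x).neg).hasDerivWithinAt)
      intro u hu
      rw [interior_Icc] at hu
      rw [hzero u (Ioo_subset_Icc_self hu)]; norm_num
    intro a ha b hb hab
    have := this ha hb hab; simp only at this ⊢; linarith
  have l1 := hmono2 (left_mem_Icc.2 h12.le) hx hx.1
  have l2 := hanti2 (left_mem_Icc.2 h12.le) hx hx.1
  simp only [h1, mul_zero, zero_mul] at l1 l2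
  nlinarith

lemma osc_pos {y y' e : ℝ → ℝ} (hy : ∀ x, HasDerivAt y (y' x) x)
    (hy' : ∀ x, HasDerivAt y' (-(e x) * y x) x) {m a : ℝ} (hm : 0 < m)
    (he : ∀ x ∈ Icc a (a + π / Real.sqrt m), m ≤ e x)
    (hpos : ∀ x ∈ Icc a (a + π / Real.sqrt m), 0 < y x) : False := by
  set r := Real.sqrt m with hr
  have hr0 : 0 < r := Real.sqrt_pos.2 hm
  have hr2 : r * r = m := Real.mul_self_sqrt hm.le
  set b := a + π / r with hb
  have hpi : 0 < π / r := div_pos Real.pi_pos hr0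
  have hab : a < b := by simp only [hb]; linarith
  set s : ℝ → ℝ := fun x => Real.sin (r * (x - a)) with hs
  set c : ℝ → ℝ := fun x => Real.cos (r * (x - a)) * r with hc
  have hu : ∀ x : ℝ, HasDerivAt (fun x : ℝ => r * (x - a)) r x := by
    intro x
    simpa using ((hasDerivAt_id x).sub_const a).const_mul r
  have hsd : ∀ x, HasDerivAt s (c x) x :=
    fun x => (Real.hasDerivAt_sin _).comp x (hu x)
  have hsd' : ∀ x, HasDerivAt c (-(m * s x)) x := by
    intro x
    have h := ((Real.hasDerivAt_cos (r * (x - a))).comp x (hu x)).mul_const r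
    refine h.congr_deriv ?_
    simp only [hs]
    rw [← hr2]
    ring
  set W : ℝ → ℝ := fun x => y x * c x - y' x * s x with hW
  have hWd : ∀ x, HasDerivAt W ((e x - m) * (y x * s x)) x := by
    intro x
    have h := ((hy x).mul (hsd' x)).sub ((hy' x).mul (hsd x))
    refine h.congr_deriv ?_
    ring
  have hmono : MonotoneOn W (Icc a b) := by
    apply monotoneOn_of_hasDerivWithinAt_nonneg (convex_Icc a b)
      (fun x _ => (hWd x).continuousAt.continuousWithinAt)
      (f' := fun x => (e x - m) * (y x * s x)) (fun x hx => (hWd x).hasDerivWithinAt)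
    intro x hx
    rw [interior_Icc] at hx
    have hx' := Ioo_subset_Icc_self hx
    have h1 : 0 ≤ e x - m := by have := he x hx'; linarith
    have h2 : 0 < y x := hpos x hx'
    have h3 : 0 ≤ s x := by
      apply Real.sin_nonneg_of_nonneg_of_le_pi
      · have := hx.1; nlinarith
      · have hxb := hx.2
        have : r * (x - a) < r * (b - a) := by
          apply mul_lt_mul_of_pos_left _ hr0
          linarith
        have hba : r * (b - a) = π := by
          simp only [hb]
          field_simp
          ring
        nlinarith
    positivity
  have hWa : W a = r * y a := by
    simp only [hW, hs, hc]
    simp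
    ring
  have hWb : W b = -(r * y b) := by
    have hba : r * (b - a) = π := by simp only [hb]; field_simp; ring
    simp only [hW, hs, hc, hba]
    simp [Real.cos_pi, Real.sin_pi]
    ring
  have h1 := hmono (left_mem_Icc.2 hab.le) (right_mem_Icc.2 hab.le) hab.le
  have hya := hpos a (left_mem_Icc.2 hab.le)
  have hyb := hpos b (right_mem_Icc.2 hab.le)
  rw [hWa, hWb] at h1
  nlinarith

lemma osc {y y' e : ℝ → ℝ} (hy : ∀ x, HasDerivAt y (y' x) x)
    (hy' : ∀ x, HasDerivAt y' (-(e x) * y x) x) {m a : ℝ} (hm : 0 < m)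
    (he : ∀ x ∈ Icc a (a + π / Real.sqrt m), m ≤ e x) :
    ∃ x ∈ Icc a (a + π / Real.sqrt m), y x = 0 := by
  by_contra hno
  push_neg at hno
  have hab : a ≤ a + π / Real.sqrt m := by
    have : 0 < π / Real.sqrt m := div_pos Real.pi_pos (Real.sqrt_pos.2 hm)
    linarith
  have hcont : ContinuousOn y (Icc a (a + π / Real.sqrt m)) :=
    fun x _ => (hy x).continuousAt.continuousWithinAt
  -- y has constant sign on the interval
  rcases lt_or_gt_of_ne (hno a (left_mem_Icc.2 hab)) with hya | hya
  · -- y a < 0 : apply osc_pos to -y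
    apply osc_pos (y := fun x => -y x) (y' := fun x => -y' x) (e := e)
      (fun x => (hy x).neg) (fun x => by simpa [neg_mul, mul_neg] using (hy' x).fun_neg) hm he
    intro x hx
    rcases lt_trichotomy (y x) 0 with h | h | h
    · simpa using h
    · exact absurd h (hno x hx)
    · exfalso
      have hsub : Icc a x ⊆ Icc a (a + π / Real.sqrt m) := Icc_subset_Icc_right hx.2
      have := intermediate_value_Icc hx.1 (hcont.mono hsub)
      have h0 : (0:ℝ) ∈ Icc (y a) (y x) := ⟨hya.le, h.le⟩
      rcases this h0 with ⟨t, ht, hyt⟩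
      exact hno t (hsub ht) hyt
  · apply osc_pos hy hy' hm he
    intro x hx
    rcases lt_trichotomy (y x) 0 with h | h | h
    · exfalso
      have hsub : Icc a x ⊆ Icc a (a + π / Real.sqrt m) := Icc_subset_Icc_right hx.2
      have := intermediate_value_Icc' hx.1 (hcont.mono hsub)
      have h0 : (0:ℝ) ∈ Icc (y x) (y a) := ⟨h.le, hya.le⟩
      rcases this h0 with ⟨t, ht, hyt⟩
      exact hno t (hsub ht) hyt
    · exact absurd h (hno x hx)
    · exact h

lemma zeros_finite_on_compact {w : ℂ → ℂ} (hw : Differentiable ℂ w) (hw0 : w ≠ 0)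
    {K : Set ℂ} (hK : IsCompact K) : {z ∈ K | w z = 0}.Finite := by
  by_contra hinf
  rw [← Set.not_infinite, not_not] at hinf
  obtain ⟨z0, hz0K, hacc⟩ := hinf.exists_accPt_of_subset_isCompact hK (Set.sep_subset _ _)
  rw [accPt_iff_frequently] at hacc
  have hfreq : ∃ᶠ z in nhdsWithin z0 {z0}ᶜ, w z = 0 := by
    rw [frequently_nhdsWithin_iff]
    apply hacc.mono
    rintro z ⟨hne, -, hz⟩
    exact ⟨hz, hne⟩
  have := (analyticOnNhd_univ_iff_differentiable.mpr hw).eqOn_zero_of_preconnected_of_frequently_eq_zero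
    isPreconnected_univ (Set.mem_univ z0) hfreq
  exact hw0 (funext fun z => this (Set.mem_univ z))

lemma norm_conj'' (z : ℂ) : ‖conj z‖ = ‖z‖ := by simp

lemma conj_hasDerivAt {w : ℂ → ℂ} (hw : Differentiable ℂ w) (z : ℂ) :
    HasDerivAt (fun z => conj (w (conj z))) (conj (deriv w (conj z))) z := by
  have H := (hw (conj z)).hasDerivAt
  rw [hasDerivAt_iff_isLittleO] at H ⊢
  have hc : Filter.Tendsto (fun z' : ℂ => conj z') (nhds z) (nhds (conj z)) :=
    (continuous_conj.tendsto z)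
  have H2 := H.comp_tendsto hc
  rw [Asymptotics.isLittleO_iff] at H2 ⊢
  intro c hc'
  filter_upwards [H2 hc'] with x hx
  have e2 : ‖x - z‖ = ‖conj x - conj z‖ := by rw [← map_sub, norm_conj'']
  rw [show ((x:ℂ) - z) • (starRingEnd ℂ) (deriv w ((starRingEnd ℂ) z)) =
    (starRingEnd ℂ) (((starRingEnd ℂ) x - (starRingEnd ℂ) z) • deriv w ((starRingEnd ℂ) z)) by
      simp [smul_eq_mul], ← map_sub, ← map_sub, norm_conj'', e2]
  exact hx

lemma eval_conj {P : Polynomial ℂ} (hreal : ∀ n, (P.coeff n).im = 0) (z : ℂ) :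
    conj (P.eval z) = P.eval (conj z) := by
  have hmap : P.map (starRingEnd ℂ) = P := by
    ext n
    rw [Polynomial.coeff_map]
    exact Complex.conj_eq_iff_im.2 (hreal n)
  conv_rhs => rw [← hmap]
  rw [Polynomial.eval_map, ← Polynomial.eval₂_at_apply]

lemma exists_real_multiple {P : Polynomial ℂ} (hreal : ∀ n, (P.coeff n).im = 0)
    {w : ℂ → ℂ} (hw : Differentiable ℂ w) (hw0 : w ≠ 0)
    (hde : ∀ z, deriv (deriv w) z + P.eval z * w z = 0)
    {x0 : ℝ} (hx0 : w x0 = 0) {x2 : ℝ} (hx2 : w x2 ≠ 0) :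
    ∃ μ : ℂ, μ ≠ 0 ∧ ∀ x : ℝ, (μ * w x).im = 0 := by
  set w' := deriv w with hw'def
  have hwa : AnalyticOnNhd ℂ w Set.univ := analyticOnNhd_univ_iff_differentiable.mpr hw
  have hw' : Differentiable ℂ w' := analyticOnNhd_univ_iff_differentiable.mp hwa.deriv
  set g : ℂ → ℂ := fun z => conj (w (conj z)) with hgdef
  set g' : ℂ → ℂ := fun z => conj (w' (conj z)) with hg'def
  have hgd : ∀ z, HasDerivAt g (g' z) z := conj_hasDerivAt hw
  have hg'd : ∀ z, HasDerivAt g' (conj (deriv w' (conj z))) z := conj_hasDerivAt hw'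
  have hgde : ∀ z, conj (deriv w' (conj z)) = -(P.eval z * g z) := by
    intro z
    have h := hde (conj z)
    have : deriv w' (conj z) = -(P.eval (conj z) * w (conj z)) := by
      linear_combination h
    rw [this]
    simp only [map_neg, map_mul, hgdef]
    rw [← eval_conj hreal, Complex.conj_conj]
  -- Wronskian
  set Wr : ℂ → ℂ := fun z => w z * g' z - w' z * g z with hWr
  have hWrd : ∀ z, HasDerivAt Wr 0 z := by
    intro z
    have h1 : HasDerivAt w (w' z) z := (hw z).hasDerivAt
    have h2 : HasDerivAt w' (deriv w' z) z := (hw' z).hasDerivAt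
    have h := ((h1.mul (hg'd z))).sub ((h2.mul (hgd z)))
    have hww : deriv w' z = -(P.eval z * w z) := by linear_combination (hde z)
    rw [hgde z, hww] at h
    refine h.congr_deriv ?_
    ring
  have hWrconst : ∀ z, Wr z = Wr x0 := by
    intro z
    exact is_const_of_deriv_eq_zero (fun u => (hWrd u).differentiableAt)
      (fun u => (hWrd u).deriv) z x0
  have hgx0 : g (x0 : ℂ) = 0 := by
    simp only [hgdef, Complex.conj_ofReal, hx0, map_zero]
  have hWr0 : ∀ z, Wr z = 0 := by
    intro z
    rw [hWrconst z]
    simp [hWr, hx0, hgx0]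
  -- local constancy of g / w near a point where w ≠ 0
  obtain ⟨z1, hz1⟩ : ∃ z1 : ℂ, w z1 ≠ 0 := ⟨x2, hx2⟩
  obtain ⟨r, hr, hball⟩ : ∃ r > 0, ∀ z ∈ Metric.ball z1 r, w z ≠ 0 := by
    have := hw.continuous.continuousAt (x := z1)
    rcases Metric.continuousAt_iff.1 this (‖w z1‖) (norm_pos_iff.2 hz1) with ⟨δ, hδ, hd⟩
    exact ⟨δ, hδ, fun z hz hz0 => by
      have := hd (Metric.mem_ball.1 hz)
      rw [hz0] at this
      simp [dist_eq_norm] at this⟩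
  set q : ℂ → ℂ := fun z => g z / w z with hq
  set c : ℂ := g z1 / w z1 with hcdef
  have hqd : ∀ z ∈ Metric.ball z1 r, HasDerivAt q 0 z := by
    intro z hz
    have hwz := hball z hz
    have h := ((hgd z).div ((hw z).hasDerivAt) hwz)
    have : (g' z * w z - g z * w' z) / w z ^ 2 = 0 := by
      have := hWr0 z
      rw [hWr] at this
      rw [_root_.div_eq_zero_iff]
      left
      linear_combination this
    rwa [this] at h
  have hqconst : ∀ z ∈ Metric.ball z1 r, q z = c := by
    intro z hz
    have := (convex_ball z1 r).is_const_of_fderivWithin_eq_zero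
      (fun u hu => ((hqd u hu).differentiableAt).differentiableWithinAt)
      (fun u hu => ?_) hz (Metric.mem_ball_self hr)
    · exact this
    · rw [fderivWithin_of_isOpen Metric.isOpen_ball hu,
        (hqd u hu).hasFDerivAt.fderiv]
      ext v
      simp
  have heq : g =ᶠ[nhds z1] (fun z => c * w z) := by
    filter_upwards [Metric.ball_mem_nhds z1 hr] with z hz
    have hqz := hqconst z hz
    rw [hq] at hqz
    field_simp [hball z hz] at hqz
    simpa [mul_comm] using hqz
  have hga : AnalyticOnNhd ℂ g Set.univ :=
    analyticOnNhd_univ_iff_differentiable.mpr (fun z => (hgd z).differentiableAt)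
  have hcwa : AnalyticOnNhd ℂ (fun z => c * w z) Set.univ :=
    analyticOnNhd_univ_iff_differentiable.mpr ((hw.const_mul c))
  have hgcw : g = fun z => c * w z := hga.eq_of_eventuallyEq hcwa heq
  have hg2 : ∀ x : ℝ, conj (w x) = c * w x := by
    intro x
    have := congrFun hgcw (x : ℂ)
    simpa [hgdef, Complex.conj_ofReal] using this
  have habs : ‖c‖ = 1 := by
    have h := congrArg norm (hg2 x2)
    rw [Complex.norm_conj, norm_mul] at h
    have hx2' : ‖w ↑x2‖ ≠ 0 := by
      simpa using hx2
    field_simp at h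
    exact h.symm
  obtain ⟨μ, hμ2⟩ := IsAlgClosed.exists_pow_nat_eq c (n := 2) (by norm_num)
  have habsμ : ‖μ‖ = 1 := by
    have : ‖μ‖ ^ 2 = 1 := by
      rw [← norm_pow, hμ2, habs]
    nlinarith [norm_nonneg μ]
  have hμ0 : μ ≠ 0 := by
    intro h
    rw [h] at habsμ
    simp at habsμ
  have hcμ : conj μ * μ = 1 := by
    rw [mul_comm, Complex.mul_conj, Complex.normSq_eq_norm_sq, habsμ]
    norm_num
  refine ⟨μ, hμ0, fun x => ?_⟩
  rw [← Complex.conj_eq_iff_im]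
  calc conj (μ * w ↑x) = conj μ * (c * w ↑x) := by rw [map_mul, hg2]
  _ = (conj μ * μ) * (μ * w ↑x) := by rw [← hμ2]; ring
  _ = μ * w ↑x := by rw [hcμ, one_mul]

lemma exists_real_poly {P : Polynomial ℂ} (hreal : ∀ n, (P.coeff n).im = 0) :
    ∃ Q : Polynomial ℝ, P = Q.map (algebraMap ℝ ℂ) := by
  refine ⟨∑ n ∈ P.support, Polynomial.C (P.coeff n).re * Polynomial.X ^ n, ?_⟩
  rw [← Polynomial.coe_mapRingHom, map_sum]
  conv_lhs => rw [P.as_sum_support]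
  apply Finset.sum_congr rfl
  intro n _
  rw [Polynomial.coe_mapRingHom, Polynomial.map_mul, Polynomial.map_C, Polynomial.map_pow,
    Polynomial.map_X, ← Polynomial.C_mul_X_pow_eq_monomial]
  congr 1
  apply Polynomial.C_inj.2
  apply Complex.ext
  · simp
  · simp [hreal n]


end Aux
/-- If `P` is a real polynomial of degree `d ≡ 0 (mod 4)` and `w` is a nonzero entire
solution of `w'' + P·w = 0` with all but finitely many zeros real, then the set of zeros of
`w` is either finite or the set of real zeros is unbounded both above and below. -/
theorem stmt_5 (P : Polynomial ℂ) (hP : P.natDegree % 4 = 0)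
    (hreal : ∀ n, (P.coeff n).im = 0)
    (w : ℂ → ℂ) (hw : Differentiable ℂ w) (hw0 : w ≠ 0)
    (hde : ∀ z : ℂ, iteratedDeriv 2 w z + P.eval z * w z = 0)
    (hzeros : {z : ℂ | w z = 0 ∧ z.im ≠ 0}.Finite) :
    {z : ℂ | w z = 0}.Finite ∨
      (¬ BddAbove {x : ℝ | w x = 0} ∧ ¬ BddBelow {x : ℝ | w x = 0}) := by
  by_cases hfin : {z : ℂ | w z = 0}.Finite
  · exact Or.inl hfin
  right
  -- the set of real zeros is infinite
  have hRinf : {x : ℝ | w x = 0}.Infinite := by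
    by_contra hni
    rw [Set.not_infinite] at hni
    apply hfin
    apply Set.Finite.subset (hzeros.union (hni.image (f := fun x : ℝ => (x : ℂ))))
    intro z hz
    by_cases him : z.im = 0
    · right
      refine ⟨z.re, ?_, Complex.ext (by simp) (by simp [him])⟩
      show w ((z.re : ℝ) : ℂ) = 0
      rw [show ((z.re : ℝ) : ℂ) = z from Complex.ext (by simp) (by simp [him])]
      exact hz
    · exact Or.inl ⟨hz, him⟩
  -- a real zero
  obtain ⟨x0, hx0⟩ := hRinf.nonempty
  -- a real point where w is nonzero
  have hx2ex : ∃ x2 : ℝ, w x2 ≠ 0 := by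
    by_contra hall
    push_neg at hall
    have hKfin := zeros_finite_on_compact hw hw0
      (isCompact_Icc.image Complex.continuous_ofReal : IsCompact ((fun x : ℝ => (x:ℂ)) '' Set.Icc (0:ℝ) 1))
    have hsub : (fun x : ℝ => (x:ℂ)) '' Set.Icc (0:ℝ) 1 ⊆
        {z ∈ (fun x : ℝ => (x:ℂ)) '' Set.Icc (0:ℝ) 1 | w z = 0} := by
      rintro z ⟨x, hx, rfl⟩
      exact ⟨⟨x, hx, rfl⟩, hall x⟩
    have hinf : ((fun x : ℝ => (x:ℂ)) '' Set.Icc (0:ℝ) 1).Infinite :=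
      (Set.infinite_image_iff (Complex.ofReal_injective.injOn)).2 (Set.Icc_infinite zero_lt_one)
    exact hinf (hKfin.subset hsub)
  obtain ⟨x2, hx2⟩ := hx2ex
  have hde' : ∀ z, deriv (deriv w) z + P.eval z * w z = 0 := by
    intro z
    have h := hde z
    rwa [iteratedDeriv_succ, iteratedDeriv_one] at h
  obtain ⟨μ, hμ0, hμreal⟩ := exists_real_multiple hreal hw hw0 hde' hx0 hx2
  obtain ⟨Q, hQ⟩ := exists_real_poly hreal
  -- the real solution
  set h : ℂ → ℂ := fun z => μ * w z with hhdef
  have hhdiff : Differentiable ℂ h := hw.const_mul μ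
  have hh0 : ∀ z, (h z = 0 ↔ w z = 0) := by
    intro z; simp [hhdef, hμ0]
  set y : ℝ → ℝ := fun x => (h x).re with hydef
  have hhy : ∀ x : ℝ, h (x : ℂ) = ((y x : ℝ) : ℂ) := by
    intro x
    apply Complex.ext
    · simp [hydef]
    · simpa [hydef, hhdef] using hμreal x
  have hzeq : {x : ℝ | w x = 0} = {x : ℝ | y x = 0} := by
    ext x
    simp only [Set.mem_setOf_eq, ← hh0, hhy x, Complex.ofReal_eq_zero]
  set S := {x : ℝ | y x = 0} with hSdef
  have hSinf : S.Infinite := hzeq ▸ hRinf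
  -- derivatives of h
  set h1 : ℂ → ℂ := deriv h with hh1def
  have hh1 : h1 = fun z => μ * deriv w z := by
    funext z
    exact deriv_const_mul μ (hw z)
  have hh1diff : Differentiable ℂ h1 := by
    rw [hh1]
    exact ((analyticOnNhd_univ_iff_differentiable.mp
      ((analyticOnNhd_univ_iff_differentiable.mpr hw).deriv))).const_mul μ
  set h2 : ℂ → ℂ := deriv h1 with hh2def
  have hode : ∀ z, h2 z = -(P.eval z * h z) := by
    intro z
    have e1 : h2 z = μ * deriv (deriv w) z := by
      rw [hh2def, hh1]
      have := deriv_const_mul μ (analyticOnNhd_univ_iff_differentiable.mp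
        ((analyticOnNhd_univ_iff_differentiable.mpr hw).deriv) z)
      exact this
    rw [e1, hhdef]
    have := hde' z
    simp only
    linear_combination μ * this
  -- polynomial evaluation on ℝ
  set eQ : ℝ → ℝ := fun x => Q.eval x with heQ
  have hPeval : ∀ x : ℝ, P.eval (x : ℂ) = ((eQ x : ℝ) : ℂ) := by
    intro x
    rw [hQ, Polynomial.eval_map, show ((x:ℝ):ℂ) = algebraMap ℝ ℂ x from rfl,
      Polynomial.eval₂_at_apply]
    rfl
  -- real derivatives
  set y1 : ℝ → ℝ := fun x => (h1 x).re with hy1def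
  have hyd : ∀ x : ℝ, HasDerivAt y (y1 x) x := by
    intro x
    exact ((hhdiff (x:ℂ)).hasDerivAt).real_of_complex
  have hy1d : ∀ x : ℝ, HasDerivAt y1 (-(eQ x) * y x) x := by
    intro x
    have := ((hh1diff (x:ℂ)).hasDerivAt).real_of_complex
    have he : (h2 (x:ℂ)).re = -(eQ x) * y x := by
      rw [hode, hPeval, hhy]
      rw [show -(((eQ x : ℝ):ℂ) * ((y x : ℝ):ℂ)) = (((-(eQ x * y x) : ℝ)):ℂ) by push_cast; ring]
      rw [Complex.ofReal_re]
      ring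
    rwa [he] at this
  -- zeros of y in a compact interval are finite
  have hfinIcc : ∀ a b : ℝ, {x : ℝ | y x = 0 ∧ x ∈ Set.Icc a b}.Finite := by
    intro a b
    have hK := zeros_finite_on_compact hw hw0
      (isCompact_Icc.image Complex.continuous_ofReal : IsCompact ((fun x : ℝ => (x:ℂ)) '' Set.Icc a b))
    apply Set.Finite.of_finite_image (f := fun x : ℝ => (x:ℂ)) _ (Complex.ofReal_injective.injOn)
    apply hK.subset
    rintro z ⟨x, ⟨hyx, hxab⟩, rfl⟩
    refine ⟨⟨x, hxab, rfl⟩, ?_⟩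
    rw [← hh0, hhy]
    exact_mod_cast hyx
  have hSloc : ∀ a b : ℝ, a < b → ¬ (∀ x ∈ Set.Icc a b, y x = 0) := by
    intro a b hab hall
    apply Set.Icc_infinite hab
    apply (hfinIcc a b).subset
    intro x hx
    exact ⟨hall x hx, hx⟩
  -- Case A: eQ eventually nonpositive on both sides implies finitely many zeros
  have caseA : ∀ X : ℝ, (∀ x : ℝ, X ≤ |x| → eQ x ≤ 0) → False := by
    intro X hX
    set X' := max X 0 with hX'
    have htail : ∀ s t : ℝ, s ∈ S → t ∈ S → X' < s → X' < t → s < t → False := by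
      intro s t hs ht hXs hXt hst
      have hzero := nonosc hyd hy1d (x1 := s) (x2 := t)
        (fun u hu => hX u (by
          have h1 : X ≤ X' := le_max_left _ _
          have h0 : (0:ℝ) ≤ X' := le_max_right _ _
          have := hu.1
          rw [_root_.abs_of_nonneg (by linarith)]
          linarith)) hs ht
      exact hSloc s t hst hzero
    have htail' : ∀ s t : ℝ, s ∈ S → t ∈ S → s < -X' → t < -X' → s < t → False := by
      intro s t hs ht hXs hXt hst
      have hzero := nonosc hyd hy1d (x1 := s) (x2 := t)
        (fun u hu => hX u (by
          have h1 : X ≤ X' := le_max_left _ _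
          have h0 : (0:ℝ) ≤ X' := le_max_right _ _
          have := hu.2
          rw [_root_.abs_of_nonpos (by linarith)]
          linarith)) hs ht
      exact hSloc s t hst hzero
    -- S is finite : contradiction
    apply hSinf
    have hsub : S ⊆ {x : ℝ | y x = 0 ∧ x ∈ Set.Icc (-X') X'} ∪ (S ∩ Set.Ioi X') ∪ (S ∩ Set.Iio (-X')) := by
      intro x hx
      rcases le_or_gt x X' with h1 | h1
      · rcases le_or_gt (-X') x with h2 | h2
        · exact Or.inl (Or.inl ⟨hx, h2, h1⟩)
        · exact Or.inr ⟨hx, h2⟩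
      · exact Or.inl (Or.inr ⟨hx, h1⟩)
    apply Set.Finite.subset _ hsub
    apply Set.Finite.union
    apply Set.Finite.union
    · exact hfinIcc _ _
    · apply Set.Subsingleton.finite
      intro s hs t ht
      by_contra hne
      rcases lt_or_gt_of_ne hne with hlt | hgt
      · exact htail s t hs.1 ht.1 hs.2 ht.2 hlt
      · exact htail t s ht.1 hs.1 ht.2 hs.2 hgt
    · apply Set.Subsingleton.finite
      intro s hs t ht
      by_contra hne
      rcases lt_or_gt_of_ne hne with hlt | hgt
      · exact htail' s t hs.1 ht.1 hs.2 ht.2 hlt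
      · exact htail' t s ht.1 hs.1 ht.2 hs.2 hgt
  -- Case B: eQ eventually ≥ m > 0 on both sides implies zeros unbounded
  have caseB : ∀ X m : ℝ, 0 < m → (∀ x : ℝ, X ≤ |x| → m ≤ eQ x) →
      (¬ BddAbove S ∧ ¬ BddBelow S) := by
    intro X m hm hX
    have hL : 0 < Real.pi / Real.sqrt m := div_pos Real.pi_pos (Real.sqrt_pos.2 hm)
    constructor
    · rintro ⟨B, hB⟩
      set a := max X (max B 0) + 1 with ha
      have haX : X ≤ a := by
        have := le_max_left X (max B 0); linarith
      have haB : B < a := by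
        have := (le_max_left B 0).trans (le_max_right X (max B 0)); linarith
      have ha0 : 0 < a := by
        have := (le_max_right B 0).trans (le_max_right X (max B 0)); linarith
      obtain ⟨x, hx, hyx⟩ := osc hyd hy1d hm (a := a) (fun u hu => hX u (by
        rw [_root_.abs_of_nonneg (by linarith [hu.1])]
        linarith [hu.1]))
      have hxS : x ∈ S := hyx
      have := hB hxS
      have := hx.1
      linarith
    · rintro ⟨B, hB⟩
      set a := max X (max (-B) 0) + 1 with ha
      have haX : X ≤ a := by
        have := le_max_left X (max (-B) 0); linarith
      have haB : -B < a := by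
        have := (le_max_left (-B) 0).trans (le_max_right X (max (-B) 0)); linarith
      have ha0 : 0 < a := by
        have := (le_max_right (-B) 0).trans (le_max_right X (max (-B) 0)); linarith
      obtain ⟨x, hx, hyx⟩ := osc hyd hy1d hm (a := -a - Real.pi / Real.sqrt m) (fun u hu => hX u (by
        have hub : u ≤ -a := by have := hu.2; linarith
        rw [_root_.abs_of_nonpos (by linarith)]
        linarith))
      have hxS : x ∈ S := hyx
      have h1 := hB hxS
      have h2 : x ≤ -a := by have := hx.2; linarith
      linarith
  -- polynomial case analysis
  have hQdeg : Q.natDegree = P.natDegree := by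
    rw [hQ, Polynomial.natDegree_map_eq_of_injective (algebraMap ℝ ℂ).injective]
  have hdeven : Even Q.natDegree := by
    rw [hQdeg]
    rw [Nat.even_iff]
    omega
  rw [show {x : ℝ | w x = 0} = S from hzeq]
  rcases lt_trichotomy Q.leadingCoeff 0 with hlc | hlc | hlc
  · -- leading coefficient negative : finitely many zeros, contradiction
    exfalso
    rcases Nat.eq_zero_or_pos Q.natDegree with hd0 | hdpos
    · apply caseA 0
      intro x _
      rw [heQ]
      simp only
      rw [Polynomial.eq_C_of_natDegree_eq_zero hd0, Polynomial.eval_C]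
      rw [Polynomial.eq_C_of_natDegree_eq_zero hd0] at hlc
      simpa using hlc.le
    · have hdeg : 0 < Q.degree := Polynomial.natDegree_pos_iff_degree_pos.1 hdpos
      have htop := Q.tendsto_atBot_of_leadingCoeff_nonpos hdeg hlc.le
      obtain ⟨X1, hX1⟩ := Filter.eventually_atTop.1 (htop.eventually_le_atBot 0)
      set R := Q.comp (-Polynomial.X) with hR
      have hReval : ∀ x : ℝ, R.eval x = Q.eval (-x) := by
        intro x; rw [hR, Polynomial.eval_comp]; simp
      have hRdeg : R.natDegree = Q.natDegree := by
        rw [hR, Polynomial.natDegree_comp]; simp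
      have hRlc : R.leadingCoeff = Q.leadingCoeff := by
        rw [hR, Polynomial.leadingCoeff_comp (by simp)]
        simp [hdeven.neg_one_pow]
      have hRtop := R.tendsto_atBot_of_leadingCoeff_nonpos
        (Polynomial.natDegree_pos_iff_degree_pos.1 (by rw [hRdeg]; exact hdpos)) (by rw [hRlc]; exact hlc.le)
      obtain ⟨X2, hX2⟩ := Filter.eventually_atTop.1 (hRtop.eventually_le_atBot 0)
      apply caseA (max (max X1 X2) 0 + 1)
      intro x hx
      rcases le_abs.1 hx with hx1 | hx1
      · apply hX1
        have := (le_max_left X1 X2).trans (le_max_left (max X1 X2) 0)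
        linarith
      · have hx2' : X2 ≤ -x := by
          have := (le_max_right X1 X2).trans (le_max_left (max X1 X2) 0)
          linarith
        have := hX2 (-x) hx2'
        rw [hReval, neg_neg] at this
        exact this
  · -- zero polynomial
    exfalso
    apply caseA 0
    intro x _
    rw [heQ]
    simp only
    rw [Polynomial.leadingCoeff_eq_zero.1 hlc]
    simp
  · -- leading coefficient positive : oscillation
    rcases Nat.eq_zero_or_pos Q.natDegree with hd0 | hdpos
    · apply caseB 0 Q.leadingCoeff hlc
      intro x _
      rw [heQ]
      simp only
      conv_lhs => rw [show Q.leadingCoeff = Q.coeff 0 by rw [Polynomial.leadingCoeff, hd0]]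
      rw [Polynomial.eq_C_of_natDegree_eq_zero hd0, Polynomial.eval_C]
      simp
    · have hdeg : 0 < Q.degree := Polynomial.natDegree_pos_iff_degree_pos.1 hdpos
      have htop := Q.tendsto_atTop_of_leadingCoeff_nonneg hdeg hlc.le
      obtain ⟨X1, hX1⟩ := Filter.eventually_atTop.1 (htop.eventually_ge_atTop 1)
      set R := Q.comp (-Polynomial.X) with hR
      have hReval : ∀ x : ℝ, R.eval x = Q.eval (-x) := by
        intro x; rw [hR, Polynomial.eval_comp]; simp
      have hRtop := R.tendsto_atTop_of_leadingCoeff_nonneg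
        (Polynomial.natDegree_pos_iff_degree_pos.1 (by
          rw [hR, Polynomial.natDegree_comp]; simpa using hdpos))
        (by rw [hR, Polynomial.leadingCoeff_comp (by simp)]
            simpa [hdeven.neg_one_pow] using hlc.le)
      obtain ⟨X2, hX2⟩ := Filter.eventually_atTop.1 (hRtop.eventually_ge_atTop 1)
      apply caseB (max (max X1 X2) 0 + 1) 1 one_pos
      intro x hx
      rcases le_abs.1 hx with hx1 | hx1
      · apply hX1
        have := (le_max_left X1 X2).trans (le_max_left (max X1 X2) 0)
        linarith
      · have hx2' : X2 ≤ -x := by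
          have := (le_max_right X1 X2).trans (le_max_left (max X1 X2) 0)
          linarith
        have := hX2 (-x) hx2'
        rw [hReval, neg_neg] at this
        exact this
end

section
/- Let P be a polynomial over ℂ and let w be a nonzero entire function satisfying w''(z) + P(z)·w(z) = 0 for all z ∈ ℂ such that the set {x : ℝ | w(x) = 0} of real zeros of w is infinite. Then all coefficients of P are real, and w is proportional to a real function: there exists a nonzero constant c ∈ ℂ such that the function c·w satisfies conj((c·w)(conj z)) = (c·w)(z) for all z ∈ ℂ (equivalently, c·w takes real values on the real axis). -/
open Complex Polynomial

lemma aux_diff_deriv {f : ℂ → ℂ} (hf : Differentiable ℂ f) : Differentiable ℂ (deriv f) := by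
  rw [← differentiableOn_univ] at hf ⊢
  exact ((hf.analyticOnNhd isOpen_univ).deriv).differentiableOn

lemma aux_conj_deriv {f : ℂ → ℂ} {d z : ℂ} (hf : HasDerivAt f d ((starRingEnd ℂ) z)) :
    HasDerivAt (fun u => (starRingEnd ℂ) (f ((starRingEnd ℂ) u))) ((starRingEnd ℂ) d) z := by
  have h1 : HasFDerivAt f ((ContinuousLinearMap.smulRight (1 : ℂ →L[ℂ] ℂ) d).restrictScalars ℝ)
      ((starRingEnd ℂ) z) := hf.hasFDerivAt.restrictScalars ℝ
  have hc : ∀ u : ℂ, HasFDerivAt (fun v : ℂ => (starRingEnd ℂ) v)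
      (Complex.conjCLE.toContinuousLinearMap) u := fun u =>
    Complex.conjCLE.toContinuousLinearMap.hasFDerivAt
  have h2 := (hc (f ((starRingEnd ℂ) z))).comp z (h1.comp z (hc z))
  have h3 : HasFDerivAt (fun u => (starRingEnd ℂ) (f ((starRingEnd ℂ) u)))
      ((ContinuousLinearMap.smulRight (1 : ℂ →L[ℂ] ℂ) ((starRingEnd ℂ) d)).restrictScalars ℝ) z := by
    refine h2.congr_fderiv ?_
    apply ContinuousLinearMap.ext
    intro x
    simp [mul_comm]
  exact (hasFDerivAt_of_restrictScalars ℝ (f' := ContinuousLinearMap.smulRight (1 : ℂ →L[ℂ] ℂ)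
    ((starRingEnd ℂ) d)) h3 rfl).hasDerivAt.congr_deriv (by simp)

lemma aux_zero_of_acc (w : ℂ → ℂ) (hw : Differentiable ℂ w) (T : Set ℝ) (hT : T.Infinite)
    (R : ℝ) (hb : ∀ x ∈ T, |x| ≤ R) (hz : ∀ x ∈ T, w x = 0) : w = 0 := by
  have hinj : Set.InjOn (fun x : ℝ => (x : ℂ)) T := fun a _ b _ h => Complex.ofReal_injective h
  have hT' : Set.Infinite ((fun x : ℝ => (x : ℂ)) '' T) := hT.image hinj
  have hsub : ((fun x : ℝ => (x : ℂ)) '' T) ⊆ Metric.closedBall (0 : ℂ) R := by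
    rintro _ ⟨x, hx, rfl⟩
    simpa [Complex.norm_real] using hb x hx
  obtain ⟨z, _, hacc⟩ := hT'.exists_accPt_of_subset_isCompact (isCompact_closedBall 0 R) hsub
  have hfreq : ∃ᶠ y in nhdsWithin z {z}ᶜ, w y = 0 := by
    have : ∃ᶠ y in nhds z, y ≠ z ∧ y ∈ ((fun x : ℝ => (x : ℂ)) '' T) :=
      accPt_iff_frequently.mp hacc
    rw [frequently_nhdsWithin_iff]
    refine this.mono ?_
    rintro y ⟨hy1, x, hx, rfl⟩
    exact ⟨hz x hx, hy1⟩
  have han : AnalyticOnNhd ℂ w Set.univ := fun x _ => hw.analyticAt x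
  have := han.eqOn_zero_of_preconnected_of_frequently_eq_zero
    isPreconnected_univ (Set.mem_univ z) hfreq
  funext u; exact this (Set.mem_univ u)

lemma aux_ode_zero (P : Polynomial ℂ) (h : ℂ → ℂ) (hd : Differentiable ℂ h)
    (hd1 : Differentiable ℂ (deriv h))
    (hode : ∀ z, deriv (deriv h) z = -(P.eval z * h z)) (x₀ : ℂ)
    (h0 : h x₀ = 0) (h1 : deriv h x₀ = 0) : ∀ z, h z = 0 := by
  have key : ∀ n : ℕ, ∃ a b : Polynomial ℂ,
      iteratedDeriv n h = fun z => a.eval z * h z + b.eval z * deriv h z := by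
    intro n
    induction n with
    | zero => exact ⟨1, 0, by funext z; simp⟩
    | succ n ih =>
      obtain ⟨a, b, hab⟩ := ih
      refine ⟨a.derivative - b * P, a + b.derivative, ?_⟩
      rw [iteratedDeriv_succ, hab]
      funext z
      have hda : HasDerivAt (fun z => a.eval z * h z + b.eval z * deriv h z)
          (a.derivative.eval z * h z + a.eval z * deriv h z +
            (b.derivative.eval z * deriv h z + b.eval z * deriv (deriv h) z)) z :=
        ((a.hasDerivAt z).mul (hd z).hasDerivAt).add
          ((b.hasDerivAt z).mul (hd1 z).hasDerivAt)
      rw [hda.deriv, hode z]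
      simp only [eval_add, eval_sub, eval_mul]
      ring
  have hall : ∀ n : ℕ, iteratedDeriv n h x₀ = 0 := by
    intro n
    obtain ⟨a, b, hab⟩ := key n
    rw [hab]
    simp [h0, h1]
  intro z
  have := Complex.taylorSeries_eq_of_entire' x₀ z hd
  rw [← this]
  simp [hall]

lemma aux_phi (P : Polynomial ℂ) (w : ℂ → ℂ) (hw : Differentiable ℂ w)
    (hde2 : ∀ z, deriv (deriv w) z = -(P.eval z * w z)) (x : ℝ) :
    HasDerivAt (fun x : ℝ => (w x * (starRingEnd ℂ) (deriv w x)).im)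
      ((P.eval (x : ℂ)).im * Complex.normSq (w x)) x := by
  have hw1 : Differentiable ℂ (deriv w) := aux_diff_deriv hw
  have hW : HasDerivAt (fun x : ℝ => w x) (deriv w x) x :=
    (hw.differentiableAt.hasDerivAt).comp_ofReal
  have hW1 : HasDerivAt (fun x : ℝ => deriv w x) (deriv (deriv w) x) x :=
    (hw1.differentiableAt.hasDerivAt).comp_ofReal
  have hc : HasDerivAt (fun x : ℝ => (starRingEnd ℂ) (deriv w x))
      ((starRingEnd ℂ) (deriv (deriv w) x)) x := hW1.star
  have hm := hW.mul hc
  have him := Complex.imCLM.hasFDerivAt.comp_hasDerivAt x hm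
  refine HasDerivAt.congr_deriv (f := fun x : ℝ => (w x * (starRingEnd ℂ) (deriv w x)).im) him ?_
  symm
  simp only [hde2 (x : ℂ)]
  have : (w x * (starRingEnd ℂ) (w x)) = (Complex.normSq (w x) : ℂ) := Complex.mul_conj _
  simp only [Complex.imCLM_apply, map_neg, map_mul, Complex.add_im, Complex.neg_im]
  rw [show deriv w ↑x * (starRingEnd ℂ) (deriv w ↑x) = (Complex.normSq (deriv w x) : ℂ) from
    Complex.mul_conj _]
  rw [show w ↑x * -((starRingEnd ℂ) (eval (↑x) P) * (starRingEnd ℂ) (w ↑x)) =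
      -((starRingEnd ℂ) (P.eval ↑x) * (w ↑x * (starRingEnd ℂ) (w ↑x))) from by ring, this]
  simp [Complex.mul_im, Complex.conj_im, Complex.conj_re]

lemma aux_vanish (P : Polynomial ℂ) (w : ℂ → ℂ) (hw : Differentiable ℂ w)
    (hde2 : ∀ z, deriv (deriv w) z = -(P.eval z * w z)) (x₁ x₂ : ℝ) (hlt : x₁ < x₂)
    (hz1 : w x₁ = 0) (hz2 : w x₂ = 0) (s : ℝ) (hs : s = 1 ∨ s = -1)
    (hq : ∀ x ∈ Set.Ioo x₁ x₂, 0 ≤ s * (P.eval (x : ℂ)).im)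
    (hq0 : ∀ x ∈ Set.Ioo x₁ x₂, (P.eval (x : ℂ)).im ≠ 0) :
    ∀ x ∈ Set.Ioo x₁ x₂, w x = 0 := by
  have hqc : Continuous fun x : ℝ => (P.eval (x : ℂ)).im :=
    Complex.continuous_im.comp ((P.continuous_aeval).comp Complex.continuous_ofReal)
  have hnc : Continuous fun x : ℝ => Complex.normSq (w x) :=
    Complex.continuous_normSq.comp (hw.continuous.comp Complex.continuous_ofReal)
  have hgc : Continuous fun x : ℝ => (P.eval (x : ℂ)).im * Complex.normSq (w x) := hqc.mul hnc
  have hftc : ∫ x in x₁..x₂, (P.eval (x : ℂ)).im * Complex.normSq (w x) = 0 := by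
    rw [intervalIntegral.integral_eq_sub_of_hasDerivAt
      (fun x _ => aux_phi P w hw hde2 x) (hgc.intervalIntegrable _ _)]
    simp [hz1, hz2]
  have hint : ∫ x in x₁..x₂, s * ((P.eval (x : ℂ)).im * Complex.normSq (w x)) = 0 := by
    rw [intervalIntegral.integral_const_mul, hftc, mul_zero]
  by_contra hcon
  push_neg at hcon
  obtain ⟨y, hy, hwy⟩ := hcon
  have hsq : ∀ x ∈ Set.Ioo x₁ x₂, s * (P.eval (x : ℂ)).im ≠ 0 := by
    intro x hx
    rcases hs with rfl | rfl <;> simpa using hq0 x hx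
  have hpos : 0 < ∫ x in x₁..x₂, s * ((P.eval (x : ℂ)).im * Complex.normSq (w x)) := by
    apply intervalIntegral.integral_pos hlt ((continuous_const.mul hgc).continuousOn)
    · intro x hx
      rcases eq_or_lt_of_le hx.2 with rfl | hx2
      · simp [hz2]
      · have hx' : x ∈ Set.Ioo x₁ x₂ := ⟨hx.1, hx2⟩
        simp only [Pi.mul_apply]
        rw [← mul_assoc]
        exact mul_nonneg (hq x hx') (Complex.normSq_nonneg _)
    · refine ⟨y, ⟨hy.1.le, hy.2.le⟩, ?_⟩
      simp only [Pi.mul_apply]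
      rw [← mul_assoc]
      exact mul_pos (lt_of_le_of_ne (hq y hy) (Ne.symm (hsq y hy)))
        (Complex.normSq_pos.mpr hwy)
  exact absurd hint (ne_of_gt hpos)

/-- If `w` is a nonzero entire solution of `w'' + P·w = 0` with infinitely many real zeros,
then `P` is a real polynomial and `w` is proportional to a real function. -/
theorem stmt_8 (P : Polynomial ℂ)
    (w : ℂ → ℂ) (hw : Differentiable ℂ w) (hw0 : w ≠ 0)
    (hde : ∀ z : ℂ, iteratedDeriv 2 w z + P.eval z * w z = 0)
    (hzeros : {x : ℝ | w x = 0}.Infinite) :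
    (∀ n, (P.coeff n).im = 0) ∧
      ∃ c : ℂ, c ≠ 0 ∧
        ∀ z : ℂ, (starRingEnd ℂ) (c * w ((starRingEnd ℂ) z)) = c * w z := by
  classical
  have hde2 : ∀ z : ℂ, deriv (deriv w) z = -(P.eval z * w z) := by
    intro z
    have h2 : iteratedDeriv 2 w = deriv (deriv w) := by
      rw [show (2 : ℕ) = 1 + 1 from rfl, iteratedDeriv_succ, iteratedDeriv_one]
    have := hde z
    rw [h2] at this
    linear_combination this
  have hw1 : Differentiable ℂ (deriv w) := aux_diff_deriv hw
  have hqc : Continuous fun x : ℝ => (P.eval (x : ℂ)).im :=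
    Complex.continuous_im.comp ((P.continuous_aeval).comp Complex.continuous_ofReal)
  -- main contradiction machine for part 1
  have hmain : ∀ x₁ x₂ : ℝ, x₁ < x₂ → w x₁ = 0 → w x₂ = 0 →
      (∀ x ∈ Set.Ioo x₁ x₂, (P.eval (x : ℂ)).im ≠ 0) → False := by
    intro x₁ x₂ hlt hz1 hz2 hq0
    have hsign : ∃ s : ℝ, (s = 1 ∨ s = -1) ∧
        ∀ x ∈ Set.Ioo x₁ x₂, 0 ≤ s * (P.eval (x : ℂ)).im := by
      by_cases hpos : ∀ x ∈ Set.Ioo x₁ x₂, 0 ≤ (P.eval (x : ℂ)).im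
      · exact ⟨1, Or.inl rfl, fun x hx => by simpa using hpos x hx⟩
      · push_neg at hpos
        obtain ⟨a, ha, haneg⟩ := hpos
        refine ⟨-1, Or.inr rfl, ?_⟩
        intro x hx
        rcases le_or_gt ((P.eval (x : ℂ)).im) 0 with hle | hgt
        · nlinarith
        · exfalso
          have hivt : ∃ c ∈ Set.Ioo x₁ x₂, (P.eval (c : ℂ)).im = 0 := by
            rcases lt_trichotomy a x with hax | hax | hax
            · have hsub := intermediate_value_Icc hax.le hqc.continuousOn
              have h0 : (0 : ℝ) ∈ Set.Icc ((P.eval (a : ℂ)).im) ((P.eval (x : ℂ)).im) :=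
                ⟨haneg.le, hgt.le⟩
              obtain ⟨c, hc, hc0⟩ := hsub h0
              exact ⟨c, ⟨lt_of_lt_of_le ha.1 hc.1, lt_of_le_of_lt hc.2 hx.2⟩, hc0⟩
            · rw [hax] at haneg; linarith
            · have hsub := intermediate_value_Icc' hax.le hqc.continuousOn
              have h0 : (0 : ℝ) ∈ Set.Icc ((P.eval (a : ℂ)).im) ((P.eval (x : ℂ)).im) :=
                ⟨haneg.le, hgt.le⟩
              obtain ⟨c, hc, hc0⟩ := hsub h0
              exact ⟨c, ⟨lt_of_lt_of_le hx.1 hc.1, lt_of_le_of_lt hc.2 ha.2⟩, hc0⟩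
          obtain ⟨c, hc, hc0⟩ := hivt
          exact hq0 c hc hc0
    obtain ⟨s, hs, hq⟩ := hsign
    have hvan := aux_vanish P w hw hde2 x₁ x₂ hlt hz1 hz2 s hs hq hq0
    have hwz : w = 0 := by
      refine aux_zero_of_acc w hw (Set.Ioo x₁ x₂) (Set.Ioo_infinite hlt) (|x₁| + |x₂|) ?_ hvan
      intro x hx
      rw [abs_le]
      constructor <;>
        [linarith [neg_abs_le x₁, abs_nonneg x₂, hx.1]; linarith [le_abs_self x₂, abs_nonneg x₁, hx.2]]
    exact hw0 hwz
  set Qr : Polynomial ℝ := ∑ n ∈ P.support, Polynomial.C ((P.coeff n).im) * Polynomial.X ^ n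
    with hQdef
  have hQcoeff : ∀ m, Qr.coeff m = (P.coeff m).im := by
    intro m
    rw [hQdef, Polynomial.finset_sum_coeff]
    simp only [Polynomial.coeff_C_mul, Polynomial.coeff_X_pow, mul_ite, mul_one, mul_zero]
    rw [Finset.sum_ite_eq P.support m (fun n => (P.coeff n).im)]
    by_cases hm : m ∈ P.support
    · simp [hm]
    · simp [hm, Polynomial.notMem_support_iff.mp hm]
  have hQeval : ∀ x : ℝ, Qr.eval x = (P.eval (x : ℂ)).im := by
    intro x
    rw [hQdef, Polynomial.eval_finset_sum]
    rw [show (P.eval (x : ℂ)) = ∑ n ∈ P.support, P.coeff n * (x : ℂ) ^ n from by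
      rw [Polynomial.eval_eq_sum, Polynomial.sum]]
    rw [Complex.im_sum]
    refine Finset.sum_congr rfl fun n _ => ?_
    rw [Complex.mul_im, show ((x : ℂ) ^ n).im = 0 from by
        rw [← Complex.ofReal_pow]; exact Complex.ofReal_im _,
      show ((x : ℂ) ^ n).re = x ^ n from by
        rw [← Complex.ofReal_pow]; exact Complex.ofReal_re _]
    simp
  have hQ0 : Qr = 0 := by
    by_contra hQ
    have hF := Polynomial.finite_setOf_isRoot hQ
    obtain ⟨R0, hR0⟩ := (hF.image _root_.abs).bddAbove
    set R := max R0 0 with hRdef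
    have hR : ∀ y : ℝ, Qr.IsRoot y → |y| ≤ R := fun y hy =>
      le_max_of_le_left (hR0 ⟨y, hy, rfl⟩)
    have hRnn : (0 : ℝ) ≤ R := le_max_right _ _
    set S := {x : ℝ | w x = 0} with hSdef
    have hsub : S ⊆ (S ∩ {x | |x| ≤ R}) ∪ ((S ∩ {x | R < x}) ∪ (S ∩ {x | x < -R})) := by
      intro x hx
      by_cases h1 : |x| ≤ R
      · exact Or.inl ⟨hx, h1⟩
      · rcases lt_abs.mp (not_le.mp h1) with h2 | h2
        · exact Or.inr (Or.inl ⟨hx, h2⟩)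
        · exact Or.inr (Or.inr ⟨hx, show x < -R by linarith⟩)
    have hcases : (S ∩ {x | |x| ≤ R}).Infinite ∨ (S ∩ {x | R < x}).Infinite ∨
        (S ∩ {x | x < -R}).Infinite := by
      by_contra hc
      push_neg at hc
      exact hzeros ((hc.1.union (hc.2.1.union hc.2.2)).subset hsub)
    have hnoroot : ∀ u v : ℝ, (∀ x ∈ Set.Ioo u v, ¬ Qr.IsRoot x) →
        (∀ x ∈ Set.Ioo u v, (P.eval (x : ℂ)).im ≠ 0) := by
      intro u v hnr x hx h0
      exact hnr x hx (by rw [Polynomial.IsRoot, hQeval]; exact h0)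
    rcases hcases with hinf | hinf | hinf
    · exact hw0 (aux_zero_of_acc w hw _ hinf R (fun x hx => hx.2) (fun x hx => hx.1))
    · obtain ⟨a, ha, b, hb, hab⟩ := hinf.nontrivial
      have key : ∀ u v : ℝ, u ∈ S ∩ {x | R < x} → v ∈ S ∩ {x | R < x} → u < v → False := by
        intro u v hu hv huv
        refine hmain u v huv hu.1 hv.1 (hnoroot u v ?_)
        intro x hx hroot
        have h1 := hR x hroot
        have h2 : R < x := lt_trans hu.2 hx.1
        linarith [le_abs_self x]
      rcases hab.lt_or_gt with hlt | hlt
      exacts [key a b ha hb hlt, key b a hb ha hlt]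
    · obtain ⟨a, ha, b, hb, hab⟩ := hinf.nontrivial
      have key : ∀ u v : ℝ, u ∈ S ∩ {x | x < -R} → v ∈ S ∩ {x | x < -R} → u < v → False := by
        intro u v hu hv huv
        refine hmain u v huv hu.1 hv.1 (hnoroot u v ?_)
        intro x hx hroot
        have h1 := hR x hroot
        have h2 : x < -R := lt_trans hx.2 hv.2
        linarith [neg_abs_le x]
      rcases hab.lt_or_gt with hlt | hlt
      exacts [key a b ha hb hlt, key b a hb ha hlt]
  have him : ∀ n, (P.coeff n).im = 0 := fun n => by rw [← hQcoeff n, hQ0, Polynomial.coeff_zero]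
  refine ⟨him, ?_⟩
  -- Part 2
  have hPconj : ∀ z : ℂ, (starRingEnd ℂ) (P.eval ((starRingEnd ℂ) z)) = P.eval z := by
    intro z
    rw [Polynomial.eval_eq_sum_range, Polynomial.eval_eq_sum_range, map_sum]
    refine Finset.sum_congr rfl fun i _ => ?_
    rw [map_mul, map_pow, Complex.conj_conj, Complex.conj_eq_iff_im.mpr (him _)]
  obtain ⟨x₀, hx₀⟩ := hzeros.nonempty
  have hd0 : deriv w ((x₀ : ℝ) : ℂ) ≠ 0 := by
    intro hd
    exact hw0 (funext (aux_ode_zero P w hw hw1 hde2 x₀ hx₀ hd))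
  set d := deriv w ((x₀ : ℝ) : ℂ) with hdd
  have hgz : ∀ z : ℂ, HasDerivAt (fun u => (starRingEnd ℂ) (w ((starRingEnd ℂ) u)))
      ((starRingEnd ℂ) (deriv w ((starRingEnd ℂ) z))) z :=
    fun z => aux_conj_deriv (hw _).hasDerivAt
  set h : ℂ → ℂ := fun z => d * (starRingEnd ℂ) (w ((starRingEnd ℂ) z)) -
    (starRingEnd ℂ) d * w z with hhdef
  have hhz : ∀ z, HasDerivAt h (d * (starRingEnd ℂ) (deriv w ((starRingEnd ℂ) z)) -
      (starRingEnd ℂ) d * deriv w z) z :=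
    fun z => ((hgz z).const_mul d).sub (((hw z).hasDerivAt).const_mul _)
  have hh : Differentiable ℂ h := fun z => (hhz z).differentiableAt
  have hderivh : deriv h = fun z => d * (starRingEnd ℂ) (deriv w ((starRingEnd ℂ) z)) -
      (starRingEnd ℂ) d * deriv w z := funext fun z => (hhz z).deriv
  have hh1z : ∀ z : ℂ, HasDerivAt (fun z => d * (starRingEnd ℂ) (deriv w ((starRingEnd ℂ) z)) -
      (starRingEnd ℂ) d * deriv w z)
      (d * (starRingEnd ℂ) (deriv (deriv w) ((starRingEnd ℂ) z)) -
        (starRingEnd ℂ) d * deriv (deriv w) z) z :=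
    fun z => ((aux_conj_deriv ((hw1 _).hasDerivAt)).const_mul d).sub
      (((hw1 z).hasDerivAt).const_mul _)
  have hh1 : Differentiable ℂ (deriv h) := by
    rw [hderivh]; exact fun z => (hh1z z).differentiableAt
  have hodeh : ∀ z, deriv (deriv h) z = -(P.eval z * h z) := by
    intro z
    rw [hderivh, (hh1z z).deriv, hde2 z, hde2 ((starRingEnd ℂ) z)]
    simp only [map_neg, map_mul]
    rw [hPconj z, hhdef]
    ring
  have hwx₀ : w ((x₀ : ℝ) : ℂ) = 0 := hx₀
  have hhx0 : h ((x₀ : ℝ) : ℂ) = 0 := by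
    simp only [hhdef, Complex.conj_ofReal, hwx₀, map_zero, mul_zero, sub_zero]
  have hh1x0 : deriv h ((x₀ : ℝ) : ℂ) = 0 := by
    rw [hderivh]
    simp only [Complex.conj_ofReal, ← hdd]
    ring
  have hz0 := aux_ode_zero P h hh hh1 hodeh _ hhx0 hh1x0
  refine ⟨(starRingEnd ℂ) d, ?_, ?_⟩
  · intro hc
    exact hd0 (by simpa using congrArg (starRingEnd ℂ) hc)
  · intro z
    have hz := hz0 z
    rw [hhdef] at hz
    rw [map_mul, Complex.conj_conj]
    linear_combination hz
end

section
/- Let P be a polynomial over ℂ and let a, b ∈ ℂ. Then there exists a unique entire function w : ℂ → ℂ such that w(0) = a, w'(0) = b, and w''(z) + P(z)·w(z) = 0 for all z ∈ ℂ. In particular, every initial value problem for the equation w'' + P·w = 0 is solved by an entire function. -/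
section ODEHelpers

open Complex Polynomial Finset Set


noncomputable def odeCoef (P : Polynomial ℂ) (a b : ℂ) : ℕ → ℂ
  | 0 => a
  | 1 => b
  | (n+2) => (-((((n:ℂ))+1)*(((n:ℂ))+2))⁻¹) * ∑ k ∈ Finset.range (n+1),
      P.coeff k * odeCoef P a b (n - k)
  termination_by n => n
  decreasing_by omega

lemma coeff_norm_sum_le (P : Polynomial ℂ) (N : ℕ) :
    ∑ k ∈ Finset.range N, ‖P.coeff k‖ ≤ ∑ k ∈ Finset.range (P.natDegree + 1), ‖P.coeff k‖ := by
  rcases le_total N (P.natDegree + 1) with h | h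
  · exact Finset.sum_le_sum_of_subset_of_nonneg (Finset.range_subset_range.mpr h)
      (fun _ _ _ => norm_nonneg _)
  · refine le_of_eq (Finset.sum_subset (Finset.range_subset_range.mpr h) ?_).symm
    intro k hk hk'
    simp only [Finset.mem_range] at hk hk'
    rw [Polynomial.coeff_eq_zero_of_natDegree_lt (by omega), norm_zero]

lemma odeCoef_bound (P : Polynomial ℂ) (a b : ℂ) (n : ℕ) :
    ‖odeCoef P a b n‖ ≤ (max ‖a‖ ‖b‖) *
      (1 + ∑ k ∈ Finset.range (P.natDegree+1), ‖P.coeff k‖)^n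
      / (Nat.factorial (n / (P.natDegree + 2))) := by
  set d := P.natDegree with hd
  set m := d + 2 with hm
  set S := ∑ k ∈ Finset.range (d+1), ‖P.coeff k‖ with hS
  set A := 1 + S with hA
  set C := max ‖a‖ ‖b‖ with hC
  have hS0 : 0 ≤ S := Finset.sum_nonneg fun _ _ => norm_nonneg _
  have hA1 : 1 ≤ A := by simp [hA]; linarith
  have hA0 : 0 ≤ A := by linarith
  have hSA : S ≤ A^2 := by nlinarith
  have hC0 : 0 ≤ C := le_trans (norm_nonneg a) (le_max_left _ _)
  clear_value S A C
  induction n using Nat.strong_induction_on with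
  | _ n ih =>
  match n with
  | 0 =>
    simp only [odeCoef, pow_zero, Nat.zero_div, Nat.factorial_zero, Nat.cast_one, mul_one, div_one]
    rw [hC]; exact le_max_left _ _
  | 1 =>
    have : ‖b‖ ≤ C := by rw [hC]; exact le_max_right _ _
    have h1m : 1 / m = 0 := Nat.div_eq_of_lt (by omega)
    simp only [odeCoef, pow_one, h1m, Nat.factorial_zero, Nat.cast_one, div_one]
    nlinarith
  | (n+2) =>
    set q := (n+2) / m with hq
    have hqf1 : (1:ℝ) ≤ (Nat.factorial q : ℝ) := by
      exact_mod_cast Nat.one_le_iff_ne_zero.mpr (Nat.factorial_ne_zero q)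
    have hqf0 : (0:ℝ) < (Nat.factorial q : ℝ) := by linarith
    set mq : ℝ := ((max q 1 : ℕ) : ℝ) with hmq
    have hmq1 : (1:ℝ) ≤ mq := by
      rw [hmq]; exact_mod_cast Nat.one_le_iff_ne_zero.mpr (by positivity)
    -- per-term bound
    have hterm : ∀ k ∈ Finset.range (n+1),
        ‖P.coeff k * odeCoef P a b (n - k)‖
          ≤ ‖P.coeff k‖ * (C * A^n * mq / (Nat.factorial q : ℝ)) := by
      intro k hk
      rw [norm_mul]
      rcases eq_or_ne (P.coeff k) 0 with h0 | h0
      · rw [h0, norm_zero, zero_mul, zero_mul]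
      · refine mul_le_mul_of_nonneg_left ?_ (norm_nonneg _)
        have hkd : k ≤ d := Polynomial.le_natDegree_of_ne_zero h0
        have hIH := ih (n - k) (by omega)
        set j := (n - k) / m with hj
        have hjf1 : (1:ℝ) ≤ (Nat.factorial j : ℝ) := by
          exact_mod_cast Nat.one_le_iff_ne_zero.mpr (Nat.factorial_ne_zero j)
        -- q ≤ j + 1
        have hqj : q ≤ j + 1 := by
          have h1 : n + 2 ≤ (n - k) + m := by omega
          calc q ≤ ((n-k) + m) / m := Nat.div_le_div_right h1
            _ = j + 1 := by rw [hj]; exact Nat.add_div_right _ (by omega)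
        -- q! ≤ max q 1 * j !
        have hfac : (Nat.factorial q : ℝ) ≤ mq * (Nat.factorial j : ℝ) := by
          have : Nat.factorial q ≤ (max q 1) * Nat.factorial j := by
            match hq' : q with
            | 0 => simpa using Nat.one_le_iff_ne_zero.mpr (Nat.factorial_ne_zero j)
            | (q'+1) =>
              have hq'j : q' ≤ j := by omega
              calc Nat.factorial (q'+1) = (q'+1) * Nat.factorial q' := rfl
                _ ≤ (max (q'+1) 1) * Nat.factorial j := by
                    have := Nat.factorial_le hq'j
                    have hmx : max (q'+1) 1 = q'+1 := by omega
                    rw [hmx]; exact Nat.mul_le_mul_left _ this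
          rw [hmq]; exact_mod_cast this
        have hpow : A^(n-k) ≤ A^n := pow_le_pow_right₀ hA1 (by omega)
        calc ‖odeCoef P a b (n-k)‖ ≤ C * A^(n-k) / (Nat.factorial j : ℝ) := hIH
          _ ≤ C * A^n * mq / (Nat.factorial q : ℝ) := by
              rw [div_le_div_iff₀ (by linarith) hqf0]
              have h1 : C * A^(n-k) ≤ C * A^n := by
                exact mul_le_mul_of_nonneg_left hpow hC0
              have h2 : 0 ≤ C * A^n := mul_nonneg hC0 (pow_nonneg hA0 n)
              nlinarith [mul_nonneg (mul_nonneg hC0 (pow_nonneg hA0 (n-k))) (le_trans zero_le_one hqf1)]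
    -- sum bound
    have hsum : ‖∑ k ∈ Finset.range (n+1), P.coeff k * odeCoef P a b (n - k)‖
        ≤ S * (C * A^n * mq / (Nat.factorial q : ℝ)) := by
      calc ‖∑ k ∈ Finset.range (n+1), P.coeff k * odeCoef P a b (n - k)‖
          ≤ ∑ k ∈ Finset.range (n+1), ‖P.coeff k * odeCoef P a b (n - k)‖ :=
            norm_sum_le _ _
        _ ≤ ∑ k ∈ Finset.range (n+1), ‖P.coeff k‖ * (C * A^n * mq / (Nat.factorial q : ℝ)) :=
            Finset.sum_le_sum hterm
        _ = (∑ k ∈ Finset.range (n+1), ‖P.coeff k‖) * (C * A^n * mq / (Nat.factorial q : ℝ)) :=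
            (Finset.sum_mul _ _ _).symm
        _ ≤ S * (C * A^n * mq / (Nat.factorial q : ℝ)) := by
            refine mul_le_mul_of_nonneg_right ?_ (by positivity)
            rw [hS]; exact coeff_norm_sum_le P _
    -- norm of prefactor
    have hnorm : ‖odeCoef P a b (n+2)‖ = (((n:ℝ)+1)*((n:ℝ)+2))⁻¹ *
        ‖∑ k ∈ Finset.range (n+1), P.coeff k * odeCoef P a b (n - k)‖ := by
      rw [odeCoef, norm_mul, norm_neg, norm_inv, norm_mul]
      congr 3
      · have : ((n:ℂ)+1) = ((n+1 : ℕ) : ℂ) := by push_cast; ring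
        rw [this, Complex.norm_natCast]; push_cast; ring
      · have : ((n:ℂ)+2) = ((n+2 : ℕ) : ℂ) := by push_cast; ring
        rw [this, Complex.norm_natCast]; push_cast; ring
    -- combine
    have hn12 : (0:ℝ) < ((n:ℝ)+1)*((n:ℝ)+2) := by positivity
    have hmqn : mq ≤ (n:ℝ)+2 := by
      have : (max q 1) ≤ n + 2 := by
        have : q ≤ n+2 := Nat.div_le_self _ _
        omega
      rw [hmq]; exact_mod_cast this
    rw [hnorm]
    calc (((n:ℝ)+1)*((n:ℝ)+2))⁻¹ * ‖∑ k ∈ Finset.range (n+1), P.coeff k * odeCoef P a b (n - k)‖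
        ≤ (((n:ℝ)+1)*((n:ℝ)+2))⁻¹ * (S * (C * A^n * mq / (Nat.factorial q : ℝ))) := by
          exact mul_le_mul_of_nonneg_left hsum (by positivity)
      _ ≤ C * A^(n+2) / (Nat.factorial ((n+2) / m) : ℝ) := by
          rw [← hq, pow_add, inv_mul_le_iff₀ hn12]
          have hCA : 0 ≤ C * A^n := mul_nonneg hC0 (pow_nonneg hA0 n)
          have hA2 : (0:ℝ) ≤ A^2 := by positivity
          have hn0 : (0:ℝ) ≤ (n:ℝ) := Nat.cast_nonneg n
          have h1 : S * mq ≤ A^2 * (((n:ℝ)+1)*((n:ℝ)+2)) := by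
            nlinarith [mul_le_mul_of_nonneg_right hSA (le_trans zero_le_one hmq1),
              mul_le_mul_of_nonneg_left hmqn hA2,
              mul_nonneg (mul_nonneg hA2 hn0) (by linarith : (0:ℝ) ≤ (n:ℝ)+2)]
          have key : S * (C * A ^ n * mq) ≤ (((n:ℝ)+1)*((n:ℝ)+2)) * (C * (A^n * A^2)) := by
            nlinarith [mul_le_mul_of_nonneg_left h1 hCA]
          calc S * (C * A ^ n * mq / (Nat.factorial q : ℝ))
              = S * (C * A ^ n * mq) / (Nat.factorial q : ℝ) := by ring
            _ ≤ (((n:ℝ)+1)*((n:ℝ)+2)) * (C * (A^n * A^2)) / (Nat.factorial q : ℝ) := by gcongr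
            _ = (((n:ℝ)+1)*((n:ℝ)+2)) * (C * (A^n * A^2) / (Nat.factorial q : ℝ)) := by ring

lemma cast_n1_ne (n : ℕ) : ((n:ℂ)+1) ≠ 0 := by
  have : ((n+1 : ℕ) : ℂ) ≠ 0 := Nat.cast_ne_zero.mpr (by omega)
  push_cast at this; exact this

lemma cast_n2_ne (n : ℕ) : ((n:ℂ)+2) ≠ 0 := by
  have : ((n+2 : ℕ) : ℂ) ≠ 0 := Nat.cast_ne_zero.mpr (by omega)
  push_cast at this; exact this

lemma odeCoef_rec (P : Polynomial ℂ) (a b : ℂ) (n : ℕ) :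
    (((n:ℂ))+1)*(((n:ℂ))+2) * odeCoef P a b (n+2)
      = -∑ k ∈ Finset.range (n+1), P.coeff k * odeCoef P a b (n - k) := by
  rw [odeCoef]
  field_simp [cast_n1_ne n, cast_n2_ne n]


set_option maxHeartbeats 2000000 in
lemma summable_pow_div_factorial_div (m : ℕ) (hm : 0 < m) (x : ℝ) (hx : 0 ≤ x) :
    Summable (fun n => x ^ n / (Nat.factorial (n / m) : ℝ)) := by
  haveI : NeZero m := ⟨by omega⟩
  set E := (max 1 x) ^ m with hE
  have hx1 : (1:ℝ) ≤ max 1 x := le_max_left 1 x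
  have hE1 : 1 ≤ E := one_le_pow₀ hx1
  have hsum : Summable (fun p : ℕ × Fin m => E ^ p.1 / (Nat.factorial p.1 : ℝ) * E) := by
    have hf : Summable (fun n : ℕ => E ^ n / (Nat.factorial n : ℝ)) :=
      Real.summable_pow_div_factorial E
    have hg : Summable (fun _ : Fin m => E) := Summable.of_finite
    refine Summable.mul_of_nonneg hf hg ?_ ?_
    · intro n
      have : (0:ℝ) ≤ E ^ n / (Nat.factorial n : ℝ) := by positivity
      exact this
    · intro i
      show (0:ℝ) ≤ E
      linarith
  rw [← Equiv.summable_iff (Nat.divModEquiv m).symm]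
  refine Summable.of_nonneg_of_le (fun p => div_nonneg (pow_nonneg hx _) (Nat.cast_nonneg _)) (fun p => ?_) hsum
  show x ^ (p.1 * m + (p.2:ℕ)) / (Nat.factorial ((p.1 * m + (p.2:ℕ)) / m) : ℝ)
      ≤ E ^ p.1 / (Nat.factorial p.1 : ℝ) * E
  have hdiv : (p.1 * m + (p.2:ℕ)) / m = p.1 := by
    rw [Nat.add_comm, Nat.add_mul_div_right _ _ hm, Nat.div_eq_of_lt p.2.is_lt, Nat.zero_add]
  rw [hdiv]
  have hnum : x ^ (p.1 * m + (p.2:ℕ)) ≤ E ^ p.1 * E := by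
    calc x ^ (p.1 * m + (p.2:ℕ)) ≤ (max 1 x) ^ (p.1 * m + (p.2:ℕ)) :=
          pow_le_pow_left₀ hx (le_max_right 1 x) _
      _ ≤ (max 1 x) ^ (p.1 * m + m) :=
          pow_le_pow_right₀ hx1 (by have := p.2.is_lt; omega)
      _ = E ^ p.1 * E := by rw [pow_add, hE, ← pow_mul, mul_comm m p.1]
  calc x ^ (p.1 * m + (p.2:ℕ)) / (Nat.factorial p.1 : ℝ)
      ≤ (E ^ p.1 * E) / (Nat.factorial p.1 : ℝ) := by
        gcongr
    _ = E ^ p.1 / (Nat.factorial p.1 : ℝ) * E := by ring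


lemma summable_coef_mul_pow {c : ℕ → ℂ} {C A : ℝ} {m : ℕ} (hm : 0 < m) (hA : 0 ≤ A)
    (hc : ∀ n, ‖c n‖ ≤ C * A ^ n / (Nat.factorial (n / m) : ℝ)) (r : ℝ) (hr : 0 ≤ r) :
    Summable (fun n => ‖c n‖ * r ^ n) := by
  have h := (summable_pow_div_factorial_div m hm (A*r) (by positivity)).mul_left C
  refine Summable.of_nonneg_of_le (fun n => by positivity) (fun n => ?_) h
  calc ‖c n‖ * r^n ≤ (C * A^n / (Nat.factorial (n/m) : ℝ)) * r^n :=
        mul_le_mul_of_nonneg_right (hc n) (by positivity)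
    _ = C * ((A*r)^n / (Nat.factorial (n/m) : ℝ)) := by rw [mul_pow]; ring

lemma hasDerivAt_tsum_pow {c : ℕ → ℂ}
    (hs : ∀ r : ℝ, 0 ≤ r → Summable (fun n : ℕ => ((n:ℝ)+1) * ‖c (n+1)‖ * r ^ n))
    (z : ℂ) :
    HasDerivAt (fun y : ℂ => ∑' n, c n * y ^ n)
      (∑' (n : ℕ), ((n:ℂ)+1) * c (n+1) * z ^ n) z := by
  set R : ℝ := ‖z‖ + 1 with hR
  have hzR : ‖z‖ < R := by rw [hR]; linarith
  have hR0 : (0:ℝ) ≤ R := le_trans (norm_nonneg z) hzR.le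
  set u : ℕ → ℝ := fun n => (n:ℝ) * ‖c n‖ * R ^ (n-1) with hu_def
  have hu : Summable u := by
    rw [← summable_nat_add_iff 1]
    refine (hs R hR0).congr fun n => ?_
    simp only [hu_def, Nat.add_sub_cancel]
    push_cast; ring
  have hbound : ∀ n : ℕ, ∀ y : ℂ, y ∈ Metric.ball (0:ℂ) R →
      ‖c n * ((n:ℂ) * y ^ (n-1))‖ ≤ u n := by
    intro n y hy
    rw [Metric.mem_ball, dist_zero_right] at hy
    rw [norm_mul, norm_mul, norm_pow]
    have h1 : ‖((n:ℂ))‖ = (n:ℝ) := by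
      rw [Complex.norm_natCast]
    rw [h1, hu_def]
    calc ‖c n‖ * ((n:ℝ) * ‖y‖^(n-1)) ≤ ‖c n‖ * ((n:ℝ) * R^(n-1)) := by
          gcongr
      _ = (n:ℝ) * ‖c n‖ * R^(n-1) := by ring
  have hder : HasDerivAt (fun y : ℂ => ∑' n, c n * y ^ n)
      (∑' n, c n * ((n:ℂ) * z ^ (n-1))) z := by
    refine hasDerivAt_tsum_of_isPreconnected (y₀ := (0:ℂ)) hu Metric.isOpen_ball
      (convex_ball (0:ℂ) R).isPreconnected
      (fun n y _ => (hasDerivAt_pow n y).const_mul (c n)) hbound ?_ ?_ ?_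
    · rw [Metric.mem_ball, dist_zero_right, norm_zero]; linarith [norm_nonneg z]
    · apply summable_of_ne_finset_zero (s := {0})
      intro n hn
      simp only [Finset.mem_singleton] at hn
      rw [zero_pow hn, mul_zero]
    · rw [Metric.mem_ball, dist_zero_right]; exact hzR
  convert hder using 1
  have hsummand : Summable fun n => c n * ((n:ℂ) * z^(n-1)) :=
    Summable.of_norm_bounded hu fun n =>
      hbound n z (by rw [Metric.mem_ball, dist_zero_right]; exact hzR)
  rw [Summable.tsum_eq_zero_add hsummand]
  simp only [Nat.cast_zero, zero_mul, mul_zero, zero_add, Nat.add_sub_cancel]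
  refine tsum_congr fun n => ?_
  push_cast
  ring

lemma odeCoef_zero (P : Polynomial ℂ) (a b : ℂ) : odeCoef P a b 0 = a := by rw [odeCoef]
lemma odeCoef_one (P : Polynomial ℂ) (a b : ℂ) : odeCoef P a b 1 = b := by rw [odeCoef]

lemma deriv_entire {f : ℂ → ℂ} (h : Differentiable ℂ f) : Differentiable ℂ (deriv f) :=
  analyticOnNhd_univ_iff_differentiable.mp (analyticOnNhd_univ_iff_differentiable.mpr h).deriv

lemma norm_cast_succ (n : ℕ) : ‖((n:ℂ)+1)‖ = (n:ℝ)+1 := by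
  have h : ((n:ℂ)+1) = ((n+1:ℕ):ℂ) := by push_cast; ring
  rw [h, Complex.norm_natCast]; push_cast; ring

lemma shift_bound {c : ℕ → ℂ} {C A : ℝ} {m : ℕ} (hm : 0 < m) (hC : 0 ≤ C) (hA : 1 ≤ A)
    (hc : ∀ n, ‖c n‖ ≤ C * A ^ n / (Nat.factorial (n / m) : ℝ)) (n : ℕ) :
    ‖((n:ℂ)+1) * c (n+1)‖ ≤ (2*C*A) * (2*A)^n / (Nat.factorial (n / m) : ℝ) := by
  have hA0 : (0:ℝ) ≤ A := by linarith
  rw [norm_mul, norm_cast_succ]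
  have h2 : ‖c (n+1)‖ ≤ C * A^(n+1) / (Nat.factorial ((n+1)/m) : ℝ) := hc (n+1)
  have h4 : (n:ℝ)+1 ≤ 2*2^n := by
    have : n+1 < 2^(n+1) := Nat.lt_two_pow_self
    have := this.le
    exact_mod_cast by push_cast at this ⊢; rw [pow_succ] at this; linarith
  calc ((n:ℝ)+1) * ‖c (n+1)‖
      ≤ (2*2^n) * (C*A^(n+1)/(Nat.factorial ((n+1)/m) : ℝ)) := by
        refine mul_le_mul h4 h2 (norm_nonneg _) (by positivity)
    _ ≤ (2*2^n) * (C*A^(n+1)/(Nat.factorial (n/m) : ℝ)) := by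
        gcongr <;> omega
    _ = (2*C*A) * (2*A)^n / (Nat.factorial (n/m) : ℝ) := by
        rw [mul_pow, pow_succ]; ring

theorem existence (P : Polynomial ℂ) (a b : ℂ) :
    ∃ w : ℂ → ℂ,
      (Differentiable ℂ w ∧ w 0 = a ∧ deriv w 0 = b ∧
        ∀ z : ℂ, iteratedDeriv 2 w z + P.eval z * w z = 0) := by
  classical
  obtain ⟨m, hm_def⟩ : ∃ m, m = P.natDegree + 2 := ⟨_, rfl⟩
  have hm : 0 < m := by omega
  obtain ⟨C, hC_def⟩ : ∃ C : ℝ, C = max ‖a‖ ‖b‖ := ⟨_, rfl⟩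
  obtain ⟨A, hA_def⟩ : ∃ A : ℝ, A = 1 + ∑ k ∈ Finset.range (P.natDegree+1), ‖P.coeff k‖ := ⟨_, rfl⟩
  have hC0 : 0 ≤ C := by rw [hC_def]; exact le_trans (norm_nonneg a) (le_max_left _ _)
  have hA1 : 1 ≤ A := by
    have : 0 ≤ ∑ k ∈ Finset.range (P.natDegree+1), ‖P.coeff k‖ :=
      Finset.sum_nonneg fun _ _ => norm_nonneg _
    rw [hA_def]; linarith
  obtain ⟨c, hc_def⟩ : ∃ c, c = odeCoef P a b := ⟨_, rfl⟩
  have hb0 : ∀ n, ‖c n‖ ≤ C * A^n / (Nat.factorial (n/m) : ℝ) := by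
    rw [hc_def, hC_def, hA_def, hm_def]; exact odeCoef_bound P a b
  obtain ⟨c1, hc1_def⟩ : ∃ c1 : ℕ → ℂ, ∀ n, c1 n = ((n:ℂ)+1) * c (n+1) := ⟨_, fun _ => rfl⟩
  obtain ⟨c2, hc2_def⟩ : ∃ c2 : ℕ → ℂ, ∀ n, c2 n = ((n:ℂ)+1) * c1 (n+1) := ⟨_, fun _ => rfl⟩
  have hb1 : ∀ n, ‖c1 n‖ ≤ (2*C*A) * (2*A)^n / (Nat.factorial (n/m) : ℝ) := by
    intro n; rw [hc1_def]; exact shift_bound hm hC0 hA1 hb0 n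
  have hb2 : ∀ n, ‖c2 n‖ ≤ (2*(2*C*A)*(2*A)) * (2*(2*A))^n / (Nat.factorial (n/m) : ℝ) := by
    intro n; rw [hc2_def]
    exact shift_bound hm (by positivity) (by linarith) hb1 n
  have hnorm1 : ∀ n : ℕ, ((n:ℝ)+1) * ‖c (n+1)‖ = ‖c1 n‖ := by
    intro n; rw [hc1_def, norm_mul, norm_cast_succ]
  have hnorm2 : ∀ n : ℕ, ((n:ℝ)+1) * ‖c1 (n+1)‖ = ‖c2 n‖ := by
    intro n; rw [hc2_def, norm_mul, norm_cast_succ]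
  have hs1 : ∀ r : ℝ, 0 ≤ r → Summable (fun n : ℕ => ((n:ℝ)+1) * ‖c (n+1)‖ * r ^ n) := by
    intro r hr
    refine (summable_coef_mul_pow hm (by linarith) hb1 r hr).congr fun n => ?_
    rw [hnorm1 n]
  have hs2 : ∀ r : ℝ, 0 ≤ r → Summable (fun n : ℕ => ((n:ℝ)+1) * ‖c1 (n+1)‖ * r ^ n) := by
    intro r hr
    refine (summable_coef_mul_pow hm (by positivity) hb2 r hr).congr fun n => ?_
    rw [hnorm2 n]
  obtain ⟨w, hw_def⟩ : ∃ w : ℂ → ℂ, w = fun z => ∑' (n : ℕ), c n * z^n := ⟨_, rfl⟩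
  obtain ⟨w1, hw1_def⟩ : ∃ w1 : ℂ → ℂ, w1 = fun z => ∑' (n : ℕ), c1 n * z^n := ⟨_, rfl⟩
  obtain ⟨w2, hw2_def⟩ : ∃ w2 : ℂ → ℂ, w2 = fun z => ∑' (n : ℕ), c2 n * z^n := ⟨_, rfl⟩
  have hw' : ∀ z, HasDerivAt w (w1 z) z := by
    intro z
    rw [hw_def, hw1_def]
    have h := hasDerivAt_tsum_pow hs1 z
    refine HasDerivAt.congr_deriv h ?_
    exact tsum_congr fun n => by rw [hc1_def]
  have hw1' : ∀ z, HasDerivAt w1 (w2 z) z := by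
    intro z
    rw [hw1_def, hw2_def]
    have h := hasDerivAt_tsum_pow hs2 z
    refine HasDerivAt.congr_deriv h ?_
    exact tsum_congr fun n => by rw [hc2_def]
  have hDw : deriv w = w1 := funext fun z => (hw' z).deriv
  have hDw1 : deriv w1 = w2 := funext fun z => (hw1' z).deriv
  have hdiff : Differentiable ℂ w := fun z => (hw' z).differentiableAt
  have tsum_at_zero : ∀ (f : ℕ → ℂ), ∑' (n : ℕ), f n * (0:ℂ)^n = f 0 := by
    intro f
    rw [tsum_eq_single 0]
    · simp
    · intro n hn; rw [zero_pow hn, mul_zero]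
  have hw0 : w 0 = a := by
    rw [hw_def]
    show (∑' (n : ℕ), c n * (0:ℂ)^n) = a
    rw [tsum_at_zero c, hc_def, odeCoef_zero]
  have hderiv0 : deriv w 0 = b := by
    rw [hDw, hw1_def]
    show (∑' (n : ℕ), c1 n * (0:ℂ)^n) = b
    rw [tsum_at_zero c1, hc1_def, hc_def, odeCoef_one]
    norm_num
  refine ⟨w, hdiff, hw0, hderiv0, ?_⟩
  intro z
  have h2 : iteratedDeriv 2 w = w2 := by
    rw [iteratedDeriv_succ, iteratedDeriv_one, hDw, hDw1]
  rw [h2]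
  have hPvan : ∀ k ∉ Finset.range (P.natDegree+1), P.coeff k * z^k = 0 := by
    intro k hk
    rw [Polynomial.coeff_eq_zero_of_natDegree_lt (by simpa using hk), zero_mul]
  have hPnorm : Summable (fun k : ℕ => ‖P.coeff k * z^k‖) := by
    apply summable_of_ne_finset_zero (s := Finset.range (P.natDegree+1))
    intro k hk; rw [hPvan k hk, norm_zero]
  have hwnorm : Summable (fun n : ℕ => ‖c n * z^n‖) := by
    refine (summable_coef_mul_pow hm (by linarith) hb0 ‖z‖ (norm_nonneg z)).congr fun n => ?_
    rw [norm_mul, norm_pow]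
  have hPsum : ∑' (k : ℕ), P.coeff k * z^k = P.eval z := by
    rw [tsum_eq_sum (s := Finset.range (P.natDegree+1)) hPvan, Polynomial.eval_eq_sum_range]
  have hcauchy : P.eval z * w z
      = ∑' (n : ℕ), ∑ k ∈ Finset.range (n+1), (P.coeff k * z^k) * (c (n-k) * z^(n-k)) := by
    rw [← hPsum, hw_def]
    exact tsum_mul_tsum_eq_tsum_sum_range_of_summable_norm hPnorm hwnorm
  have hinner : ∀ n : ℕ, ∑ k ∈ Finset.range (n+1), (P.coeff k * z^k) * (c (n-k) * z^(n-k))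
      = (∑ k ∈ Finset.range (n+1), P.coeff k * c (n-k)) * z^n := by
    intro n
    rw [Finset.sum_mul]
    refine Finset.sum_congr rfl fun k hk => ?_
    rw [Finset.mem_range] at hk
    have hzz : z^k * z^(n-k) = z^n := by
      rw [← pow_add]
      congr 1
      omega
    calc (P.coeff k * z^k) * (c (n-k) * z^(n-k)) = P.coeff k * c (n-k) * (z^k * z^(n-k)) := by ring
      _ = P.coeff k * c (n-k) * z^n := by rw [hzz]
  have hc2eq : ∀ n : ℕ, c2 n = -∑ k ∈ Finset.range (n+1), P.coeff k * c (n-k) := by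
    intro n
    have hrec := odeCoef_rec P a b n
    rw [← hc_def] at hrec
    rw [hc2_def, hc1_def, ← hrec]
    push_cast
    ring
  have hfinal : w2 z = -(P.eval z * w z) := by
    rw [hw2_def]
    show (∑' (n : ℕ), c2 n * z^n) = -(P.eval z * w z)
    rw [hcauchy, ← tsum_neg]
    refine tsum_congr fun n => ?_
    rw [hinner n, hc2eq n]
    ring
  rw [hfinal]
  ring


lemma entire_ode_zero (P : Polynomial ℂ) (v : ℂ → ℂ) (hdiff : Differentiable ℂ v)
    (h0 : v 0 = 0) (h1 : deriv v 0 = 0)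
    (hode : ∀ z, iteratedDeriv 2 v z + P.eval z * v z = 0) : ∀ z, v z = 0 := by
  have hdv : Differentiable ℂ (deriv v) := by
    have ha : AnalyticOnNhd ℂ v Set.univ := analyticOnNhd_univ_iff_differentiable.mpr hdiff
    have := ha.deriv
    rw [← analyticOnNhd_univ_iff_differentiable]
    exact this
  have hiter : ∀ ζ, deriv (deriv v) ζ = -(P.eval ζ * v ζ) := by
    intro ζ
    have h := hode ζ
    have h2 : iteratedDeriv 2 v = deriv (deriv v) := by
      rw [iteratedDeriv_succ, iteratedDeriv_one]
    rw [h2] at h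
    linear_combination h
  intro z
  -- bound for the polynomial on the segment
  obtain ⟨C0, hC0⟩ := (isCompact_Icc (a := (-2:ℝ)) (b := 2)).exists_bound_of_continuousOn
    (f := fun t : ℝ => P.eval ((t:ℂ)*z))
    (((P.continuous).comp (Complex.continuous_ofReal.mul continuous_const)).continuousOn)
  set M : ℝ := max C0 0 with hM_def
  have hM0 : 0 ≤ M := le_max_right _ _
  have hMb : ∀ t : ℝ, t ∈ Icc (-2:ℝ) 2 → ‖P.eval ((t:ℂ)*z)‖ ≤ M :=
    fun t ht => le_trans (hC0 t ht) (le_max_left _ _)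
  set τ : ℝ → ℝ := fun t => max (-2) (min 2 t) with hτ_def
  have hτmem : ∀ t, τ t ∈ Icc (-2:ℝ) 2 := by
    intro t
    constructor
    · exact le_max_left _ _
    · rw [hτ_def]
      simp only [max_le_iff]
      constructor
      · norm_num
      · exact min_le_left _ _
  have hτeq : ∀ t ∈ Ioo (-2:ℝ) 2, τ t = t := by
    intro t ht
    rw [hτ_def]
    simp only []
    rw [min_eq_right ht.2.le, max_eq_right ht.1.le]
  set K : NNReal := Real.toNNReal (‖z‖ * (1 + M)) with hK_def
  have hKge : ∀ r : ℝ, 0 ≤ r → r ≤ ‖z‖ * (1 + M) → r ≤ (K:ℝ) := by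
    intro r h0r h1r
    rw [hK_def, Real.coe_toNNReal _ (by positivity)]
    exact h1r
  set V : ℝ → ℂ × ℂ → ℂ × ℂ := fun t p => (z * p.2, -(z * P.eval (((τ t : ℝ):ℂ) * z)) * p.1)
    with hV_def
  have hlip : ∀ t, LipschitzWith K (V t) := by
    intro t
    rw [lipschitzWith_iff_dist_le_mul]
    intro p q
    rw [hV_def]
    simp only [Prod.dist_eq]
    rw [max_le_iff]
    have hd1 : dist (z * p.2) (z * q.2) = ‖z‖ * dist p.2 q.2 := by
      rw [dist_eq_norm, dist_eq_norm, ← mul_sub, norm_mul]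
    have hd2 : dist (-(z * P.eval (((τ t : ℝ):ℂ) * z)) * p.1) (-(z * P.eval (((τ t : ℝ):ℂ) * z)) * q.1)
        = ‖z * P.eval (((τ t : ℝ):ℂ) * z)‖ * dist p.1 q.1 := by
      rw [dist_eq_norm, dist_eq_norm, ← mul_sub, norm_mul, norm_neg]
    have hfst : dist p.1 q.1 ≤ dist p q := le_max_left _ _
    have hsnd : dist p.2 q.2 ≤ dist p q := le_max_right _ _
    have hdist0 : 0 ≤ dist p q := dist_nonneg
    constructor
    · rw [hd1]
      calc ‖z‖ * dist p.2 q.2 ≤ (‖z‖ * (1+M)) * dist p q := by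
            nlinarith [mul_le_mul_of_nonneg_left hsnd (norm_nonneg z),
              mul_nonneg (mul_nonneg (norm_nonneg z) hdist0) hM0]
        _ ≤ (K:ℝ) * dist p q := by
            refine mul_le_mul_of_nonneg_right (hKge _ (by positivity) le_rfl) hdist0
    · rw [hd2]
      have hPM : ‖z * P.eval (((τ t : ℝ):ℂ) * z)‖ ≤ ‖z‖ * (1+M) := by
        rw [norm_mul]
        have := hMb (τ t) (hτmem t)
        nlinarith [norm_nonneg z, norm_nonneg (P.eval (((τ t : ℝ):ℂ) * z))]
      calc ‖z * P.eval (((τ t : ℝ):ℂ) * z)‖ * dist p.1 q.1 ≤ (‖z‖*(1+M)) * dist p q :=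
            mul_le_mul hPM hfst dist_nonneg (by positivity)
        _ ≤ (K:ℝ) * dist p q :=
            mul_le_mul_of_nonneg_right (hKge _ (by positivity) le_rfl) hdist0
  set y : ℝ → ℂ × ℂ := fun t => (v ((t:ℂ)*z), deriv v ((t:ℂ)*z)) with hy_def
  have hy : ∀ t ∈ Ioo (-2:ℝ) 2, HasDerivAt y (V t (y t)) t := by
    intro t ht
    have hmul : HasDerivAt (fun s : ℝ => ((s:ℂ)) * z) z t := by
      have h := (Complex.ofRealCLM.hasDerivAt (x := t)).mul_const z
      simpa using h
    have hcomp1 : HasDerivAt (fun s : ℝ => v ((s:ℂ)*z)) (z • deriv v ((t:ℂ)*z)) t :=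
      HasDerivAt.scomp t (hdiff ((t:ℂ)*z)).hasDerivAt hmul
    have hcomp2 : HasDerivAt (fun s : ℝ => deriv v ((s:ℂ)*z)) (z • deriv (deriv v) ((t:ℂ)*z)) t :=
      HasDerivAt.scomp (g₁ := deriv v) t (hdv ((t:ℂ)*z)).hasDerivAt hmul
    have hy' := hcomp1.prodMk hcomp2
    rw [hy_def, hV_def]
    convert hy' using 1
    simp only []
    refine Prod.ext ?_ ?_
    · simp [smul_eq_mul]
    · simp only [smul_eq_mul]
      rw [hiter ((t:ℂ)*z), hτeq t ht]
      ring
  have hzero : ∀ t ∈ Ioo (-2:ℝ) 2, HasDerivAt (fun _ : ℝ => ((0:ℂ),(0:ℂ)))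
      (V t ((0:ℂ),(0:ℂ))) t := by
    intro t ht
    have : V t ((0:ℂ),(0:ℂ)) = ((0:ℂ),(0:ℂ)) := by
      rw [hV_def]; simp
    rw [this]
    exact hasDerivAt_const t _
  have heq0 : y 0 = ((0:ℂ),(0:ℂ)) := by
    rw [hy_def]
    simp [h0, h1]
  have := ODE_solution_unique_of_mem_Ioo (v := V) (K := K) (s := fun _ => Set.univ)
    (f := y) (g := fun _ => ((0:ℂ),(0:ℂ))) (t₀ := (0:ℝ)) (a := (-2:ℝ)) (b := (2:ℝ))
    (fun t _ => (hlip t).lipschitzOnWith)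
    (by norm_num)
    (fun t ht => ⟨hy t ht, trivial⟩)
    (fun t ht => ⟨hzero t ht, trivial⟩)
    heq0
  have h1mem : (1:ℝ) ∈ Ioo (-2:ℝ) 2 := by norm_num
  have := this h1mem
  rw [hy_def] at this
  have hfst := congrArg Prod.fst this
  simpa using hfst

end ODEHelpers

/-- Every initial value problem for `w'' + P·w = 0` has a unique entire solution. -/
theorem stmt_13 (P : Polynomial ℂ) (a b : ℂ) :
    ∃! w : ℂ → ℂ,
      Differentiable ℂ w ∧ w 0 = a ∧ deriv w 0 = b ∧
        ∀ z : ℂ, iteratedDeriv 2 w z + P.eval z * w z = 0 := by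
  obtain ⟨w, hw⟩ := existence P a b
  refine ⟨w, hw, ?_⟩
  rintro u ⟨hud, hu0, hud0, huode⟩
  obtain ⟨hwd, hw0, hwd0, hwode⟩ := hw
  have h2 : ∀ f : ℂ → ℂ, iteratedDeriv 2 f = deriv (deriv f) := by
    intro f; rw [iteratedDeriv_succ, iteratedDeriv_one]
  have hdv : deriv (fun y => u y - w y) = fun y => deriv u y - deriv w y :=
    funext fun y => deriv_sub (hud y) (hwd y)
  have hvode : ∀ z, iteratedDeriv 2 (fun y => u y - w y) z
      + P.eval z * ((fun y => u y - w y) z) = 0 := by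
    intro z
    rw [h2, hdv, deriv_fun_sub ((deriv_entire hud) z) ((deriv_entire hwd) z)]
    have h3 := huode z
    have h4 := hwode z
    rw [h2 u] at h3
    rw [h2 w] at h4
    simp only []
    linear_combination h3 - h4
  have hzero := entire_ode_zero P (fun y => u y - w y) (hud.sub hwd)
    (by simp [hu0, hw0]) (by rw [hdv]; simp [hud0, hwd0]) hvode
  funext z
  have := hzero z
  exact sub_eq_zero.mp this
end

section
/- Let P be a real polynomial over ℂ (all coefficients real) and let a, b ∈ ℝ. Then there exists an entire function w : ℂ → ℂ with w(0) = a, w'(0) = b, satisfying w''(z) + P(z)·w(z) = 0 for all z ∈ ℂ, which is a real solution in the sense that conj(w(conj z)) = w(z) for all z ∈ ℂ (in particular w takes real values on the real axis). -/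
open Complex Polynomial Finset

noncomputable def sc14 (P : Polynomial ℂ) (a b : ℝ) : ℕ → ℂ
  | 0 => (a : ℂ)
  | 1 => (b : ℂ)
  | (n+2) => -(∑ k ∈ Finset.range (n+1), P.coeff k * sc14 P a b (n-k)) /
      (((n:ℂ)+1)*((n:ℂ)+2))

lemma sc14_rec (P : Polynomial ℂ) (a b : ℝ) (n : ℕ) :
    (((n:ℂ)+1)*((n:ℂ)+2)) * sc14 P a b (n+2)
      = -(∑ k ∈ Finset.range (n+1), P.coeff k * sc14 P a b (n-k)) := by
  have hce : (((n:ℂ)+1)*((n:ℂ)+2)) = (((n+1)*(n+2) : ℕ) : ℂ) := by push_cast; ring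
  have hne : (((n:ℂ)+1)*((n:ℂ)+2)) ≠ 0 := by
    rw [hce]
    exact Nat.cast_ne_zero.2 (Nat.mul_ne_zero (Nat.succ_ne_zero _) (Nat.succ_ne_zero _))
  rw [sc14]
  rw [mul_div_assoc', mul_div_cancel_left₀ _ hne]

lemma sc14_norm (P : Polynomial ℂ) (a b : ℝ) (n : ℕ) :
    ‖sc14 P a b (n+2)‖ =
    ‖∑ k ∈ Finset.range (n+1), P.coeff k * sc14 P a b (n-k)‖ / (((n:ℝ)+1)*((n:ℝ)+2)) := by
  rw [sc14, norm_div, norm_neg]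
  congr 1
  have h : (((n:ℂ)+1)*((n:ℂ)+2)) = (((n+1)*(n+2) : ℕ) : ℂ) := by push_cast; ring
  rw [h, Complex.norm_natCast]
  push_cast; ring

lemma sc14_bound (P : Polynomial ℂ) (a b : ℝ) (r : ℝ) (hr : 1 ≤ r) :
    ∃ C : ℝ, 0 ≤ C ∧ ∀ n, ‖sc14 P a b n‖ * r ^ n ≤ C := by
  set d := P.natDegree with hd
  set M := ∑ k ∈ Finset.range (d+1), ‖P.coeff k‖ with hM
  have hM0 : 0 ≤ M := Finset.sum_nonneg fun _ _ => norm_nonneg _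
  have hcoeff : ∀ k, ‖P.coeff k‖ ≤ M := by
    intro k
    rcases le_or_gt k d with h | h
    · exact Finset.single_le_sum (f := fun k => ‖P.coeff k‖) (fun _ _ => norm_nonneg _)
        (Finset.mem_range.2 (Nat.lt_succ_of_le h))
    · rw [Polynomial.coeff_eq_zero_of_natDegree_lt h]; simpa using hM0
  have hr0 : (0:ℝ) < r := lt_of_lt_of_le one_pos hr
  set K0 : ℝ := ((d:ℝ)+1) * M * r^(d+2) with hK0
  set N : ℕ := ⌈K0⌉₊ with hN
  set C : ℝ := ∑ j ∈ Finset.range (N+2), ‖sc14 P a b j‖ * r ^ j with hC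
  have hC0 : 0 ≤ C := Finset.sum_nonneg fun _ _ => by positivity
  refine ⟨C, hC0, ?_⟩
  intro n
  induction n using Nat.strong_induction_on with
  | _ n ih =>
    rcases lt_or_ge n (N+2) with h | h
    · exact Finset.single_le_sum (f := fun j => ‖sc14 P a b j‖ * r ^ j)
        (fun _ _ => by positivity) (Finset.mem_range.2 h)
    · obtain ⟨m, rfl⟩ : ∃ m, n = m + 2 := ⟨n - 2, by omega⟩
      have hmN : N ≤ m := by omega
      have hsum : ‖∑ k ∈ Finset.range (m+1), P.coeff k * sc14 P a b (m-k)‖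
          ≤ ((d:ℝ)+1) * (M * C * r^d / r^m) := by
        have B0 : (0:ℝ) ≤ M * C * r ^ d / r ^ m := by positivity
        calc ‖∑ k ∈ Finset.range (m+1), P.coeff k * sc14 P a b (m-k)‖
            ≤ ∑ k ∈ Finset.range (m+1), ‖P.coeff k * sc14 P a b (m-k)‖ := norm_sum_le _ _
          _ ≤ ∑ k ∈ Finset.range (m+1), (if k ≤ d then M * C * r^d / r^m else 0) := by
              apply Finset.sum_le_sum
              intro k hk
              rw [Finset.mem_range] at hk
              rcases le_or_gt k d with hkd | hkd
              · rw [if_pos hkd, norm_mul]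
                have h1 : ‖sc14 P a b (m-k)‖ ≤ C / r^(m-k) := by
                  rw [le_div_iff₀ (by positivity)]
                  exact ih (m-k) (by omega)
                have hexp : r^m ≤ r^d * r^(m-k) := by
                  rw [← pow_add]; exact pow_le_pow_right₀ hr (by omega)
                calc ‖P.coeff k‖ * ‖sc14 P a b (m-k)‖
                    ≤ M * (C / r^(m-k)) :=
                      mul_le_mul (hcoeff k) h1 (norm_nonneg _) hM0
                  _ ≤ M * C * r^d / r^m := by
                      rw [mul_div_assoc', div_le_div_iff₀ (by positivity) (by positivity)]
                      nlinarith [mul_le_mul_of_nonneg_left hexp (mul_nonneg hM0 hC0)]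
              · rw [if_neg (not_le.2 hkd), Polynomial.coeff_eq_zero_of_natDegree_lt hkd]
                simp
          _ ≤ ((d:ℝ)+1) * (M * C * r^d / r^m) := by
              rw [← Finset.sum_filter, Finset.sum_const, nsmul_eq_mul]
              have hcard : ((Finset.range (m+1)).filter (· ≤ d)).card ≤ d + 1 := by
                have hsub : (Finset.range (m+1)).filter (· ≤ d) ⊆ Finset.range (d+1) := by
                  intro x hx
                  rw [Finset.mem_filter, Finset.mem_range] at hx
                  rw [Finset.mem_range]; omega
                simpa using Finset.card_le_card hsub
              have : (((Finset.range (m+1)).filter (· ≤ d)).card : ℝ) ≤ (d:ℝ)+1 := by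
                exact_mod_cast hcard
              exact mul_le_mul_of_nonneg_right this B0
      calc ‖sc14 P a b (m+2)‖ * r^(m+2)
          = (‖∑ k ∈ Finset.range (m+1), P.coeff k * sc14 P a b (m-k)‖
              / (((m:ℝ)+1)*((m:ℝ)+2))) * r^(m+2) := by rw [sc14_norm]
        _ ≤ ((((d:ℝ)+1) * (M * C * r^d / r^m)) / (((m:ℝ)+1)*((m:ℝ)+2))) * r^(m+2) := by
            gcongr
        _ = K0 * C / (((m:ℝ)+1)*((m:ℝ)+2)) := by
            rw [hK0]
            have e1 : r^(m+2) = r^m * r^2 := pow_add r m 2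
            have e2 : r^(d+2) = r^d * r^2 := pow_add r d 2
            field_simp [e1, e2]
            ring
        _ ≤ C := by
            rw [div_le_iff₀ (by positivity)]
            have h1 : K0 ≤ (N:ℝ) := Nat.le_ceil K0
            have h2 : ((N:ℝ)) ≤ (m:ℝ) := by exact_mod_cast hmN
            have h3 : K0 ≤ ((m:ℝ)+1)*((m:ℝ)+2) := by
              nlinarith [Nat.cast_nonneg (α := ℝ) m]
            nlinarith [mul_le_mul_of_nonneg_right h3 hC0]

lemma sc14_summable_aux (P : Polynomial ℂ) (a b : ℝ) (k : ℕ) (x : ℝ) (hx : 0 ≤ x) :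
    Summable (fun n : ℕ => (n:ℝ)^k * (‖sc14 P a b n‖ * x^n)) := by
  obtain ⟨C, hC0, hC⟩ := sc14_bound P a b (x+2) (by linarith)
  have hx2 : (0:ℝ) < x + 2 := by linarith
  have hlt : ‖x/(x+2)‖ < 1 := by
    rw [Real.norm_eq_abs, _root_.abs_of_nonneg (by positivity : (0:ℝ) ≤ x/(x+2)),
      div_lt_one hx2]
    linarith
  refine Summable.of_nonneg_of_le (fun n => by positivity) (fun n => ?_)
    ((summable_pow_mul_geometric_of_norm_lt_one k hlt).mul_left C)
  have e : (x+2)^n * (x/(x+2))^n = x^n := by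
    rw [← mul_pow]; congr 1; field_simp
  have key : ‖sc14 P a b n‖ * x^n ≤ C * (x/(x+2))^n := by
    rw [← e, ← mul_assoc]
    exact mul_le_mul_of_nonneg_right (hC n) (by positivity)
  calc (n:ℝ)^k * (‖sc14 P a b n‖ * x^n) ≤ (n:ℝ)^k * (C * (x/(x+2))^n) :=
        mul_le_mul_of_nonneg_left key (by positivity)
    _ = C * ((n:ℝ)^k * (x/(x+2))^n) := by ring

noncomputable def w14 (P : Polynomial ℂ) (a b : ℝ) (z : ℂ) : ℂ :=
  ∑' n, sc14 P a b n * z ^ n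

noncomputable def w14' (P : Polynomial ℂ) (a b : ℝ) (z : ℂ) : ℂ :=
  ∑' n, sc14 P a b (n+1) * (((n:ℂ)+1) * z ^ n)

noncomputable def w14'' (P : Polynomial ℂ) (a b : ℝ) (z : ℂ) : ℂ :=
  ∑' n, sc14 P a b (n+2) * ((((n:ℂ)+1)*((n:ℂ)+2)) * z ^ n)

lemma summable0 (P : Polynomial ℂ) (a b : ℝ) (z : ℂ) :
    Summable (fun n => sc14 P a b n * z ^ n) := by
  have h0 : Summable (fun n => ‖sc14 P a b n‖ * ‖z‖^n) := by
    simpa using sc14_summable_aux P a b 0 ‖z‖ (norm_nonneg z)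
  apply Summable.of_norm
  simp only [norm_mul, norm_pow]
  exact h0

lemma summable1 (P : Polynomial ℂ) (a b : ℝ) (z : ℂ) :
    Summable (fun n => sc14 P a b (n+1) * (((n:ℂ)+1) * z ^ n)) := by
  have h : Summable (fun n : ℕ => ((n:ℝ)+1)^1 * (‖sc14 P a b (n+1)‖ * (‖z‖+1)^(n+1))) := by
    have h0 := (summable_nat_add_iff 1).2
      (sc14_summable_aux P a b 1 (‖z‖+1) (by positivity))
    exact h0.congr (fun n => by push_cast; ring)
  refine Summable.of_norm_bounded h (fun n => ?_)
  have h1 : ‖z‖ ^ n ≤ (‖z‖+1) ^ (n+1) := by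
    calc ‖z‖ ^ n ≤ (‖z‖+1) ^ n := pow_le_pow_left₀ (norm_nonneg z) (by linarith) n
      _ ≤ (‖z‖+1) ^ (n+1) := pow_le_pow_right₀ (by linarith [norm_nonneg z]) (by omega)
  have h2 : ‖((n:ℂ)+1)‖ = (n:ℝ)+1 := by
    rw [show ((n:ℂ)+1) = (((n+1):ℕ):ℂ) by push_cast; ring, Complex.norm_natCast]
    push_cast; ring
  rw [norm_mul, norm_mul, norm_pow, h2]
  calc ‖sc14 P a b (n+1)‖ * (((n:ℝ)+1) * ‖z‖^n)
      ≤ ‖sc14 P a b (n+1)‖ * (((n:ℝ)+1) * (‖z‖+1)^(n+1)) := by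
        apply mul_le_mul_of_nonneg_left _ (norm_nonneg _)
        exact mul_le_mul_of_nonneg_left h1 (by positivity)
    _ = ((n:ℝ)+1)^1 * (‖sc14 P a b (n+1)‖ * (‖z‖+1)^(n+1)) := by ring

lemma summable2 (P : Polynomial ℂ) (a b : ℝ) (z : ℂ) :
    Summable (fun n => sc14 P a b (n+2) * ((((n:ℂ)+1)*((n:ℂ)+2)) * z ^ n)) := by
  have h : Summable (fun n : ℕ => ((n:ℝ)+2)^2 * (‖sc14 P a b (n+2)‖ * (‖z‖+1)^(n+2))) := by
    have h0 := (summable_nat_add_iff 2).2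
      (sc14_summable_aux P a b 2 (‖z‖+1) (by positivity))
    exact h0.congr (fun n => by push_cast; ring)
  refine Summable.of_norm_bounded h (fun n => ?_)
  have h1 : ‖z‖ ^ n ≤ (‖z‖+1) ^ (n+2) := by
    calc ‖z‖ ^ n ≤ (‖z‖+1) ^ n := pow_le_pow_left₀ (norm_nonneg z) (by linarith) n
      _ ≤ (‖z‖+1) ^ (n+2) := pow_le_pow_right₀ (by linarith [norm_nonneg z]) (by omega)
  have h2 : ‖(((n:ℂ)+1)*((n:ℂ)+2))‖ = ((n:ℝ)+1)*((n:ℝ)+2) := by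
    rw [show (((n:ℂ)+1)*((n:ℂ)+2)) = ((((n+1)*(n+2)):ℕ):ℂ) by push_cast; ring,
      Complex.norm_natCast]
    push_cast; ring
  rw [norm_mul, norm_mul, norm_pow, h2]
  have hn0 : (0:ℝ) ≤ (n:ℝ) := Nat.cast_nonneg n
  calc ‖sc14 P a b (n+2)‖ * ((((n:ℝ)+1)*((n:ℝ)+2)) * ‖z‖^n)
      ≤ ‖sc14 P a b (n+2)‖ * ((((n:ℝ)+2)*((n:ℝ)+2)) * (‖z‖+1)^(n+2)) := by
        apply mul_le_mul_of_nonneg_left _ (norm_nonneg _)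
        have h3 : (((n:ℝ)+1)*((n:ℝ)+2)) * ‖z‖^n ≤ (((n:ℝ)+1)*((n:ℝ)+2)) * (‖z‖+1)^(n+2) :=
          mul_le_mul_of_nonneg_left h1 (by positivity)
        have h4 : (((n:ℝ)+1)*((n:ℝ)+2)) * (‖z‖+1)^(n+2)
            ≤ (((n:ℝ)+2)*((n:ℝ)+2)) * (‖z‖+1)^(n+2) := by
          apply mul_le_mul_of_nonneg_right _ (by positivity)
          nlinarith
        linarith
    _ = ((n:ℝ)+2)^2 * (‖sc14 P a b (n+2)‖ * (‖z‖+1)^(n+2)) := by ring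

lemma hasDerivAt_w14 (P : Polynomial ℂ) (a b : ℝ) (z : ℂ) :
    HasDerivAt (w14 P a b) (w14' P a b z) z := by
  set R : ℝ := ‖z‖ + 1 with hR
  have hR1 : (1:ℝ) ≤ R := by rw [hR]; linarith [norm_nonneg z]
  have hR0 : (0:ℝ) < R := by linarith
  have hu : Summable (fun n : ℕ => (n:ℝ) * (‖sc14 P a b n‖ * R^n)) := by
    simpa using sc14_summable_aux P a b 1 R (le_of_lt hR0)
  have key : HasDerivAt (fun y => ∑' n, sc14 P a b n * y ^ n)
      (∑' n, sc14 P a b n * ((n:ℂ) * z ^ (n-1))) z := by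
    apply hasDerivAt_tsum_of_isPreconnected
      (g := fun (n : ℕ) (y : ℂ) => sc14 P a b n * y ^ n)
      (g' := fun (n : ℕ) (y : ℂ) => sc14 P a b n * ((n:ℂ) * y ^ (n-1)))
      hu (Metric.isOpen_ball)
      ((convex_ball (0:ℂ) R).isPreconnected)
      (fun n y _ => (hasDerivAt_pow n y).const_mul (sc14 P a b n))
      (fun n y hy => ?_) (Metric.mem_ball_self hR0) (summable0 P a b 0)
      (by simp only [Metric.mem_ball, dist_zero_right, hR]; linarith)
    · rw [Metric.mem_ball, dist_zero_right] at hy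
      rw [norm_mul, norm_mul, norm_pow, Complex.norm_natCast]
      have h1 : ‖y‖ ^ (n-1) ≤ R ^ n := by
        calc ‖y‖ ^ (n-1) ≤ R ^ (n-1) := pow_le_pow_left₀ (norm_nonneg y) (le_of_lt hy) _
          _ ≤ R ^ n := pow_le_pow_right₀ hR1 (Nat.sub_le n 1)
      calc ‖sc14 P a b n‖ * ((n:ℝ) * ‖y‖^(n-1))
          ≤ ‖sc14 P a b n‖ * ((n:ℝ) * R^n) := by
            apply mul_le_mul_of_nonneg_left _ (norm_nonneg _)
            exact mul_le_mul_of_nonneg_left h1 (Nat.cast_nonneg n)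
        _ = (n:ℝ) * (‖sc14 P a b n‖ * R^n) := by ring
  have heq : (∑' n, sc14 P a b n * ((n:ℂ) * z ^ (n-1))) = w14' P a b z := by
    have htail : Summable (fun n : ℕ =>
        sc14 P a b (n+1) * (((n+1:ℕ):ℂ) * z ^ ((n+1)-1))) :=
      (summable1 P a b z).congr (fun n => by
        simp only [Nat.add_sub_cancel]; push_cast; ring)
    rw [tsum_eq_zero_add' (f := fun n => sc14 P a b n * ((n:ℂ) * z ^ (n-1))) htail]
    simp only [Nat.cast_zero, zero_mul, mul_zero, zero_add]
    rw [w14']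
    apply tsum_congr
    intro n
    simp only [Nat.add_sub_cancel]
    push_cast
    ring
  rw [← heq]
  exact key

lemma hasDerivAt_w14' (P : Polynomial ℂ) (a b : ℝ) (z : ℂ) :
    HasDerivAt (w14' P a b) (w14'' P a b z) z := by
  set R : ℝ := ‖z‖ + 1 with hR
  have hR1 : (1:ℝ) ≤ R := by rw [hR]; linarith [norm_nonneg z]
  have hR0 : (0:ℝ) < R := by linarith
  have hu : Summable (fun n : ℕ => ((n:ℝ)+1)^2 * (‖sc14 P a b (n+1)‖ * R^(n+1))) := by
    have h0 := (summable_nat_add_iff 1).2 (sc14_summable_aux P a b 2 R (le_of_lt hR0))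
    exact h0.congr (fun n => by push_cast; ring)
  have key : HasDerivAt (fun y => ∑' n, sc14 P a b (n+1) * (((n:ℂ)+1) * y ^ n))
      (∑' n, sc14 P a b (n+1) * (((n:ℂ)+1) * ((n:ℂ) * z ^ (n-1)))) z := by
    apply hasDerivAt_tsum_of_isPreconnected
      (g := fun (n : ℕ) (y : ℂ) => sc14 P a b (n+1) * (((n:ℂ)+1) * y ^ n))
      (g' := fun (n : ℕ) (y : ℂ) => sc14 P a b (n+1) * (((n:ℂ)+1) * ((n:ℂ) * y ^ (n-1))))
      hu (Metric.isOpen_ball)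
      ((convex_ball (0:ℂ) R).isPreconnected)
      (fun n y _ => ((hasDerivAt_pow n y).const_mul ((n:ℂ)+1)).const_mul (sc14 P a b (n+1)))
      (fun n y hy => ?_) (Metric.mem_ball_self hR0) (summable1 P a b 0)
      (by simp only [Metric.mem_ball, dist_zero_right, hR]; linarith)
    · rw [Metric.mem_ball, dist_zero_right] at hy
      have h2 : ‖((n:ℂ)+1)‖ = (n:ℝ)+1 := by
        rw [show ((n:ℂ)+1) = (((n+1):ℕ):ℂ) by push_cast; ring, Complex.norm_natCast]
        push_cast; ring
      rw [norm_mul, norm_mul, norm_mul, norm_pow, h2, Complex.norm_natCast]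
      have h1 : ‖y‖ ^ (n-1) ≤ R ^ (n+1) := by
        calc ‖y‖ ^ (n-1) ≤ R ^ (n-1) := pow_le_pow_left₀ (norm_nonneg y) (le_of_lt hy) _
          _ ≤ R ^ (n+1) := pow_le_pow_right₀ hR1 (by omega)
      have hn0 : (0:ℝ) ≤ (n:ℝ) := Nat.cast_nonneg n
      have hsc : (0:ℝ) ≤ ‖sc14 P a b (n+1)‖ := norm_nonneg _
      calc ‖sc14 P a b (n+1)‖ * (((n:ℝ)+1) * ((n:ℝ) * ‖y‖^(n-1)))
          ≤ ‖sc14 P a b (n+1)‖ * (((n:ℝ)+1) * (((n:ℝ)+1) * R^(n+1))) := by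
            apply mul_le_mul_of_nonneg_left _ hsc
            apply mul_le_mul_of_nonneg_left _ (by positivity)
            have := mul_le_mul_of_nonneg_left h1 hn0
            nlinarith [pow_nonneg (le_of_lt hR0) (n+1)]
        _ = ((n:ℝ)+1)^2 * (‖sc14 P a b (n+1)‖ * R^(n+1)) := by ring
  have heq : (∑' n, sc14 P a b (n+1) * (((n:ℂ)+1) * ((n:ℂ) * z ^ (n-1)))) = w14'' P a b z := by
    have htail : Summable (fun n : ℕ =>
        sc14 P a b ((n+1)+1) * ((((n+1:ℕ):ℂ)+1) * (((n+1:ℕ):ℂ) * z ^ ((n+1)-1)))) :=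
      (summable2 P a b z).congr (fun n => by
        simp only [Nat.add_sub_cancel]; push_cast; ring)
    rw [tsum_eq_zero_add'
      (f := fun n => sc14 P a b (n+1) * (((n:ℂ)+1) * ((n:ℂ) * z ^ (n-1)))) htail]
    simp only [Nat.cast_zero, zero_mul, mul_zero, zero_add]
    rw [w14'']
    apply tsum_congr
    intro n
    simp only [Nat.add_sub_cancel]
    push_cast
    ring
  rw [← heq]
  exact key

lemma w14_ode (P : Polynomial ℂ) (a b : ℝ) (z : ℂ) :
    w14'' P a b z + P.eval z * w14 P a b z = 0 := by
  set d := P.natDegree with hd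
  set h : ℕ → ℕ → ℂ := fun k m =>
    if k ≤ m then P.coeff k * sc14 P a b (m-k) * z^m else 0 with hh
  have hcomp : ∀ k n, h k (n + k) = P.coeff k * sc14 P a b n * z^(n+k) := by
    intro k n
    simp only [hh, if_pos (Nat.le_add_left k n), Nat.add_sub_cancel]
  have hsumm : ∀ k, Summable (h k) := by
    intro k
    have hinj : Function.Injective (fun n : ℕ => n + k) := add_left_injective k
    have hsupp : ∀ m, m ∉ Set.range (fun n : ℕ => n + k) → h k m = 0 := by
      intro m hm
      rw [hh]
      simp only
      rw [if_neg]
      intro hkm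
      exact hm ⟨m - k, show m - k + k = m by omega⟩
    rw [← Function.Injective.summable_iff hinj hsupp]
    have h5 : Summable (fun n : ℕ => (P.coeff k * z^k) * (sc14 P a b n * z^n)) :=
      (summable0 P a b z).mul_left _
    exact h5.congr (fun n => show _ = h k (n+k) by rw [hcomp, pow_add]; ring)
  have hreindex : ∀ k, (∑' n, P.coeff k * sc14 P a b n * z^(n+k)) = ∑' m, h k m := by
    intro k
    have hinj : Function.Injective (fun n : ℕ => n + k) := add_left_injective k
    have hsupp : Function.support (h k) ⊆ Set.range (fun n : ℕ => n + k) := by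
      intro m hm
      by_contra hc
      apply hm
      rw [hh]
      simp only
      rw [if_neg]
      intro hkm
      exact hc ⟨m - k, show m - k + k = m by omega⟩
    have h6 := Function.Injective.tsum_eq hinj (f := h k) hsupp
    rw [← h6]
    apply tsum_congr
    intro n
    exact (hcomp k n).symm
  have hPw : P.eval z * w14 P a b z
      = ∑' m, (∑ k ∈ Finset.range (d+1), h k m) := by
    rw [Polynomial.eval_eq_sum_range, Finset.sum_mul, ← hd]
    have hterm : ∀ k, P.coeff k * z^k * w14 P a b z = ∑' m, h k m := by
      intro k
      rw [w14, ← tsum_mul_left, ← hreindex k]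
      apply tsum_congr
      intro n
      rw [pow_add]; ring
    rw [Finset.sum_congr rfl (fun k _ => hterm k)]
    exact (Summable.tsum_finsetSum (fun k _ => hsumm k)).symm
  have hinner : ∀ m, (∑ k ∈ Finset.range (d+1), h k m)
      = (∑ k ∈ Finset.range (m+1), P.coeff k * sc14 P a b (m-k)) * z^m := by
    intro m
    have e1 : ∑ k ∈ Finset.range (d+1), h k m = ∑ k ∈ Finset.range (d+m+1), h k m := by
      apply Finset.sum_subset
      · intro x hx
        rw [Finset.mem_range] at hx ⊢
        omega
      · intro x _ hx
        rw [Finset.mem_range] at hx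
        rw [hh]
        simp only
        rcases le_or_gt x m with hxm | hxm
        · rw [if_pos hxm, Polynomial.coeff_eq_zero_of_natDegree_lt (by omega)]
          ring
        · rw [if_neg (not_le.2 hxm)]
    have e2 : ∑ k ∈ Finset.range (m+1), P.coeff k * sc14 P a b (m-k) * z^m
        = ∑ k ∈ Finset.range (m+1), h k m := by
      apply Finset.sum_congr rfl
      intro k hk
      rw [Finset.mem_range] at hk
      rw [hh]
      simp only
      rw [if_pos (by omega)]
    have e3 : ∑ k ∈ Finset.range (m+1), h k m = ∑ k ∈ Finset.range (d+m+1), h k m := by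
      apply Finset.sum_subset
      · intro x hx
        rw [Finset.mem_range] at hx ⊢
        omega
      · intro x _ hx
        rw [Finset.mem_range] at hx
        rw [hh]
        simp only
        rw [if_neg (by omega)]
    rw [e1, ← e3, ← e2, Finset.sum_mul]
  have hPw2 : P.eval z * w14 P a b z
      = ∑' m, (∑ k ∈ Finset.range (m+1), P.coeff k * sc14 P a b (m-k)) * z^m := by
    rw [hPw]
    exact tsum_congr hinner
  have hPsumm : Summable (fun m =>
      (∑ k ∈ Finset.range (m+1), P.coeff k * sc14 P a b (m-k)) * z^m) := by
    have := summable_sum (fun k (_ : k ∈ Finset.range (d+1)) => hsumm k)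
    exact this.congr (fun m => hinner m)
  rw [hPw2, w14'']
  rw [← Summable.tsum_add (summable2 P a b z) hPsumm]
  have : ∀ n : ℕ, sc14 P a b (n+2) * ((((n:ℂ)+1)*((n:ℂ)+2)) * z^n)
      + (∑ k ∈ Finset.range (n+1), P.coeff k * sc14 P a b (n-k)) * z^n = 0 := by
    intro n
    have hrec := sc14_rec P a b n
    linear_combination z^n * hrec
  rw [tsum_congr this]
  exact tsum_zero

lemma sc14_real (P : Polynomial ℂ) (hreal : ∀ n, (P.coeff n).im = 0) (a b : ℝ) :
    ∀ n, (starRingEnd ℂ) (sc14 P a b n) = sc14 P a b n := by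
  intro n
  induction n using Nat.strong_induction_on with
  | _ n ih =>
    match n with
    | 0 => simp [sc14]
    | 1 => simp [sc14]
    | (m+2) =>
      rw [sc14, map_div₀, map_neg, map_sum]
      congr 1
      · congr 1
        apply Finset.sum_congr rfl
        intro k hk
        rw [Finset.mem_range] at hk
        rw [map_mul, ih (m-k) (by omega), Complex.conj_eq_iff_im.2 (hreal k)]
      · rw [map_mul, map_add, map_add, map_one, map_natCast]
        norm_num
        rw [Complex.conj_eq_iff_im]
        simp

lemma w14_zero (P : Polynomial ℂ) (a b : ℝ) : w14 P a b 0 = (a:ℂ) := by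
  have htail : Summable (fun n : ℕ => sc14 P a b (n+1) * (0:ℂ)^(n+1)) :=
    summable_zero.congr (fun n => by simp)
  rw [w14, tsum_eq_zero_add' (f := fun n => sc14 P a b n * (0:ℂ)^n) htail]
  simp [sc14]

lemma w14'_zero (P : Polynomial ℂ) (a b : ℝ) : w14' P a b 0 = (b:ℂ) := by
  have htail : Summable (fun n : ℕ =>
      sc14 P a b ((n+1)+1) * ((((n+1:ℕ):ℂ))+1) * (0:ℂ)^(n+1)) :=
    summable_zero.congr (fun n => by simp)
  rw [w14', tsum_eq_zero_add'
    (f := fun n => sc14 P a b (n+1) * (((n:ℂ)+1) * (0:ℂ)^n))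
    (htail.congr (fun n => by push_cast; ring))]
  simp [sc14]

lemma w14_conj (P : Polynomial ℂ) (hreal : ∀ n, (P.coeff n).im = 0) (a b : ℝ) (z : ℂ) :
    (starRingEnd ℂ) (w14 P a b ((starRingEnd ℂ) z)) = w14 P a b z := by
  rw [w14, w14]
  have h1 : (starRingEnd ℂ) (∑' n, sc14 P a b n * ((starRingEnd ℂ) z)^n)
      = ∑' n, (starRingEnd ℂ) (sc14 P a b n * ((starRingEnd ℂ) z)^n) := by
    exact tsum_star
  rw [h1]
  apply tsum_congr
  intro n
  rw [map_mul, map_pow, sc14_real P hreal a b n, Complex.conj_conj]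

/-- Real initial value problems for `w'' + P·w = 0` with real `P` are solved by real entire
functions: solutions commuting with complex conjugation. -/
theorem stmt_14 (P : Polynomial ℂ) (hreal : ∀ n, (P.coeff n).im = 0) (a b : ℝ) :
    ∃ w : ℂ → ℂ,
      Differentiable ℂ w ∧ w 0 = (a : ℂ) ∧ deriv w 0 = (b : ℂ) ∧
        (∀ z : ℂ, iteratedDeriv 2 w z + P.eval z * w z = 0) ∧
        (∀ z : ℂ, (starRingEnd ℂ) (w ((starRingEnd ℂ) z)) = w z) := by
  refine ⟨w14 P a b, ?_, w14_zero P a b, ?_, ?_, fun z => w14_conj P hreal a b z⟩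
  · exact fun z => (hasDerivAt_w14 P a b z).differentiableAt
  · rw [(hasDerivAt_w14 P a b 0).deriv]
    exact w14'_zero P a b
  · intro z
    have hderiv : deriv (w14 P a b) = w14' P a b :=
      funext fun y => (hasDerivAt_w14 P a b y).deriv
    rw [iteratedDeriv_succ, iteratedDeriv_one, hderiv, (hasDerivAt_w14' P a b z).deriv]
    exact w14_ode P a b z
end

section
/- For every natural number n, all complex roots of the n-th (probabilists') Hermite polynomial Heₙ are real: if z ∈ ℂ and Heₙ(z) = 0 then Im(z) = 0. -/
/-!
Hermite polynomials satisfy the three-term recurrence `He_{n+2} = x He_{n+1} - (n+1) He_n`,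
which yields the Christoffel–Darboux identity
`He_{n+1}(x) He_n(y) - He_n(x) He_{n+1}(y) = (x - y) ∑_{k ≤ n} (n!/k!) He_k(x) He_k(y)`.
If `He_{n+1}(z) = 0` then also `He_{n+1}(z̄) = 0`, since the coefficients are integers, and the
identity at `x = z`, `y = z̄` gives `0 = (z - z̄) ∑ (n!/k!) |He_k(z)|²`. The sum is positive
(its `k = 0` term is `n!`), so `z = z̄`.
-/

open Complex Polynomial

open scoped Nat ComplexConjugate

namespace Polynomial

theorem derivative_hermite_succ (n : ℕ) :
    derivative (hermite (n + 1)) = ((n + 1 : ℕ) : ℤ[X]) * hermite n := by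
  induction n with
  | zero => simp [hermite_zero]
  | succ n ih =>
    rw [hermite_succ (n + 1), derivative_sub, derivative_mul, derivative_X, ih,
      derivative_natCast_mul, hermite_succ n]
    push_cast
    ring

theorem hermite_add_two (n : ℕ) :
    hermite (n + 2) = X * hermite (n + 1) - (n + 1 : ℤ[X]) * hermite n := by
  rw [hermite_succ (n + 1), derivative_hermite_succ, Nat.cast_succ]

variable {R : Type*} [CommRing R]

theorem aeval_hermite_add_two (n : ℕ) (x : R) :
    aeval x (hermite (n + 2)) = x * aeval x (hermite (n + 1)) - (n + 1) * aeval x (hermite n) := by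
  rw [hermite_add_two]
  simp

-- `n ! / k !` is exact division in `ℕ` for the indices `k ≤ n` of the sum.
theorem hermite_christoffel_darboux (n : ℕ) (x y : R) :
    aeval x (hermite (n + 1)) * aeval y (hermite n) - aeval x (hermite n) * aeval y (hermite (n + 1))
      = (x - y) * ∑ k ∈ Finset.range (n + 1),
          ((n ! / k ! : ℕ) : R) * (aeval x (hermite k) * aeval y (hermite k)) := by
  induction n with
  | zero => simp [hermite_zero]
  | succ n ih =>
    have hweights : ∑ k ∈ Finset.range (n + 1),
          (((n + 1)! / k ! : ℕ) : R) * (aeval x (hermite k) * aeval y (hermite k))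
        = (n + 1) * ∑ k ∈ Finset.range (n + 1),
          ((n ! / k ! : ℕ) : R) * (aeval x (hermite k) * aeval y (hermite k)) := by
      rw [Finset.mul_sum]
      refine Finset.sum_congr rfl fun k hk => ?_
      rw [Nat.factorial_succ,
        Nat.mul_div_assoc _ (Nat.factorial_dvd_factorial (Finset.mem_range_succ_iff.mp hk))]
      push_cast
      ring
    rw [aeval_hermite_add_two, aeval_hermite_add_two, Finset.sum_range_succ, hweights,
      Nat.div_self (Nat.factorial_pos _)]
    linear_combination (n + 1 : R) * ih

end Polynomial

theorem Complex.aeval_conj_int (p : ℤ[X]) (z : ℂ) : aeval (conj z) p = conj (aeval z p) :=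
  aeval_algHom_apply (starRingEnd ℂ).toIntAlgHom z p

theorem sum_factorial_div_mul_aeval_hermite_conj_ne_zero (n : ℕ) (z : ℂ) :
    ∑ k ∈ Finset.range (n + 1),
      ((n ! / k ! : ℕ) : ℂ) * (aeval z (hermite k) * aeval (conj z) (hermite k)) ≠ 0 := by
  have hreal : ∑ k ∈ Finset.range (n + 1),
      ((n ! / k ! : ℕ) : ℂ) * (aeval z (hermite k) * aeval (conj z) (hermite k))
        = ((∑ k ∈ Finset.range (n + 1), (n ! / k ! : ℕ) * normSq (aeval z (hermite k)) : ℝ) : ℂ) := by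
    simp [aeval_conj_int, mul_conj]
  have hpos : 0 < ∑ k ∈ Finset.range (n + 1), ((n ! / k ! : ℕ) : ℝ) * normSq (aeval z (hermite k)) :=
    Finset.sum_pos' (fun k _ => mul_nonneg (Nat.cast_nonneg _) (normSq_nonneg _))
      ⟨0, by simp, by simp [hermite_zero, Nat.factorial_pos]⟩
  rw [hreal, ofReal_ne_zero]
  exact hpos.ne'

/-- All complex roots of the probabilists' Hermite polynomials are real. -/
theorem stmt_16 (n : ℕ) (z : ℂ)
    (hz : Polynomial.aeval z (Polynomial.hermite n) = 0) :
    z.im = 0 := by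
  obtain _ | n := n
  · simp [hermite_zero] at hz
  have hz_conj : aeval (conj z) (hermite (n + 1)) = 0 := by rw [aeval_conj_int, hz, map_zero]
  have hcd := hermite_christoffel_darboux n z (conj z)
  rw [hz, hz_conj, zero_mul, mul_zero, sub_zero, eq_comm, mul_eq_zero, sub_eq_zero] at hcd
  exact conj_eq_iff_im.mp
    (hcd.resolve_right (sum_factorial_div_mul_aeval_hermite_conj_ne_zero n z)).symm
end
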